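/- arXiv:1605.00690 — 8 statements merged into one kernel-verified Lean document; each statement's English description precedes it below -/
import Mathlib

section
/- Fix a stage n ∈ {1,…,N} and a channel state q ∈ Q, and write q⁰ = Ms(q,0), q¹ = Ms(q,1). If for every e ≥ 0 one has p(q)·D_{n+1}(e,q¹) < (1 − p(q)) + D_{n+1}(e,q⁰), then there do not exist c ≥ 0 and ε > 0 such that C¹_n(c,q) ≤ C⁰_n(c,q) and, for all δ ∈ (0,ε), C⁰_n(c+δ,q) ≤ C¹_n(c+δ,q); that is, the optimal symmetric transmission policy at stage n in channel state q is a threshold policy in |e|. -/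
open MeasureTheory ProbabilityTheory Filter

noncomputable section

/-- The Gaussian measure on `ℝ` with mean `0` and variance `σ²`. -/
def gmeas (σ : ℝ) : Measure ℝ := gaussianReal 0 ⟨σ ^ 2, sq_nonneg σ⟩

/-- Cost-to-go of not transmitting, given the next-stage value function `Vnext`:
`C⁰(e,q) = e² + ∫ Vnext(a e + w, Ms(q,0)) dγ(w)`. -/
def C0 {Q : Type*} (a σ : ℝ) (Ms : Q → Bool → Q) (Vnext : ℝ → Q → ℝ)
    (e : ℝ) (q : Q) : ℝ :=
  e ^ 2 + ∫ w, Vnext (a * e + w) (Ms q false) ∂(gmeas σ)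

/-- Cost-to-go of attempting a transmission, given the next-stage value function `Vnext`:
`C¹(e,q) = p(q) e² + p(q) ∫ Vnext(a e + w, Ms(q,1)) dγ(w) + (1 - p(q)) ∫ Vnext(w, Ms(q,1)) dγ(w)`. -/
def C1 {Q : Type*} (a σ : ℝ) (Ms : Q → Bool → Q) (p : Q → ℝ) (Vnext : ℝ → Q → ℝ)
    (e : ℝ) (q : Q) : ℝ :=
  p q * e ^ 2 + p q * ∫ w, Vnext (a * e + w) (Ms q true) ∂(gmeas σ)
    + (1 - p q) * ∫ w, Vnext w (Ms q true) ∂(gmeas σ)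

/-- Backward value recursion, indexed by the number `k` of stages remaining:
`Vrec 0 = e²` (the terminal value `V_{N+1}`), and `Vrec (k+1) = min (C⁰, C¹)` built on `Vrec k`.
In the paper's indexing, `V_n = Vrec (N + 1 - n)` for `n ∈ {1, …, N+1}`. -/
def Vrec {Q : Type*} (a σ : ℝ) (Ms : Q → Bool → Q) (p : Q → ℝ) : ℕ → ℝ → Q → ℝ
  | 0 => fun e _ => e ^ 2
  | (k + 1) => fun e q =>
      min (C0 a σ Ms (Vrec a σ Ms p k) e q) (C1 a σ Ms p (Vrec a σ Ms p k) e q)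

/-- The smoothed cost-to-go `h(e) = ∫ Vn(a e + w, q) dγ(w)`. -/
def hfun {Q : Type*} (a σ : ℝ) (Vn : ℝ → Q → ℝ) (q : Q) (e : ℝ) : ℝ :=
  ∫ w, Vn (a * e + w) q ∂(gmeas σ)

/-- The upper difference-quotient limit
`D(e,q) = limsup_{δ→0⁺} (h(e+δ) - h(e)) / ((e+δ)² - e²)`. -/
def Dfun {Q : Type*} (a σ : ℝ) (Vn : ℝ → Q → ℝ) (e : ℝ) (q : Q) : ℝ :=
  limsup (fun δ : ℝ =>
      (hfun a σ Vn q (e + δ) - hfun a σ Vn q e) / ((e + δ) ^ 2 - e ^ 2))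
    (nhdsWithin 0 (Set.Ioi 0))

namespace Stmt1Aux

/-- explicit gaussian density -/
def phi (σ : ℝ) (x : ℝ) : ℝ := (Real.sqrt (2 * Real.pi * σ ^ 2))⁻¹ * Real.exp (-x ^ 2 / (2 * σ ^ 2))

lemma phi_eq (σ : ℝ) (x : ℝ) :
    gaussianPDFReal 0 ⟨σ ^ 2, sq_nonneg σ⟩ x = phi σ x := by
  simp [gaussianPDFReal, phi]
  rfl

lemma integral_gmeas {σ : ℝ} (hσ : 0 < σ) (g : ℝ → ℝ) :
    ∫ w, g w ∂(gmeas σ) = ∫ w, phi σ w * g w := by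
  have hv : (⟨σ ^ 2, sq_nonneg σ⟩ : NNReal) ≠ 0 := by
    intro h
    have : σ ^ 2 = 0 := congrArg NNReal.toReal h
    nlinarith
  rw [gmeas, gaussianReal_of_var_ne_zero _ hv]
  have h1 : (gaussianPDF 0 ⟨σ ^ 2, sq_nonneg σ⟩)
      = fun x => ((Real.toNNReal (gaussianPDFReal 0 ⟨σ ^ 2, sq_nonneg σ⟩ x) : NNReal) : ENNReal) := by
    funext x; simp [gaussianPDF, ENNReal.ofReal]
  rw [h1]
  erw [integral_withDensity_eq_integral_smul
    ((measurable_gaussianPDFReal 0 _).real_toNNReal) g]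
  congr 1
  funext x
  erw [NNReal.smul_def, smul_eq_mul, Real.coe_toNNReal _ (gaussianPDFReal_nonneg _ _ _), phi_eq]

end Stmt1Aux

namespace Stmt1Aux

lemma integrable_exp_abs_sub_sq {b : ℝ} (c : ℝ) (hb : 0 < b) :
    Integrable (fun u : ℝ => Real.exp (c * |u| - b * u ^ 2)) := by
  have hmain : Integrable (fun u : ℝ => Real.exp (c ^ 2 / (2 * b)) * Real.exp (-(b / 2) * u ^ 2)) :=
    (integrable_exp_neg_mul_sq (by linarith)).const_mul _
  refine hmain.mono' ?_ (Filter.Eventually.of_forall fun u => ?_)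
  · exact (Real.continuous_exp.comp (by fun_prop)).aestronglyMeasurable
  · rw [Real.norm_eq_abs, abs_of_nonneg (Real.exp_nonneg _), ← Real.exp_add]
    apply Real.exp_le_exp.mpr
    have h1 : 0 ≤ (c - b * |u|) ^ 2 := sq_nonneg _
    have h2 : |u| ^ 2 = u ^ 2 := sq_abs u
    have hden : (0:ℝ) < 2 * b := by linarith
    rw [div_add' _ _ _ hden.ne', ← sub_nonneg]
    have : (c ^ 2 + -(b / 2) * u ^ 2 * (2 * b)) / (2 * b) - (c * |u| - b * u ^ 2)
        = (c - b * |u|) ^ 2 / (2 * b) := by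
      field_simp
      linear_combination (-(b ^ 2)) * h2
    rw [this]
    positivity

/-- window bound for shifted gaussian density -/
def WB (σ R : ℝ) (u : ℝ) : ℝ :=
  (Real.sqrt (2 * Real.pi * σ ^ 2))⁻¹ * Real.exp ((2 * R * |u| - u ^ 2) / (2 * σ ^ 2))

lemma WB_nonneg (σ R u : ℝ) : 0 ≤ WB σ R u := by
  unfold WB; positivity

lemma continuous_WB (σ R : ℝ) : Continuous (WB σ R) := by
  unfold WB; fun_prop

lemma phi_nonneg (σ u : ℝ) : 0 ≤ phi σ u := by unfold phi; positivity

lemma continuous_phi (σ : ℝ) : Continuous (phi σ) := by unfold phi; fun_prop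

lemma phi_le_WB {σ : ℝ} (hσ : 0 < σ) {s R : ℝ} (hs : |s| ≤ R) (u : ℝ) :
    phi σ (u - s) ≤ WB σ R u := by
  unfold phi WB
  apply mul_le_mul_of_nonneg_left _ (by positivity)
  apply Real.exp_le_exp.mpr
  apply div_le_div_of_nonneg_right ?_ (by positivity)
  have h1 : u * s ≤ |u| * R := by
    calc u * s ≤ |u * s| := le_abs_self _
    _ = |u| * |s| := abs_mul u s
    _ ≤ |u| * R := by
      apply mul_le_mul_of_nonneg_left hs (abs_nonneg u)
  nlinarith [sq_nonneg s, sq_abs u]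

end Stmt1Aux

namespace Stmt1Aux

lemma one_add_abs_pow_le (n : ℕ) (u : ℝ) : (1 + |u|) ^ n ≤ Real.exp ((n : ℝ) * |u|) := by
  have h1 : 1 + |u| ≤ Real.exp |u| := by
    have := Real.add_one_le_exp |u|
    linarith
  calc (1 + |u|) ^ n ≤ (Real.exp |u|) ^ n :=
        pow_le_pow_left₀ (by positivity) h1 n
  _ = Real.exp ((n : ℝ) * |u|) := by rw [← Real.exp_nat_mul]

lemma integrable_poly_WB {σ : ℝ} (hσ : 0 < σ) (R : ℝ) (n : ℕ) :
    Integrable (fun u : ℝ => (1 + |u|) ^ n * WB σ R u) := by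
  have hb : (0:ℝ) < 1 / (2 * σ ^ 2) := by positivity
  have hmain : Integrable (fun u : ℝ =>
      (Real.sqrt (2 * Real.pi * σ ^ 2))⁻¹ *
        Real.exp (((n : ℝ) + R / σ ^ 2) * |u| - (1 / (2 * σ ^ 2)) * u ^ 2)) :=
    (integrable_exp_abs_sub_sq _ hb).const_mul _
  refine hmain.mono' ?_ (Filter.Eventually.of_forall fun u => ?_)
  · exact (Continuous.mul (by fun_prop) (continuous_WB σ R)).aestronglyMeasurable
  · rw [Real.norm_eq_abs, abs_of_nonneg (mul_nonneg (by positivity) (WB_nonneg σ R u))]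
    unfold WB
    rw [show (1 + |u|) ^ n * ((Real.sqrt (2 * Real.pi * σ ^ 2))⁻¹ *
        Real.exp ((2 * R * |u| - u ^ 2) / (2 * σ ^ 2)))
      = (Real.sqrt (2 * Real.pi * σ ^ 2))⁻¹ *
        ((1 + |u|) ^ n * Real.exp ((2 * R * |u| - u ^ 2) / (2 * σ ^ 2))) from by ring]
    apply mul_le_mul_of_nonneg_left _ (by positivity)
    calc (1 + |u|) ^ n * Real.exp ((2 * R * |u| - u ^ 2) / (2 * σ ^ 2))
        ≤ Real.exp ((n : ℝ) * |u|) * Real.exp ((2 * R * |u| - u ^ 2) / (2 * σ ^ 2)) := by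
          apply mul_le_mul_of_nonneg_right (one_add_abs_pow_le n u) (Real.exp_nonneg _)
      _ = Real.exp (((n : ℝ) + R / σ ^ 2) * |u| - (1 / (2 * σ ^ 2)) * u ^ 2) := by
          rw [← Real.exp_add]
          congr 1
          field_simp
          ring

lemma WB_zero (σ u : ℝ) : WB σ 0 u = phi σ u := by
  unfold WB phi
  norm_num

end Stmt1Aux

namespace Stmt1Aux

variable {σ : ℝ}

lemma hasDerivAt_phi (hσ : 0 < σ) (x : ℝ) :
    HasDerivAt (phi σ) (phi σ x * (-x / σ ^ 2)) x := by
  have h1 : HasDerivAt (fun x : ℝ => -x ^ 2 / (2 * σ ^ 2)) (-(2 * x ^ 1) / (2 * σ ^ 2)) x :=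
    ((hasDerivAt_pow 2 x).neg).div_const _
  have h2 := (h1.exp).const_mul (Real.sqrt (2 * Real.pi * σ ^ 2))⁻¹
  refine h2.congr_deriv ?_
  unfold phi
  field_simp

lemma hasDerivAt_phi_shift (hσ : 0 < σ) (u s : ℝ) :
    HasDerivAt (fun s => phi σ (u - s)) (phi σ (u - s) * ((u - s) / σ ^ 2)) s := by
  have h1 : HasDerivAt (fun s : ℝ => u - s) (-1) s := by
    simpa using (hasDerivAt_id s).const_sub u
  have := (hasDerivAt_phi hσ (u - s)).comp s h1
  refine this.congr_deriv ?_
  ring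

lemma hasDerivAt_phi_plus (hσ : 0 < σ) (u s : ℝ) :
    HasDerivAt (fun s => phi σ (u + s)) (phi σ (u + s) * (-(u + s) / σ ^ 2)) s := by
  have h1 : HasDerivAt (fun s : ℝ => u + s) 1 s := by
    simpa using (hasDerivAt_id s).const_add u
  have := (hasDerivAt_phi hσ (u + s)).comp s h1
  refine this.congr_deriv ?_
  ring

/-- the function `ρ x = phi x * x / σ²` -/
def rho (σ : ℝ) (x : ℝ) : ℝ := phi σ x * (x / σ ^ 2)

lemma hasDerivAt_rho (hσ : 0 < σ) (x : ℝ) :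
    HasDerivAt (rho σ) (phi σ x * (1 / σ ^ 2 - x ^ 2 / σ ^ 4)) x := by
  have h1 : HasDerivAt (fun x : ℝ => x / σ ^ 2) (1 / σ ^ 2) x := by
    simpa using (hasDerivAt_id x).div_const (σ ^ 2)
  have h2 := (hasDerivAt_phi hσ x).mul h1
  refine h2.congr_deriv ?_
  unfold phi
  field_simp
  ring

end Stmt1Aux

namespace Stmt1Aux

variable {σ : ℝ}

lemma phi_shift_lip (hσ : 0 < σ) {M : ℝ} (u : ℝ) {s₁ s₂ : ℝ}
    (h1 : |s₁| ≤ M) (h2 : |s₂| ≤ M) :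
    |phi σ (u - s₁) - phi σ (u - s₂)| ≤ ((|u| + M) / σ ^ 2 * WB σ M u) * |s₁ - s₂| := by
  have key := Convex.norm_image_sub_le_of_norm_hasDerivWithin_le
    (f := fun s => phi σ (u - s)) (f' := fun s => phi σ (u - s) * ((u - s) / σ ^ 2))
    (s := Set.Icc (-M) M) (C := (|u| + M) / σ ^ 2 * WB σ M u)
    (fun x _ => (hasDerivAt_phi_shift hσ u x).hasDerivWithinAt)
    (fun x hx => ?_) (convex_Icc _ _) (abs_le.mp h2) (abs_le.mp h1)
  · simpa [Real.norm_eq_abs] using key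
  · have hxM : |x| ≤ M := abs_le.mpr hx
    rw [Real.norm_eq_abs, abs_mul, abs_of_nonneg (phi_nonneg σ _), abs_div,
      abs_of_nonneg (sq_nonneg σ)]
    have hphi : phi σ (u - x) ≤ WB σ M u := phi_le_WB hσ hxM u
    have habs : |u - x| ≤ |u| + M := (abs_sub _ _).trans (by linarith)
    calc phi σ (u - x) * (|u - x| / σ ^ 2)
        ≤ WB σ M u * ((|u| + M) / σ ^ 2) := by
          apply mul_le_mul hphi _ (by positivity) (WB_nonneg _ _ _)
          apply div_le_div_of_nonneg_right habs (by positivity)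
      _ = (|u| + M) / σ ^ 2 * WB σ M u := by ring

end Stmt1Aux

namespace Stmt1Aux

variable {σ : ℝ}

/-- second order coefficient -/
def M2 (σ : ℝ) (u : ℝ) : ℝ := (1 / σ ^ 2 + (|u| + 1) ^ 2 / σ ^ 4) * WB σ 1 u

lemma M2_nonneg (hσ : 0 < σ) (u : ℝ) : 0 ≤ M2 σ u :=
  mul_nonneg (by positivity) (WB_nonneg _ _ _)

lemma rho_lip (hσ : 0 < σ) (u : ℝ) {x y : ℝ}
    (hx : x ∈ Set.Icc (u - 1) (u + 1)) (hy : y ∈ Set.Icc (u - 1) (u + 1)) :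
    |rho σ x - rho σ y| ≤ M2 σ u * |x - y| := by
  have key := Convex.norm_image_sub_le_of_norm_hasDerivWithin_le
    (f := rho σ) (f' := fun x => phi σ x * (1 / σ ^ 2 - x ^ 2 / σ ^ 4))
    (s := Set.Icc (u - 1) (u + 1)) (C := M2 σ u)
    (fun z _ => (hasDerivAt_rho hσ z).hasDerivWithinAt)
    (fun z hz => ?_) (convex_Icc _ _) hy hx
  · simpa [Real.norm_eq_abs] using key
  · have hz1 : |z - u| ≤ 1 := abs_le.mpr ⟨by linarith [hz.1], by linarith [hz.2]⟩
    have hzu : |z| ≤ |u| + 1 := by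
      have := abs_sub_abs_le_abs_sub z u
      linarith
    have hphi : phi σ z ≤ WB σ 1 u := by
      have : z = u - (u - z) := by ring
      rw [this]
      exact phi_le_WB hσ (by rw [abs_sub_comm]; exact hz1) u
    rw [Real.norm_eq_abs, abs_mul, abs_of_nonneg (phi_nonneg σ _)]
    have habs : |1 / σ ^ 2 - z ^ 2 / σ ^ 4| ≤ 1 / σ ^ 2 + (|u| + 1) ^ 2 / σ ^ 4 := by
      refine (abs_sub _ _).trans ?_
      rw [abs_of_nonneg (by positivity : (0:ℝ) ≤ 1 / σ ^ 2), abs_div,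
        abs_of_nonneg (by positivity : (0:ℝ) ≤ σ ^ 4), abs_of_nonneg (sq_nonneg z)]
      have : z ^ 2 ≤ (|u| + 1) ^ 2 := by nlinarith [abs_nonneg z, sq_abs z]
      have h4 : (0:ℝ) < σ ^ 4 := by positivity
      have := div_le_div_of_nonneg_right this h4.le
      linarith
    unfold M2
    calc phi σ z * |1 / σ ^ 2 - z ^ 2 / σ ^ 4|
        ≤ WB σ 1 u * (1 / σ ^ 2 + (|u| + 1) ^ 2 / σ ^ 4) :=
          mul_le_mul hphi habs (abs_nonneg _) (WB_nonneg _ _ _)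
      _ = (1 / σ ^ 2 + (|u| + 1) ^ 2 / σ ^ 4) * WB σ 1 u := by ring

lemma phi_sym_bound (hσ : 0 < σ) (u : ℝ) {t : ℝ} (ht0 : 0 ≤ t) (ht1 : t ≤ 1) :
    |phi σ (u - t) + phi σ (u + t) - 2 * phi σ u| ≤ (2 * M2 σ u) * t ^ 2 := by
  have hG : ∀ s ∈ Set.Icc (0:ℝ) t,
      HasDerivWithinAt (fun s => phi σ (u - s) + phi σ (u + s))
        (rho σ (u - s) - rho σ (u + s)) (Set.Icc 0 t) s := by
    intro s _
    have h := (hasDerivAt_phi_shift hσ u s).add (hasDerivAt_phi_plus hσ u s)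
    have heq : phi σ (u - s) * ((u - s) / σ ^ 2) + phi σ (u + s) * (-(u + s) / σ ^ 2)
        = rho σ (u - s) - rho σ (u + s) := by
      unfold rho; ring
    rw [heq] at h
    exact h.hasDerivWithinAt
  have hbound : ∀ s ∈ Set.Icc (0:ℝ) t,
      ‖rho σ (u - s) - rho σ (u + s)‖ ≤ (2 * M2 σ u) * t := by
    intro s hs
    rw [Real.norm_eq_abs]
    have hmem1 : u - s ∈ Set.Icc (u - 1) (u + 1) := by
      constructor <;> [linarith [hs.1, hs.2]; linarith [hs.1]]
    have hmem2 : u + s ∈ Set.Icc (u - 1) (u + 1) := by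
      constructor <;> [linarith [hs.1]; linarith [hs.1, hs.2]]
    calc |rho σ (u - s) - rho σ (u + s)| ≤ M2 σ u * |u - s - (u + s)| :=
          rho_lip hσ u hmem1 hmem2
      _ = M2 σ u * (2 * s) := by
          rw [show u - s - (u + s) = -(2 * s) by ring, abs_neg,
            abs_of_nonneg (by linarith [hs.1] : (0:ℝ) ≤ 2 * s)]
      _ ≤ (2 * M2 σ u) * t := by nlinarith [M2_nonneg hσ u, hs.1, hs.2]
  have key := Convex.norm_image_sub_le_of_norm_hasDerivWithin_le hG hbound (convex_Icc _ _)
    (Set.left_mem_Icc.mpr ht0) (Set.right_mem_Icc.mpr ht0)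
  simp only [Real.norm_eq_abs, sub_zero, add_zero] at key
  calc |phi σ (u - t) + phi σ (u + t) - 2 * phi σ u|
      = |phi σ (u - t) + phi σ (u + t) - (phi σ (u - 0) + phi σ (u + 0))| := by
        rw [sub_zero, add_zero]; ring_nf
    _ ≤ (2 * M2 σ u) * t * |t| := by
        have := Convex.norm_image_sub_le_of_norm_hasDerivWithin_le hG hbound (convex_Icc _ _)
          (Set.left_mem_Icc.mpr ht0) (Set.right_mem_Icc.mpr ht0)
        simpa [Real.norm_eq_abs] using this
    _ = (2 * M2 σ u) * t ^ 2 := by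
        rw [abs_of_nonneg ht0]; ring

end Stmt1Aux

namespace Stmt1Aux

variable {σ : ℝ}

/-- `V` is continuous, nonnegative, even, with at most quadratic growth. -/
structure Nice (V : ℝ → ℝ) : Prop where
  cont : Continuous V
  nonneg : ∀ x, 0 ≤ V x
  even : ∀ x, V (-x) = V x
  bound : ∃ A, 0 ≤ A ∧ ∀ x, V x ≤ A * (1 + |x|) ^ 2

/-- the smoothed function -/
def HH (σ : ℝ) (V : ℝ → ℝ) (e : ℝ) : ℝ := ∫ w, V (e + w) ∂(gmeas σ)

lemma integrable_phi_shift_mul {V : ℝ → ℝ} (hσ : 0 < σ) (hV : Nice V) (e : ℝ) :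
    Integrable (fun u => phi σ (u - e) * V u) := by
  obtain ⟨A, hA, hVA⟩ := hV.bound
  have hmain : Integrable (fun u : ℝ => A * ((1 + |u|) ^ 2 * WB σ |e| u)) :=
    (integrable_poly_WB hσ _ 2).const_mul A
  refine hmain.mono' ((continuous_phi σ).comp (by fun_prop) |>.mul hV.cont).aestronglyMeasurable
    (Filter.Eventually.of_forall fun u => ?_)
  rw [Real.norm_eq_abs, abs_of_nonneg (mul_nonneg (phi_nonneg _ _) (hV.nonneg u))]
  calc phi σ (u - e) * V u ≤ WB σ |e| u * (A * (1 + |u|) ^ 2) := by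
        apply mul_le_mul (phi_le_WB hσ le_rfl u) (hVA u) (hV.nonneg u) (WB_nonneg _ _ _)
    _ = A * ((1 + |u|) ^ 2 * WB σ |e| u) := by ring

lemma HH_rep {V : ℝ → ℝ} (hσ : 0 < σ) (e : ℝ) :
    HH σ V e = ∫ u, phi σ (u - e) * V u := by
  rw [HH, integral_gmeas hσ]
  have := MeasureTheory.integral_add_left_eq_self (μ := (volume : Measure ℝ))
    (fun u => phi σ (u - e) * V u) e
  rw [← this]
  congr 1
  funext w
  rw [add_sub_cancel_left]

lemma HH_sym {V : ℝ → ℝ} (hσ : 0 < σ) (hV : Nice V) (t : ℝ) :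
    ∫ u, phi σ (u - t) * V u = ∫ u, phi σ (u + t) * V u := by
  have := MeasureTheory.integral_neg_eq_self (μ := (volume : Measure ℝ))
    (fun u => phi σ (u + t) * V u)
  rw [← this]
  congr 1
  funext u
  have h1 : phi σ (-u + t) = phi σ (u - t) := by
    unfold phi
    rw [show (-u + t) ^ 2 = (u - t) ^ 2 by ring]
  rw [h1, hV.even]

end Stmt1Aux

namespace Stmt1Aux

variable {σ : ℝ}

lemma phi_sym_bound' (hσ : 0 < σ) (u : ℝ) {t : ℝ} (ht : |t| ≤ 1) :
    |phi σ (u - t) + phi σ (u + t) - 2 * phi σ u| ≤ (2 * M2 σ u) * t ^ 2 := by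
  rcases abs_cases t with ⟨h1, h2⟩ | ⟨h1, h2⟩
  · have := phi_sym_bound hσ u h2 (h1 ▸ ht)
    exact this
  · have := phi_sym_bound hσ u (by linarith : (0:ℝ) ≤ -t) (h1 ▸ ht)
    rw [show u - -t = u + t by ring, show u + -t = u - t by ring] at this
    calc |phi σ (u - t) + phi σ (u + t) - 2 * phi σ u|
        = |phi σ (u + t) + phi σ (u - t) - 2 * phi σ u| := by ring_nf
      _ ≤ (2 * M2 σ u) * (-t) ^ 2 := this
      _ = (2 * M2 σ u) * t ^ 2 := by ring

lemma HH_lip {V : ℝ → ℝ} (hσ : 0 < σ) (hV : Nice V) (M : ℝ) :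
    ∃ C, 0 ≤ C ∧ ∀ e₁ e₂ : ℝ, |e₁| ≤ M → |e₂| ≤ M →
      |HH σ V e₁ - HH σ V e₂| ≤ C * |e₁ - e₂| := by
  obtain ⟨A, hA, hVA⟩ := hV.bound
  by_cases hM : 0 ≤ M
  swap
  · exact ⟨0, le_rfl, fun e₁ e₂ h1 h2 => absurd (le_trans (abs_nonneg e₁) h1) hM⟩
  set Cint := ∫ u, (1 + |u|) ^ 3 * WB σ M u with hCint
  have hCint0 : 0 ≤ Cint :=
    integral_nonneg fun u => mul_nonneg (by positivity) (WB_nonneg _ _ _)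
  refine ⟨A * (1 + M) / σ ^ 2 * Cint, by positivity, fun e₁ e₂ h1 h2 => ?_⟩
  have hi1 := integrable_phi_shift_mul hσ hV e₁
  have hi2 := integrable_phi_shift_mul hσ hV e₂
  rw [HH_rep hσ, HH_rep hσ, ← integral_sub hi1 hi2]
  calc |∫ u, (phi σ (u - e₁) * V u - phi σ (u - e₂) * V u)|
      ≤ ∫ u, |phi σ (u - e₁) * V u - phi σ (u - e₂) * V u| := by
        simpa [Real.norm_eq_abs] using
          norm_integral_le_integral_norm (fun u => phi σ (u - e₁) * V u - phi σ (u - e₂) * V u)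
    _ ≤ ∫ u, (A * (1 + M) / σ ^ 2 * |e₁ - e₂|) * ((1 + |u|) ^ 3 * WB σ M u) := by
        apply integral_mono_of_nonneg (Filter.Eventually.of_forall fun u => abs_nonneg _)
          (((integrable_poly_WB hσ M 3).const_mul _))
          (Filter.Eventually.of_forall fun u => ?_)
        dsimp only
        rw [← sub_mul, abs_mul, abs_of_nonneg (hV.nonneg u)]
        calc |phi σ (u - e₁) - phi σ (u - e₂)| * V u
            ≤ ((|u| + M) / σ ^ 2 * WB σ M u * |e₁ - e₂|) * (A * (1 + |u|) ^ 2) := by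
              apply mul_le_mul (phi_shift_lip hσ u h1 h2) (hVA u) (hV.nonneg u) ?_
              have := abs_nonneg u
              have := WB_nonneg σ M u
              have := abs_nonneg (e₁ - e₂)
              have hs2 : (0:ℝ) < σ ^ 2 := by positivity
              have : 0 ≤ (|u| + M) / σ ^ 2 := div_nonneg (by linarith) hs2.le
              positivity
          _ ≤ (A * (1 + M) / σ ^ 2 * |e₁ - e₂|) * ((1 + |u|) ^ 3 * WB σ M u) := by
              have hkey : (|u| + M) * (1 + |u|) ^ 2 ≤ (1 + M) * (1 + |u|) ^ 3 := by
                have h0 : |u| + M ≤ (1 + M) * (1 + |u|) := by nlinarith [abs_nonneg u]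
                calc (|u| + M) * (1 + |u|) ^ 2 ≤ ((1 + M) * (1 + |u|)) * (1 + |u|) ^ 2 :=
                      mul_le_mul_of_nonneg_right h0 (by positivity)
                  _ = (1 + M) * (1 + |u|) ^ 3 := by ring
              have hW := WB_nonneg σ M u
              have hE := abs_nonneg (e₁ - e₂)
              have hs2 : (0:ℝ) < σ ^ 2 := by positivity
              have hL : (|u| + M) / σ ^ 2 * WB σ M u * |e₁ - e₂| * (A * (1 + |u|) ^ 2)
                  = ((|u| + M) * (1 + |u|) ^ 2 * (A * WB σ M u * |e₁ - e₂|)) / σ ^ 2 := by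
                ring
              have hR : A * (1 + M) / σ ^ 2 * |e₁ - e₂| * ((1 + |u|) ^ 3 * WB σ M u)
                  = ((1 + M) * (1 + |u|) ^ 3 * (A * WB σ M u * |e₁ - e₂|)) / σ ^ 2 := by
                ring
              rw [hL, hR]
              apply div_le_div_of_nonneg_right ?_ hs2.le
              exact mul_le_mul_of_nonneg_right hkey
                (mul_nonneg (mul_nonneg hA hW) hE)
    _ = A * (1 + M) / σ ^ 2 * Cint * |e₁ - e₂| := by
        rw [integral_const_mul]; ring

end Stmt1Aux

namespace Stmt1Aux

variable {σ : ℝ}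

lemma HH_quad {V : ℝ → ℝ} (hσ : 0 < σ) (hV : Nice V) :
    ∃ C, 0 ≤ C ∧ ∀ t : ℝ, |t| ≤ 1 → |HH σ V t - HH σ V 0| ≤ C * t ^ 2 := by
  obtain ⟨A, hA, hVA⟩ := hV.bound
  set Cint := ∫ u, (1 + |u|) ^ 4 * WB σ 1 u with hCintdef
  have hCint0 : 0 ≤ Cint :=
    integral_nonneg fun u => mul_nonneg (by positivity) (WB_nonneg _ _ _)
  refine ⟨A * (1 / σ ^ 2 + 1 / σ ^ 4) * Cint, by positivity, fun t ht => ?_⟩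
  have hiT := integrable_phi_shift_mul hσ hV t
  have hiN : Integrable (fun u => phi σ (u + t) * V u) := by
    have := integrable_phi_shift_mul hσ hV (-t)
    simpa [sub_neg_eq_add] using this
  have hi0 : Integrable (fun u => phi σ u * V u) := by
    simpa using integrable_phi_shift_mul hσ hV 0
  have hrep0 : HH σ V 0 = ∫ u, phi σ u * V u := by
    rw [HH_rep hσ]
    simp
  have h2diff : 2 * (HH σ V t - HH σ V 0)
      = ∫ u, (phi σ (u - t) + phi σ (u + t) - 2 * phi σ u) * V u := by
    have e : ∀ u : ℝ, (phi σ (u - t) + phi σ (u + t) - 2 * phi σ u) * V u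
        = (phi σ (u - t) * V u + phi σ (u + t) * V u) - 2 * (phi σ u * V u) := fun u => by ring
    have hsum : (∫ u, (phi σ (u - t) + phi σ (u + t) - 2 * phi σ u) * V u)
        = (∫ u, phi σ (u - t) * V u) + (∫ u, phi σ (u + t) * V u)
          - 2 * ∫ u, phi σ u * V u := by
      have hadd : Integrable (fun u => phi σ (u - t) * V u + phi σ (u + t) * V u) :=
        hiT.add hiN
      have h2i : Integrable (fun u => 2 * (phi σ u * V u)) := hi0.const_mul 2
      simp only [e]
      rw [integral_sub hadd h2i, integral_add hiT hiN, integral_const_mul]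
    rw [hsum, HH_rep hσ, hrep0, ← HH_sym hσ hV t]
    ring
  have habs : |2 * (HH σ V t - HH σ V 0)| ≤ (2 * A * (1 / σ ^ 2 + 1 / σ ^ 4) * Cint) * t ^ 2 := by
    rw [h2diff]
    calc |∫ u, (phi σ (u - t) + phi σ (u + t) - 2 * phi σ u) * V u|
        ≤ ∫ u, |phi σ (u - t) + phi σ (u + t) - 2 * phi σ u| * |V u| := by
          simpa [Real.norm_eq_abs, abs_mul] using norm_integral_le_integral_norm
            (fun u => (phi σ (u - t) + phi σ (u + t) - 2 * phi σ u) * V u)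
      _ ≤ ∫ u, (2 * A * (1 / σ ^ 2 + 1 / σ ^ 4) * t ^ 2) * ((1 + |u|) ^ 4 * WB σ 1 u) := by
          apply integral_mono_of_nonneg
            (Filter.Eventually.of_forall fun u => mul_nonneg (abs_nonneg _) (abs_nonneg _))
            ((integrable_poly_WB hσ 1 4).const_mul _)
            (Filter.Eventually.of_forall fun u => ?_)
          dsimp only
          rw [abs_of_nonneg (hV.nonneg u)]
          have hb1 := phi_sym_bound' hσ u ht
          have hb2 := hVA u
          have hM2 : M2 σ u ≤ (1 / σ ^ 2 + 1 / σ ^ 4) * ((1 + |u|) ^ 2 * WB σ 1 u) := by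
            unfold M2
            have hW := WB_nonneg σ 1 u
            have hu := abs_nonneg u
            have hkey : 1 / σ ^ 2 + (|u| + 1) ^ 2 / σ ^ 4
                ≤ (1 / σ ^ 2 + 1 / σ ^ 4) * (1 + |u|) ^ 2 := by
              have hs2 : (0:ℝ) < σ ^ 2 := by positivity
              have hs4 : (0:ℝ) < σ ^ 4 := by positivity
              have h1u : (1:ℝ) ≤ (1 + |u|) ^ 2 := by nlinarith [abs_nonneg u]
              have e1 : 1 / σ ^ 2 * 1 ≤ 1 / σ ^ 2 * (1 + |u|) ^ 2 :=
                mul_le_mul_of_nonneg_left h1u (one_div_pos.mpr hs2).le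
              have e2 : (|u| + 1) ^ 2 / σ ^ 4 = 1 / σ ^ 4 * (1 + |u|) ^ 2 := by ring
              rw [e2]
              nlinarith [e1]
            calc (1 / σ ^ 2 + (|u| + 1) ^ 2 / σ ^ 4) * WB σ 1 u
                ≤ ((1 / σ ^ 2 + 1 / σ ^ 4) * (1 + |u|) ^ 2) * WB σ 1 u :=
                  mul_le_mul_of_nonneg_right hkey hW
              _ = (1 / σ ^ 2 + 1 / σ ^ 4) * ((1 + |u|) ^ 2 * WB σ 1 u) := by ring
          have hW := WB_nonneg σ 1 u
          have hu := abs_nonneg u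
          have ht2 := sq_nonneg t
          have hcoef : (0:ℝ) ≤ 1 / σ ^ 2 + 1 / σ ^ 4 := by positivity
          calc |phi σ (u - t) + phi σ (u + t) - 2 * phi σ u| * V u
              ≤ ((2 * M2 σ u) * t ^ 2) * (A * (1 + |u|) ^ 2) :=
                mul_le_mul hb1 hb2 (hV.nonneg u)
                  (mul_nonneg (mul_nonneg (by norm_num) (M2_nonneg hσ u)) (sq_nonneg t))
            _ ≤ (2 * A * (1 / σ ^ 2 + 1 / σ ^ 4) * t ^ 2) * ((1 + |u|) ^ 4 * WB σ 1 u) := by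
                have := mul_le_mul_of_nonneg_right hM2
                  (mul_nonneg (mul_nonneg (by linarith : (0:ℝ) ≤ 2 * A) ht2)
                    (by positivity : (0:ℝ) ≤ (1 + |u|) ^ 2))
                nlinarith [this]
      _ = (2 * A * (1 / σ ^ 2 + 1 / σ ^ 4) * Cint) * t ^ 2 := by
          rw [integral_const_mul]; ring
  calc |HH σ V t - HH σ V 0| = |2 * (HH σ V t - HH σ V 0)| / 2 := by
        rw [abs_mul]; norm_num
    _ ≤ ((2 * A * (1 / σ ^ 2 + 1 / σ ^ 4) * Cint) * t ^ 2) / 2 := by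
        apply div_le_div_of_nonneg_right habs (by norm_num)
    _ = A * (1 / σ ^ 2 + 1 / σ ^ 4) * Cint * t ^ 2 := by ring

end Stmt1Aux

namespace Stmt1Aux

variable {σ : ℝ}

lemma integrable_poly_phi_shift (hσ : 0 < σ) (e : ℝ) (n : ℕ) :
    Integrable (fun u : ℝ => (1 + |u|) ^ n * phi σ (u - e)) := by
  refine (integrable_poly_WB hσ |e| n).mono'
    ((Continuous.mul (by fun_prop)
      ((continuous_phi σ).comp (by fun_prop))).aestronglyMeasurable)
    (Filter.Eventually.of_forall fun u => ?_)
  rw [Real.norm_eq_abs, abs_of_nonneg (mul_nonneg (by positivity) (phi_nonneg _ _))]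
  exact mul_le_mul_of_nonneg_left (phi_le_WB hσ le_rfl u) (by positivity)

lemma HH_nonneg {V : ℝ → ℝ} (hV : Nice V) (e : ℝ) : 0 ≤ HH σ V e :=
  integral_nonneg fun w => hV.nonneg _

lemma HH_even {V : ℝ → ℝ} (hσ : 0 < σ) (hV : Nice V) (e : ℝ) :
    HH σ V (-e) = HH σ V e := by
  rw [HH_rep hσ, HH_rep hσ]
  have h1 : (fun u => phi σ (u - -e) * V u) = fun u => phi σ (u + e) * V u := by
    funext u; rw [sub_neg_eq_add]
  rw [h1, ← HH_sym hσ hV e]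

lemma HH_cont {V : ℝ → ℝ} (hσ : 0 < σ) (hV : Nice V) : Continuous (HH σ V) := by
  rw [continuous_iff_continuousAt]
  intro e₀
  obtain ⟨C, hC, hL⟩ := HH_lip hσ hV (|e₀| + 1)
  rw [Metric.continuousAt_iff]
  intro ε hε
  refine ⟨min 1 (ε / (2 * (C + 1))), lt_min one_pos (by positivity), fun {e} he => ?_⟩
  rw [Real.dist_eq] at he ⊢
  have he1 : |e - e₀| < 1 := lt_of_lt_of_le he (min_le_left _ _)
  have he2 : |e - e₀| < ε / (2 * (C + 1)) := lt_of_lt_of_le he (min_le_right _ _)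
  have hee : |e| ≤ |e₀| + 1 := by
    have := abs_sub_abs_le_abs_sub e e₀
    linarith
  have hbd := hL e e₀ hee (by linarith [abs_nonneg e₀])
  calc |HH σ V e - HH σ V e₀| ≤ C * |e - e₀| := hbd
    _ ≤ C * (ε / (2 * (C + 1))) := mul_le_mul_of_nonneg_left he2.le hC
    _ < ε := by
      rw [mul_div_assoc'] at *
      rw [div_lt_iff₀ (by positivity)]
      nlinarith

lemma HH_growth {V : ℝ → ℝ} (hσ : 0 < σ) (hV : Nice V) :
    ∃ B, 0 ≤ B ∧ ∀ e, HH σ V e ≤ B * (1 + |e|) ^ 2 := by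
  obtain ⟨A, hA, hVA⟩ := hV.bound
  set S := ∫ x, (1 + |x|) ^ 2 * phi σ x with hSdef
  have hS0 : 0 ≤ S := integral_nonneg fun x => mul_nonneg (by positivity) (phi_nonneg _ _)
  have hSint : Integrable (fun x : ℝ => (1 + |x|) ^ 2 * phi σ x) := by
    simpa using integrable_poly_phi_shift hσ 0 2
  refine ⟨A * S, by positivity, fun e => ?_⟩
  have step1 : HH σ V e ≤ A * ∫ u, (1 + |u|) ^ 2 * phi σ (u - e) := by
    rw [HH_rep hσ, ← integral_const_mul]
    apply integral_mono_of_nonneg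
      (Filter.Eventually.of_forall fun u => mul_nonneg (phi_nonneg _ _) (hV.nonneg _))
      ((integrable_poly_phi_shift hσ e 2).const_mul A)
      (Filter.Eventually.of_forall fun u => ?_)
    dsimp only
    rw [mul_comm (phi σ (u - e)) (V u), ← mul_assoc]
    exact mul_le_mul_of_nonneg_right (hVA u) (phi_nonneg _ _)
  have step2 : (∫ u, (1 + |u|) ^ 2 * phi σ (u - e)) = ∫ x, (1 + |e + x|) ^ 2 * phi σ x := by
    rw [← MeasureTheory.integral_add_left_eq_self
      (μ := (volume : Measure ℝ)) (fun u => (1 + |u|) ^ 2 * phi σ (u - e)) e]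
    congr 1
    funext x
    rw [add_sub_cancel_left]
  have step3 : (∫ x, (1 + |e + x|) ^ 2 * phi σ x) ≤ (1 + |e|) ^ 2 * S := by
    rw [hSdef, ← integral_const_mul]
    apply integral_mono_of_nonneg
      (Filter.Eventually.of_forall fun x => mul_nonneg (by positivity) (phi_nonneg _ _))
      (hSint.const_mul _) (Filter.Eventually.of_forall fun x => ?_)
    dsimp only
    rw [← mul_assoc]
    apply mul_le_mul_of_nonneg_right _ (phi_nonneg _ _)
    have h1 : |e + x| ≤ |e| + |x| := abs_add_le e x
    have h2 : 1 + |e + x| ≤ (1 + |e|) * (1 + |x|) := by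
      nlinarith [abs_nonneg e, abs_nonneg x, mul_nonneg (abs_nonneg e) (abs_nonneg x)]
    calc (1 + |e + x|) ^ 2 ≤ ((1 + |e|) * (1 + |x|)) ^ 2 := by
          apply pow_le_pow_left₀ (by positivity) h2
      _ = (1 + |e|) ^ 2 * (1 + |x|) ^ 2 := by ring
  calc HH σ V e ≤ A * ∫ u, (1 + |u|) ^ 2 * phi σ (u - e) := step1
    _ = A * ∫ x, (1 + |e + x|) ^ 2 * phi σ x := by rw [step2]
    _ ≤ A * ((1 + |e|) ^ 2 * S) := mul_le_mul_of_nonneg_left step3 hA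
    _ = A * S * (1 + |e|) ^ 2 := by ring

end Stmt1Aux

namespace Stmt1Aux

lemma C0_eq {Q : Type*} (a σ : ℝ) (Ms : Q → Bool → Q) (Vnext : ℝ → Q → ℝ) (e : ℝ) (q : Q) :
    C0 a σ Ms Vnext e q = e ^ 2 + HH σ (fun x => Vnext x (Ms q false)) (a * e) := rfl

lemma C1_eq {Q : Type*} (a σ : ℝ) (Ms : Q → Bool → Q) (p : Q → ℝ) (Vnext : ℝ → Q → ℝ)
    (e : ℝ) (q : Q) :
    C1 a σ Ms p Vnext e q = p q * e ^ 2 + p q * HH σ (fun x => Vnext x (Ms q true)) (a * e)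
      + (1 - p q) * HH σ (fun x => Vnext x (Ms q true)) 0 := by
  have h : HH σ (fun x => Vnext x (Ms q true)) 0 = ∫ w, Vnext w (Ms q true) ∂(gmeas σ) := by
    unfold HH
    congr 1
    funext w
    rw [zero_add]
  rw [h]
  rfl

lemma hfun_eq {Q : Type*} (a σ : ℝ) (Vn : ℝ → Q → ℝ) (q : Q) (e : ℝ) :
    hfun a σ Vn q e = HH σ (fun x => Vn x q) (a * e) := rfl

lemma nice_Vrec {Q : Type*} (a : ℝ) (hσ : 0 < σ) (Ms : Q → Bool → Q) (p : Q → ℝ)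
    (hp0 : ∀ q, 0 ≤ p q) (hp1 : ∀ q, p q ≤ 1) :
    ∀ (k : ℕ) (q : Q), Nice (fun e => Vrec a σ Ms p k e q) := by
  intro k
  induction k with
  | zero =>
    intro q
    have hz : (fun e => Vrec a σ Ms p 0 e q) = fun e : ℝ => e ^ 2 := rfl
    rw [hz]
    refine ⟨by fun_prop, fun x => sq_nonneg x, fun x => by ring, 1, zero_le_one, fun x => ?_⟩
    nlinarith [abs_nonneg x, sq_abs x]
  | succ k ih =>
    intro q
    set V0 : ℝ → ℝ := fun x => Vrec a σ Ms p k x (Ms q false) with hV0def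
    set V1 : ℝ → ℝ := fun x => Vrec a σ Ms p k x (Ms q true) with hV1def
    have n0 : Nice V0 := ih (Ms q false)
    have n1 : Nice V1 := ih (Ms q true)
    have hVs : (fun e => Vrec a σ Ms p (k + 1) e q)
        = fun e => min (e ^ 2 + HH σ V0 (a * e))
            (p q * e ^ 2 + p q * HH σ V1 (a * e) + (1 - p q) * HH σ V1 0) := by
      funext e
      show min (C0 a σ Ms (Vrec a σ Ms p k) e q) (C1 a σ Ms p (Vrec a σ Ms p k) e q) = _
      rw [C0_eq, C1_eq]
    rw [hVs]
    have hcont0 : Continuous fun e : ℝ => HH σ V0 (a * e) :=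
      (HH_cont hσ n0).comp (by fun_prop)
    have hcont1 : Continuous fun e : ℝ => HH σ V1 (a * e) :=
      (HH_cont hσ n1).comp (by fun_prop)
    obtain ⟨B, hB, hBa⟩ := HH_growth hσ n0
    refine ⟨Continuous.min (by fun_prop) (by fun_prop), fun e => ?_, fun e => ?_,
      1 + B * (1 + |a|) ^ 2, by positivity, fun e => ?_⟩
    · apply le_min
      · exact add_nonneg (sq_nonneg e) (HH_nonneg n0 _)
      · have h1 := HH_nonneg (σ := σ) n1 (a * e)
        have h2 := HH_nonneg (σ := σ) n1 (0 : ℝ)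
        have h3 := hp0 q
        have h4 := hp1 q
        have := sq_nonneg e
        nlinarith
    · have he0 : a * -e = -(a * e) := by ring
      rw [he0, HH_even hσ n0, HH_even hσ n1, neg_pow, pow_two]
      ring_nf
    · apply (min_le_left _ _).trans
      have h1 := hBa (a * e)
      have h2 : (1 + |a * e|) ^ 2 ≤ (1 + |a|) ^ 2 * (1 + |e|) ^ 2 := by
        rw [abs_mul]
        have h3 : 1 + |a| * |e| ≤ (1 + |a|) * (1 + |e|) := by
          nlinarith [abs_nonneg a, abs_nonneg e]
        calc (1 + |a| * |e|) ^ 2 ≤ ((1 + |a|) * (1 + |e|)) ^ 2 :=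
              pow_le_pow_left₀ (by positivity) h3 2
          _ = (1 + |a|) ^ 2 * (1 + |e|) ^ 2 := by ring
      have h4 : e ^ 2 ≤ (1 + |e|) ^ 2 := by nlinarith [abs_nonneg e, sq_abs e]
      have h5 : HH σ V0 (a * e) ≤ B * ((1 + |a|) ^ 2 * (1 + |e|) ^ 2) :=
        h1.trans (mul_le_mul_of_nonneg_left h2 hB)
      nlinarith [mul_nonneg (mul_nonneg hB (by positivity : (0:ℝ) ≤ (1 + |a|) ^ 2))
        (by positivity : (0:ℝ) ≤ (1 + |e|) ^ 2)]

end Stmt1Aux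

namespace Stmt1Aux

variable {σ : ℝ}

lemma limsup_key {l : Filter ℝ} [l.NeBot] {f0 f1 : ℝ → ℝ} {p : ℝ} (hp : 0 ≤ p)
    (hev : ∀ᶠ δ in l, f0 δ + (1 - p) ≤ p * f1 δ)
    (hb0 : ∃ C, ∀ᶠ δ in l, |f0 δ| ≤ C) (hb1 : ∃ C, ∀ᶠ δ in l, |f1 δ| ≤ C) :
    (1 - p) + limsup f0 l ≤ p * limsup f1 l := by
  obtain ⟨C0b, hC0⟩ := hb0
  obtain ⟨C1b, hC1⟩ := hb1
  set S0 := {x : ℝ | ∀ᶠ δ in l, f0 δ ≤ x} with hS0def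
  set S1 := {x : ℝ | ∀ᶠ δ in l, f1 δ ≤ x} with hS1def
  have hL0 : limsup f0 l = sInf S0 := Filter.limsup_eq
  have hL1 : limsup f1 l = sInf S1 := Filter.limsup_eq
  have hS0bdd : BddBelow S0 := by
    refine ⟨-C0b, fun x hx => ?_⟩
    obtain ⟨δ, h1, h2⟩ := (hx.and hC0).exists
    have := (abs_le.mp h2).1
    linarith
  have hS1bdd : BddBelow S1 := by
    refine ⟨-C1b, fun x hx => ?_⟩
    obtain ⟨δ, h1, h2⟩ := (hx.and hC1).exists
    have := (abs_le.mp h2).1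
    linarith
  have hC1mem : C1b ∈ S1 := hC1.mono fun δ h => (abs_le.mp h).2
  have hmain : ∀ b ∈ S1, (1 - p) + limsup f0 l ≤ p * b := by
    intro b hb
    have hmem : p * b - (1 - p) ∈ S0 := by
      filter_upwards [hev, hb] with δ h1 h2
      have := mul_le_mul_of_nonneg_left h2 hp
      linarith
    have := csInf_le hS0bdd hmem
    rw [hL0]
    linarith
  rcases eq_or_lt_of_le hp with hp0 | hppos
  · have := hmain C1b hC1mem
    rw [← hp0] at this ⊢
    linarith
  · have hdiv : ∀ b ∈ S1, ((1 - p) + limsup f0 l) / p ≤ b := by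
      intro b hb
      rw [div_le_iff₀ hppos]
      have := hmain b hb
      linarith [mul_comm b p]
    have hle : ((1 - p) + limsup f0 l) / p ≤ sInf S1 := le_csInf ⟨C1b, hC1mem⟩ hdiv
    rw [hL1]
    calc (1 - p) + limsup f0 l = (((1 - p) + limsup f0 l) / p) * p := by
          field_simp
      _ ≤ sInf S1 * p := mul_le_mul_of_nonneg_right hle hppos.le
      _ = p * sInf S1 := mul_comm _ _

/-- the uniform difference-quotient bound -/
lemma quot_bound {V : ℝ → ℝ} (hσ : 0 < σ) (hV : Nice V) (a : ℝ) {c : ℝ} (hc : 0 ≤ c) :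
    ∃ C, ∀ᶠ δ in nhdsWithin (0:ℝ) (Set.Ioi 0),
      |HH σ V (a * (c + δ)) - HH σ V (a * c)| ≤ C * ((c + δ) ^ 2 - c ^ 2) := by
  rcases eq_or_lt_of_le hc with hc0 | hcpos
  · -- c = 0
    obtain ⟨C, hC, hQ⟩ := HH_quad hσ hV
    refine ⟨C * a ^ 2, ?_⟩
    have hmem : Set.Ioo (0:ℝ) (1 / (1 + |a|)) ∈ nhdsWithin (0:ℝ) (Set.Ioi 0) :=
      Ioo_mem_nhdsGT_of_mem (by constructor <;> [exact le_rfl; positivity])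
    filter_upwards [hmem] with δ hδ
    have hδ0 : 0 < δ := hδ.1
    have hδ1 : δ < 1 / (1 + |a|) := hδ.2
    have hta : |a * δ| ≤ 1 := by
      rw [abs_mul, abs_of_pos hδ0]
      have h1 : |a| * δ ≤ |a| * (1 / (1 + |a|)) := mul_le_mul_of_nonneg_left hδ1.le (abs_nonneg a)
      have h2 : |a| * (1 / (1 + |a|)) ≤ 1 := by
        rw [mul_one_div, div_le_one (by positivity)]
        linarith
      linarith
    have h0 : HH σ V (a * c) = HH σ V 0 := by rw [← hc0, mul_zero]
    have h1 : a * (c + δ) = a * δ := by rw [← hc0, zero_add]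
    rw [h0, h1, ← hc0]
    have := hQ (a * δ) hta
    calc |HH σ V (a * δ) - HH σ V 0| ≤ C * (a * δ) ^ 2 := this
      _ = C * a ^ 2 * ((0 + δ) ^ 2 - 0 ^ 2) := by ring
  · -- c > 0
    obtain ⟨C, hC, hL⟩ := HH_lip hσ hV (|a| * (c + 1))
    refine ⟨C * |a| / (2 * c), ?_⟩
    have hmem : Set.Ioo (0:ℝ) 1 ∈ nhdsWithin (0:ℝ) (Set.Ioi 0) :=
      Ioo_mem_nhdsGT_of_mem (by constructor <;> [exact le_rfl; norm_num])
    filter_upwards [hmem] with δ hδ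
    have hδ0 : 0 < δ := hδ.1
    have hδ1 : δ < 1 := hδ.2
    have hm1 : |a * (c + δ)| ≤ |a| * (c + 1) := by
      rw [abs_mul]
      apply mul_le_mul_of_nonneg_left _ (abs_nonneg a)
      rw [abs_of_nonneg (by linarith)]
      linarith
    have hm2 : |a * c| ≤ |a| * (c + 1) := by
      rw [abs_mul]
      apply mul_le_mul_of_nonneg_left _ (abs_nonneg a)
      rw [abs_of_nonneg hc]
      linarith
    have hkey := hL _ _ hm1 hm2
    have hdiff : |a * (c + δ) - a * c| = |a| * δ := by
      rw [show a * (c + δ) - a * c = a * δ by ring, abs_mul, abs_of_pos hδ0]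
    rw [hdiff] at hkey
    calc |HH σ V (a * (c + δ)) - HH σ V (a * c)| ≤ C * (|a| * δ) := hkey
      _ ≤ C * |a| / (2 * c) * ((c + δ) ^ 2 - c ^ 2) := by
        rw [div_mul_eq_mul_div, le_div_iff₀ (by positivity)]
        have h2 : (c + δ) ^ 2 - c ^ 2 = 2 * c * δ + δ ^ 2 := by ring
        nlinarith [mul_nonneg (mul_nonneg hC (abs_nonneg a)) (sq_nonneg δ)]

end Stmt1Aux


/-- Lemma: sufficient condition for a threshold policy at a fixed stage.
Fix a stage `n ∈ {1,…,N}` and channel state `q`, with `q⁰ = Ms(q,0)` and `q¹ = Ms(q,1)`.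
If for every `e ≥ 0` we have `p(q)·D_{n+1}(e,q¹) < (1 - p(q)) + D_{n+1}(e,q⁰)`, then there do
not exist `c ≥ 0` and `ε > 0` with `C¹_n(c,q) ≤ C⁰_n(c,q)` and `C⁰_n(c+δ,q) ≤ C¹_n(c+δ,q)` for
all `δ ∈ (0,ε)`; i.e. the optimal symmetric transmission policy at stage `n` in channel state
`q` is a threshold policy in `|e|`.
Here `V_{n+1} = Vrec a σ Ms p (N - n)` and `D_{n+1}(e,q') = Dfun a σ (Vrec a σ Ms p (N - n)) e q'`. -/
theorem stmt1 {Q : Type*} [Fintype Q] [Nonempty Q]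
    (a σ : ℝ) (hσ : 0 < σ) (N : ℕ) (hN : 1 ≤ N)
    (Ms : Q → Bool → Q) (p : Q → ℝ)
    (hp0 : ∀ q, 0 ≤ p q) (hp1 : ∀ q, p q ≤ 1)
    (n : ℕ) (hn1 : 1 ≤ n) (hnN : n ≤ N) (q : Q)
    (hcond : ∀ e : ℝ, 0 ≤ e →
      p q * Dfun a σ (Vrec a σ Ms p (N - n)) e (Ms q true)
        < (1 - p q) + Dfun a σ (Vrec a σ Ms p (N - n)) e (Ms q false)) :
    ¬ ∃ c : ℝ, 0 ≤ c ∧ ∃ ε : ℝ, 0 < ε ∧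
        C1 a σ Ms p (Vrec a σ Ms p (N - n)) c q
          ≤ C0 a σ Ms (Vrec a σ Ms p (N - n)) c q ∧
        ∀ δ : ℝ, 0 < δ → δ < ε →
          C0 a σ Ms (Vrec a σ Ms p (N - n)) (c + δ) q
            ≤ C1 a σ Ms p (Vrec a σ Ms p (N - n)) (c + δ) q := by
  rintro ⟨c, hc, ε, hε, hC1le, hall⟩
  set k := N - n with hk
  set V := Vrec a σ Ms p k with hVdef
  have n0 : Stmt1Aux.Nice (fun x => V x (Ms q false)) := Stmt1Aux.nice_Vrec a hσ Ms p hp0 hp1 k (Ms q false)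
  have n1 : Stmt1Aux.Nice (fun x => V x (Ms q true)) := Stmt1Aux.nice_Vrec a hσ Ms p hp0 hp1 k (Ms q true)
  set l := nhdsWithin (0:ℝ) (Set.Ioi 0) with hl
  haveI : l.NeBot := nhdsGT_neBot (0:ℝ)
  set f0 : ℝ → ℝ := fun δ =>
    (hfun a σ V (Ms q false) (c + δ) - hfun a σ V (Ms q false) c) / ((c + δ) ^ 2 - c ^ 2)
    with hf0def
  set f1 : ℝ → ℝ := fun δ =>
    (hfun a σ V (Ms q true) (c + δ) - hfun a σ V (Ms q true) c) / ((c + δ) ^ 2 - c ^ 2)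
    with hf1def
  have hD0 : Dfun a σ V c (Ms q false) = limsup f0 l := rfl
  have hD1 : Dfun a σ V c (Ms q true) = limsup f1 l := rfl
  have hΔpos : ∀ δ : ℝ, 0 < δ → 0 < (c + δ) ^ 2 - c ^ 2 := by
    intro δ hδ; nlinarith
  -- the eventual inequality
  have hev : ∀ᶠ δ in l, f0 δ + (1 - p q) ≤ p q * f1 δ := by
    have hmem : Set.Ioo (0:ℝ) ε ∈ l := Ioo_mem_nhdsGT_of_mem ⟨le_rfl, hε⟩
    filter_upwards [hmem] with δ hδ
    have h2 := hall δ hδ.1 hδ.2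
    rw [Stmt1Aux.C0_eq, Stmt1Aux.C1_eq] at h2 hC1le
    have hΔ : 0 < (c + δ) ^ 2 - c ^ 2 := hΔpos δ hδ.1
    have key : (hfun a σ V (Ms q false) (c + δ) - hfun a σ V (Ms q false) c)
          + (1 - p q) * ((c + δ) ^ 2 - c ^ 2)
        ≤ p q * (hfun a σ V (Ms q true) (c + δ) - hfun a σ V (Ms q true) c) := by
      rw [Stmt1Aux.hfun_eq, Stmt1Aux.hfun_eq, Stmt1Aux.hfun_eq, Stmt1Aux.hfun_eq]
      rw [hVdef]
      linarith [h2, hC1le]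
    have h3 := div_le_div_of_nonneg_right key hΔ.le
    have e1 : ((hfun a σ V (Ms q false) (c + δ) - hfun a σ V (Ms q false) c)
          + (1 - p q) * ((c + δ) ^ 2 - c ^ 2)) / ((c + δ) ^ 2 - c ^ 2)
        = f0 δ + (1 - p q) := by
      rw [hf0def]
      field_simp
    have e2 : p q * (hfun a σ V (Ms q true) (c + δ) - hfun a σ V (Ms q true) c)
          / ((c + δ) ^ 2 - c ^ 2) = p q * f1 δ := by
      rw [hf1def, mul_div_assoc]
    rw [e1, e2] at h3
    exact h3
  -- boundedness
  have hb0 : ∃ C, ∀ᶠ δ in l, |f0 δ| ≤ C := by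
    obtain ⟨C, hC⟩ := Stmt1Aux.quot_bound hσ n0 a hc
    refine ⟨C, ?_⟩
    filter_upwards [hC, self_mem_nhdsWithin] with δ hδ1 hδ2
    have hΔ : 0 < (c + δ) ^ 2 - c ^ 2 := hΔpos δ hδ2
    rw [hf0def]
    dsimp only
    rw [abs_div, abs_of_pos hΔ, div_le_iff₀ hΔ]
    have : |hfun a σ V (Ms q false) (c + δ) - hfun a σ V (Ms q false) c|
        ≤ C * ((c + δ) ^ 2 - c ^ 2) := by
      rw [Stmt1Aux.hfun_eq, Stmt1Aux.hfun_eq]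
      exact hδ1
    linarith
  have hb1 : ∃ C, ∀ᶠ δ in l, |f1 δ| ≤ C := by
    obtain ⟨C, hC⟩ := Stmt1Aux.quot_bound hσ n1 a hc
    refine ⟨C, ?_⟩
    filter_upwards [hC, self_mem_nhdsWithin] with δ hδ1 hδ2
    have hΔ : 0 < (c + δ) ^ 2 - c ^ 2 := hΔpos δ hδ2
    rw [hf1def]
    dsimp only
    rw [abs_div, abs_of_pos hΔ, div_le_iff₀ hΔ]
    have : |hfun a σ V (Ms q true) (c + δ) - hfun a σ V (Ms q true) c|
        ≤ C * ((c + δ) ^ 2 - c ^ 2) := by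
      rw [Stmt1Aux.hfun_eq, Stmt1Aux.hfun_eq]
      exact hδ1
    linarith
  have hfinal := Stmt1Aux.limsup_key (hp0 q) hev hb0 hb1
  have hc2 := hcond c hc
  rw [hD0, hD1] at hc2
  linarith
end
end

section
/- For every n ∈ {1,…,N+1} and every channel state q ∈ Q, the cost-to-go function e ↦ V_n(e,q) is even (V_n(−e,q) = V_n(e,q)), nondecreasing on [0,∞) (0 ≤ x ≤ y implies V_n(x,q) ≤ V_n(y,q)), quasi-convex on ℝ, and attains its minimum value at e = 0, i.e., V_n(0,q) ≤ V_n(e,q) for all e ∈ ℝ. -/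
open MeasureTheory ProbabilityTheory Filter

noncomputable section

namespace Stmt3Aux

open Real

variable {σ : ℝ}

/-- The variance parameter as a nonnegative real. -/
def vσ (σ : ℝ) : NNReal := ⟨σ ^ 2, sq_nonneg σ⟩

/-- The Gaussian density. -/
def φ (σ : ℝ) : ℝ → ℝ := gaussianPDFReal 0 (vσ σ)

lemma vσ_ne_zero (hσ : 0 < σ) : vσ σ ≠ 0 := by
  intro h
  have h2 : ((vσ σ : NNReal) : ℝ) = 0 := by rw [h]; simp
  have h3 : σ ^ 2 = 0 := h2
  nlinarith

lemma φ_nonneg (x : ℝ) : 0 ≤ φ σ x := gaussianPDFReal_nonneg _ _ _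

lemma φ_even (x : ℝ) : φ σ (-x) = φ σ x := by
  simp [φ, gaussianPDFReal, sub_zero, neg_sq]

lemma φ_anti (hσ : 0 < σ) {s t : ℝ} (h : |s| ≤ |t|) : φ σ t ≤ φ σ s := by
  have hsq : s ^ 2 ≤ t ^ 2 := by
    rw [← sq_abs s, ← sq_abs t]; exact pow_le_pow_left₀ (abs_nonneg _) h 2
  have hv : (0:ℝ) < 2 * ((vσ σ : NNReal) : ℝ) := by
    have : ((vσ σ : NNReal) : ℝ) = σ ^ 2 := rfl
    rw [this]; positivity
  unfold φ gaussianPDFReal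
  apply mul_le_mul_of_nonneg_left _ (by positivity)
  apply Real.exp_le_exp.mpr
  rw [sub_zero, sub_zero, div_le_div_iff₀ hv hv]
  nlinarith

/-- The density as an `NNReal`-valued function. -/
def fnn (σ : ℝ) : ℝ → NNReal := fun x => (φ σ x).toNNReal

lemma measurable_fnn : Measurable (fnn σ) :=
  (measurable_gaussianPDFReal _ _).real_toNNReal

lemma gmeas_eq (hσ : 0 < σ) :
    gmeas σ = volume.withDensity (fun x => (fnn σ x : ENNReal)) :=
  gaussianReal_of_var_ne_zero 0 (vσ_ne_zero hσ)

lemma integral_gmeas (hσ : 0 < σ) (g : ℝ → ℝ) :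
    ∫ w, g w ∂(gmeas σ) = ∫ x, φ σ x * g x := by
  rw [gmeas_eq hσ, integral_withDensity_eq_integral_smul measurable_fnn]
  congr 1; funext x
  simp [fnn, NNReal.smul_def, Real.coe_toNNReal _ (φ_nonneg x)]

lemma integrable_gmeas_iff (hσ : 0 < σ) {g : ℝ → ℝ} :
    Integrable g (gmeas σ) ↔ Integrable (fun x => φ σ x * g x) volume := by
  rw [gmeas_eq hσ, integrable_withDensity_iff_integrable_smul measurable_fnn]
  exact integrable_congr (Filter.Eventually.of_forall fun x => by
    simp [fnn, NNReal.smul_def, Real.coe_toNNReal _ (φ_nonneg x)])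

lemma φ_eq (x : ℝ) :
    φ σ x = (Real.sqrt (2 * π * σ ^ 2))⁻¹ * Real.exp (-(2 * σ ^ 2)⁻¹ * x ^ 2) := by
  have hv : ((vσ σ : NNReal) : ℝ) = σ ^ 2 := rfl
  simp only [φ, gaussianPDFReal, hv, sub_zero]
  congr 1
  field_simp

lemma integrable_one_add_sq (hσ : 0 < σ) :
    Integrable (fun w => 1 + w ^ 2) (gmeas σ) := by
  rw [integrable_gmeas_iff hσ]
  have hb : (0:ℝ) < (2 * σ ^ 2)⁻¹ := by positivity
  have h1 : Integrable (fun x : ℝ => Real.exp (-(2 * σ ^ 2)⁻¹ * x ^ 2)) volume :=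
    integrable_exp_neg_mul_sq hb
  have h2 : Integrable (fun x : ℝ => x ^ (2:ℕ) * Real.exp (-(2 * σ ^ 2)⁻¹ * x ^ 2)) volume := by
    have h := integrable_rpow_mul_exp_neg_mul_sq hb (s := 2) (by norm_num)
    refine h.congr (Filter.Eventually.of_forall fun x => ?_)
    show x ^ (2:ℝ) * _ = x ^ (2:ℕ) * _
    rw [← Real.rpow_natCast x 2]
    norm_num
  have h3 := (h1.const_mul ((Real.sqrt (2 * π * σ ^ 2))⁻¹)).add
    (h2.const_mul ((Real.sqrt (2 * π * σ ^ 2))⁻¹))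
  refine h3.congr (Filter.Eventually.of_forall fun x => ?_)
  simp only [Pi.add_apply]
  rw [φ_eq]
  ring

lemma integrable_of_quadratic (hσ : 0 < σ) {g : ℝ → ℝ}
    (hm : AEStronglyMeasurable g (gmeas σ))
    {C : ℝ} (hb : ∀ w, |g w| ≤ C * (1 + w ^ 2)) : Integrable g (gmeas σ) :=
  Integrable.mono' ((integrable_one_add_sq hσ).const_mul C) hm
    (Filter.Eventually.of_forall fun w => by simpa [Real.norm_eq_abs] using hb w)

lemma integral_gmeas_neg (hσ : 0 < σ) (g : ℝ → ℝ) :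
    ∫ w, g (-w) ∂(gmeas σ) = ∫ w, g w ∂(gmeas σ) := by
  rw [integral_gmeas hσ, integral_gmeas hσ (fun w => g w)]
  have h := integral_neg_eq_self (fun x => φ σ (-x) * g x) volume
  simp only [neg_neg] at h
  rw [h]
  simp only [φ_even]

lemma abs_mono_of_even_mono {f : ℝ → ℝ} (hev : ∀ e, f (-e) = f e)
    (hm : ∀ x y : ℝ, 0 ≤ x → x ≤ y → f x ≤ f y) :
    ∀ s t : ℝ, |s| ≤ |t| → f s ≤ f t := by
  have hrep : ∀ u : ℝ, f u = f |u| := by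
    intro u
    rcases abs_cases u with ⟨h1, _⟩ | ⟨h1, _⟩
    · rw [h1]
    · rw [h1]; exact (hev u).symm
  intro s t h
  rw [hrep s, hrep t]
  exact hm _ _ (abs_nonneg s) h

lemma key_mono (hσ : 0 < σ) {V : ℝ → ℝ} (hVm : Measurable V)
    (heven : ∀ t, V (-t) = V t)
    (hmono : ∀ s t : ℝ, 0 ≤ s → s ≤ t → V s ≤ V t)
    (hint : ∀ c : ℝ, Integrable (fun w => V (c + w)) (gmeas σ))
    {x y : ℝ} (hx : 0 ≤ x) (hxy : x ≤ y) :
    ∫ w, V (x + w) ∂(gmeas σ) ≤ ∫ w, V (y + w) ∂(gmeas σ) := by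
  have habs := abs_mono_of_even_mono heven hmono
  have hrepr : ∀ c : ℝ, ∫ w, V (c + w) ∂(gmeas σ) = ∫ u, φ σ (u - c) * V u := by
    intro c
    rw [integral_gmeas hσ]
    have h := integral_add_right_eq_self (μ := volume) (fun u => φ σ (u - c) * V u) c
    rw [← h]
    congr 1; funext u
    have h1 : u + c - c = u := by ring
    rw [h1, add_comm c u]
  have hintF : ∀ c : ℝ, Integrable (fun u => φ σ (u - c) * V u) volume := by
    intro c
    have h1 : Integrable (fun x => φ σ x * V (c + x)) volume :=
      (integrable_gmeas_iff hσ).mp (hint c)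
    refine (h1.comp_sub_right c).congr (Filter.Eventually.of_forall fun u => ?_)
    have h2 : c + (u - c) = u := by ring
    simp only [h2]
  have hintf2 : Integrable (fun u => (φ σ (u - y) - φ σ (u - x)) * V u) volume :=
    ((hintF y).sub (hintF x)).congr (Filter.Eventually.of_forall fun u => by
      simp only [Pi.sub_apply]; ring)
  have hintG : Integrable (fun u => (φ σ (u - x) - φ σ (u - y)) * V (x + y - u)) volume := by
    have h1 := (hintF y).comp_sub_left (x + y)
    have h2 := (hintF x).comp_sub_left (x + y)
    refine (h1.sub h2).congr (Filter.Eventually.of_forall fun u => ?_)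
    simp only [Pi.sub_apply]
    have e1 : x + y - u - y = -(u - x) := by ring
    have e2 : x + y - u - x = -(u - y) := by ring
    rw [e1, e2, φ_even, φ_even]
    ring
  have hrefl : (∫ u, (φ σ (u - y) - φ σ (u - x)) * V u)
      = ∫ u, (φ σ (u - x) - φ σ (u - y)) * V (x + y - u) := by
    have h := integral_sub_left_eq_self
      (fun u => (φ σ (u - y) - φ σ (u - x)) * V u) volume (x + y)
    rw [← h]
    congr 1; funext u
    have e1 : x + y - u - y = -(u - x) := by ring
    have e2 : x + y - u - x = -(u - y) := by ring
    rw [e1, e2, φ_even, φ_even]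
  have hdiff : (∫ w, V (y + w) ∂(gmeas σ)) - (∫ w, V (x + w) ∂(gmeas σ))
      = ∫ u, (φ σ (u - y) - φ σ (u - x)) * V u := by
    rw [hrepr x, hrepr y, ← integral_sub (hintF y) (hintF x)]
    congr 1; funext u; ring
  have hsum : (∫ u, (φ σ (u - y) - φ σ (u - x)) * V u)
      + (∫ u, (φ σ (u - x) - φ σ (u - y)) * V (x + y - u))
      = ∫ u, (V u - V (x + y - u)) * (φ σ (u - y) - φ σ (u - x)) := by
    rw [← integral_add hintf2 hintG]
    congr 1; funext u; ring
  have hnn : 0 ≤ ∫ u, (V u - V (x + y - u)) * (φ σ (u - y) - φ σ (u - x)) := by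
    apply integral_nonneg
    intro u
    show (0:ℝ) ≤ (V u - V (x + y - u)) * (φ σ (u - y) - φ σ (u - x))
    have h0S : 0 ≤ x + y := by linarith
    rcases le_total (x + y) (2 * u) with hu | hu
    · apply mul_nonneg
      · have hu0 : 0 ≤ u := by linarith
        have habs1 : |x + y - u| ≤ |u| := by
          rw [abs_of_nonneg hu0, abs_le]
          constructor <;> linarith
        exact sub_nonneg.mpr (habs _ _ habs1)
      · have habs2 : |u - y| ≤ |u - x| := by
          rcases abs_cases (u - y) with ⟨h1, hs1⟩ | ⟨h1, hs1⟩ <;>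
            rcases abs_cases (u - x) with ⟨h2, hs2⟩ | ⟨h2, hs2⟩ <;>
            rw [h1, h2] <;> linarith
        exact sub_nonneg.mpr (φ_anti hσ habs2)
    · have hSu : 0 ≤ x + y - u := by linarith
      rw [← neg_mul_neg]
      apply mul_nonneg
      · have habs1 : |u| ≤ |x + y - u| := by
          rw [abs_of_nonneg hSu, abs_le]
          constructor <;> linarith
        exact neg_nonneg.mpr (sub_nonpos.mpr (habs _ _ habs1))
      · have habs2 : |u - x| ≤ |u - y| := by
          rcases abs_cases (u - y) with ⟨h1, hs1⟩ | ⟨h1, hs1⟩ <;>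
            rcases abs_cases (u - x) with ⟨h2, hs2⟩ | ⟨h2, hs2⟩ <;>
            rw [h1, h2] <;> linarith
        exact neg_nonneg.mpr (sub_nonpos.mpr (φ_anti hσ habs2))
  have h2 : 2 * ((∫ w, V (y + w) ∂(gmeas σ)) - (∫ w, V (x + w) ∂(gmeas σ)))
      = ∫ u, (V u - V (x + y - u)) * (φ σ (u - y) - φ σ (u - x)) := by
    rw [two_mul, hdiff]
    nth_rewrite 2 [hrefl]
    exact hsum
  have h3 : 0 ≤ 2 * ((∫ w, V (y + w) ∂(gmeas σ)) - (∫ w, V (x + w) ∂(gmeas σ))) :=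
    h2 ▸ hnn
  linarith

lemma continuous_shift_integral (hσ : 0 < σ) {V : ℝ → ℝ} (hVc : Continuous V) {B : ℝ}
    (hbound : ∀ e, |V e| ≤ B * (1 + e ^ 2)) :
    Continuous fun c => ∫ w, V (c + w) ∂(gmeas σ) := by
  have hB : 0 ≤ B := by
    have h1 := hbound 0
    have h2 := abs_nonneg (V 0)
    nlinarith
  rw [continuous_iff_continuousAt]
  intro c₀
  apply continuousAt_of_dominated
    (bound := fun w => B * (2 + 2 * (|c₀| + 1) ^ 2) * (1 + w ^ 2))
  · exact Filter.Eventually.of_forall fun c =>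
      (hVc.comp (continuous_const.add continuous_id)).aestronglyMeasurable
  · filter_upwards [Metric.closedBall_mem_nhds c₀ one_pos] with c hc
    apply Filter.Eventually.of_forall
    intro w
    have hcc : |c - c₀| ≤ 1 := by rwa [Metric.mem_closedBall, Real.dist_eq] at hc
    have hc1 : |c| ≤ |c₀| + 1 := by
      have h := abs_sub_abs_le_abs_sub c c₀; linarith
    have h3 : c ^ 2 ≤ (|c₀| + 1) ^ 2 := by
      rw [← sq_abs c]; exact pow_le_pow_left₀ (abs_nonneg c) hc1 2
    rw [Real.norm_eq_abs]
    calc |V (c + w)| ≤ B * (1 + (c + w) ^ 2) := hbound _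
      _ ≤ B * ((2 + 2 * (|c₀| + 1) ^ 2) * (1 + w ^ 2)) := by
          apply mul_le_mul_of_nonneg_left _ hB
          nlinarith [sq_nonneg (c - w), sq_nonneg (c * w),
            mul_nonneg (sub_nonneg.mpr h3) (add_nonneg zero_le_one (sq_nonneg w))]
      _ = B * (2 + 2 * (|c₀| + 1) ^ 2) * (1 + w ^ 2) := by ring
  · exact (integrable_one_add_sq hσ).const_mul _
  · exact Filter.Eventually.of_forall fun w =>
      ((hVc.comp (continuous_id.add continuous_const)).continuousAt)

lemma gprops (hσ : 0 < σ) {V : ℝ → ℝ} (hc : Continuous V) (h0 : ∀ e, 0 ≤ V e)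
    {B : ℝ} (hB0 : 0 ≤ B) (hB : ∀ e, V e ≤ B * (1 + e ^ 2))
    (hev : ∀ e, V (-e) = V e)
    (hm : ∀ x y : ℝ, 0 ≤ x → x ≤ y → V x ≤ V y) :
    Continuous (fun c => ∫ w, V (c + w) ∂(gmeas σ)) ∧
    (∀ c, 0 ≤ ∫ w, V (c + w) ∂(gmeas σ)) ∧
    (∃ D : ℝ, 0 ≤ D ∧ ∀ c, (∫ w, V (c + w) ∂(gmeas σ)) ≤ D * (1 + c ^ 2)) ∧
    (∀ c, (∫ w, V (-c + w) ∂(gmeas σ)) = ∫ w, V (c + w) ∂(gmeas σ)) ∧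
    (∀ c d : ℝ, |c| ≤ |d| →
      (∫ w, V (c + w) ∂(gmeas σ)) ≤ ∫ w, V (d + w) ∂(gmeas σ)) := by
  have habsV : ∀ e, |V e| ≤ B * (1 + e ^ 2) := fun e => by
    rw [abs_of_nonneg (h0 e)]; exact hB e
  have hint : ∀ c : ℝ, Integrable (fun w => V (c + w)) (gmeas σ) := by
    intro c
    apply integrable_of_quadratic hσ
      ((hc.comp (continuous_const.add continuous_id)).aestronglyMeasurable)
      (C := B * (2 + 2 * c ^ 2))
    intro w
    show |V (c + w)| ≤ B * (2 + 2 * c ^ 2) * (1 + w ^ 2)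
    rw [abs_of_nonneg (h0 _)]
    nlinarith [hB (c + w), sq_nonneg (c - w), sq_nonneg (c * w),
      mul_nonneg (mul_nonneg hB0 (sq_nonneg c)) (sq_nonneg w)]
  have hgev : ∀ c : ℝ, (∫ w, V (-c + w) ∂(gmeas σ)) = ∫ w, V (c + w) ∂(gmeas σ) := by
    intro c
    calc (∫ w, V (-c + w) ∂(gmeas σ)) = ∫ w, V (-c + -w) ∂(gmeas σ) :=
          (integral_gmeas_neg hσ (fun w => V (-c + w))).symm
      _ = ∫ w, V (c + w) ∂(gmeas σ) := by
          congr 1; funext w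
          rw [show -c + -w = -(c + w) by ring, hev]
  have hgabs : ∀ c d : ℝ, |c| ≤ |d| →
      (∫ w, V (c + w) ∂(gmeas σ)) ≤ ∫ w, V (d + w) ∂(gmeas σ) := by
    have hmono' : ∀ c d : ℝ, 0 ≤ c → c ≤ d →
        (∫ w, V (c + w) ∂(gmeas σ)) ≤ ∫ w, V (d + w) ∂(gmeas σ) :=
      fun c d h1 h2 => key_mono hσ hc.measurable hev hm hint h1 h2
    have hrep : ∀ c : ℝ, (∫ w, V (c + w) ∂(gmeas σ)) = ∫ w, V (|c| + w) ∂(gmeas σ) := by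
      intro c
      rcases abs_cases c with ⟨h1, _⟩ | ⟨h1, _⟩
      · rw [h1]
      · rw [h1]; exact (hgev c).symm
    intro c d h
    rw [hrep c, hrep d]
    exact hmono' _ _ (abs_nonneg c) h
  refine ⟨continuous_shift_integral hσ hc habsV,
    fun c => integral_nonneg fun w => h0 _, ?_, hgev, hgabs⟩
  have hM0 : 0 ≤ ∫ w, (1 + w ^ 2) ∂(gmeas σ) := integral_nonneg fun w => by positivity
  refine ⟨2 * B * (∫ w, (1 + w ^ 2) ∂(gmeas σ)), by positivity, fun c => ?_⟩
  have h1 : (∫ w, V (c + w) ∂(gmeas σ))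
      ≤ ∫ w, B * (2 + 2 * c ^ 2) * (1 + w ^ 2) ∂(gmeas σ) := by
    apply integral_mono (hint c) ((integrable_one_add_sq hσ).const_mul _)
    intro w
    simp only
    nlinarith [hB (c + w), sq_nonneg (c - w), sq_nonneg (c * w)]
  rw [integral_const_mul] at h1
  calc (∫ w, V (c + w) ∂(gmeas σ))
      ≤ B * (2 + 2 * c ^ 2) * ∫ w, (1 + w ^ 2) ∂(gmeas σ) := h1
    _ = 2 * B * (∫ w, (1 + w ^ 2) ∂(gmeas σ)) * (1 + c ^ 2) := by ring

lemma main {Q : Type*} (a σ : ℝ) (hσ : 0 < σ) (Ms : Q → Bool → Q) (p : Q → ℝ)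
    (hp0 : ∀ q, 0 ≤ p q) (hp1 : ∀ q, p q ≤ 1) (k : ℕ) :
    ∀ q : Q,
      Continuous (fun e => Vrec a σ Ms p k e q) ∧
      (∀ e, 0 ≤ Vrec a σ Ms p k e q) ∧
      (∃ B : ℝ, 0 ≤ B ∧ ∀ e, Vrec a σ Ms p k e q ≤ B * (1 + e ^ 2)) ∧
      (∀ e, Vrec a σ Ms p k (-e) q = Vrec a σ Ms p k e q) ∧
      (∀ x y : ℝ, 0 ≤ x → x ≤ y → Vrec a σ Ms p k x q ≤ Vrec a σ Ms p k y q) := by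
  induction k with
  | zero =>
    intro q
    simp only [Vrec]
    exact ⟨continuous_pow 2, fun e => sq_nonneg e,
      ⟨1, zero_le_one, fun e => by nlinarith⟩,
      fun e => by ring,
      fun x y h1 h2 => by nlinarith⟩
  | succ k ih =>
    intro q
    obtain ⟨hc0, h00, ⟨B0, hB00, hB0⟩, hev0, hm0⟩ := ih (Ms q false)
    obtain ⟨hc1, h01, ⟨B1, hB01, hB1⟩, hev1, hm1⟩ := ih (Ms q true)
    obtain ⟨hg0c, hg0n, ⟨D0, hD00, hD0⟩, hg0ev, hg0abs⟩ :=
      gprops hσ hc0 h00 hB00 hB0 hev0 hm0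
    obtain ⟨hg1c, hg1n, ⟨D1, hD01, hD1⟩, hg1ev, hg1abs⟩ :=
      gprops hσ hc1 h01 hB01 hB1 hev1 hm1
    have hK0 : 0 ≤ ∫ w, Vrec a σ Ms p k w (Ms q true) ∂(gmeas σ) :=
      integral_nonneg fun w => h01 w
    have hVeq : ∀ e : ℝ, Vrec a σ Ms p (k + 1) e q
        = min (e ^ 2 + ∫ w, Vrec a σ Ms p k (a * e + w) (Ms q false) ∂(gmeas σ))
          (p q * e ^ 2
            + p q * ∫ w, Vrec a σ Ms p k (a * e + w) (Ms q true) ∂(gmeas σ)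
            + (1 - p q) * ∫ w, Vrec a σ Ms p k w (Ms q true) ∂(gmeas σ)) :=
      fun e => rfl
    have habsae : ∀ x y : ℝ, 0 ≤ x → x ≤ y → |a * x| ≤ |a * y| := by
      intro x y hx hxy
      rw [abs_mul, abs_mul]
      exact mul_le_mul_of_nonneg_left
        (by rw [abs_of_nonneg hx, abs_of_nonneg (hx.trans hxy)]; exact hxy) (abs_nonneg a)
    refine ⟨?_, ?_, ?_, ?_, ?_⟩
    · have heq : (fun e => Vrec a σ Ms p (k + 1) e q) = fun e =>
          min (e ^ 2 + ∫ w, Vrec a σ Ms p k (a * e + w) (Ms q false) ∂(gmeas σ))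
            (p q * e ^ 2
              + p q * ∫ w, Vrec a σ Ms p k (a * e + w) (Ms q true) ∂(gmeas σ)
              + (1 - p q) * ∫ w, Vrec a σ Ms p k w (Ms q true) ∂(gmeas σ)) :=
        funext hVeq
      rw [heq]
      exact ((continuous_pow 2).add
          (hg0c.comp (continuous_const.mul continuous_id))).min
        (((continuous_const.mul (continuous_pow 2)).add
          (continuous_const.mul (hg1c.comp (continuous_const.mul continuous_id)))).add
          continuous_const)
    · intro e
      rw [hVeq e]
      apply le_min
      · exact add_nonneg (sq_nonneg e) (hg0n (a * e))
      · exact add_nonneg (add_nonneg (mul_nonneg (hp0 q) (sq_nonneg e))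
          (mul_nonneg (hp0 q) (hg1n (a * e)))) (mul_nonneg (by linarith [hp1 q]) hK0)
    · refine ⟨1 + D0 * (1 + a ^ 2), by positivity, fun e => ?_⟩
      rw [hVeq e]
      apply (min_le_left _ _).trans
      have h1 := hD0 (a * e)
      have h2 : (a * e) ^ 2 = a ^ 2 * e ^ 2 := by ring
      nlinarith [sq_nonneg e, sq_nonneg a, sq_nonneg (a * e),
        mul_nonneg hD00 (mul_nonneg (sq_nonneg a) (sq_nonneg e)),
        mul_nonneg hD00 (sq_nonneg a), mul_nonneg hD00 (sq_nonneg e)]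
    · intro e
      rw [hVeq e, hVeq (-e), show a * -e = -(a * e) by ring, hg0ev, hg1ev, neg_sq]
    · intro x y hx hxy
      rw [hVeq x, hVeq y]
      apply min_le_min
      · exact add_le_add (pow_le_pow_left₀ hx hxy 2) (hg0abs _ _ (habsae x y hx hxy))
      · exact add_le_add (add_le_add
          (mul_le_mul_of_nonneg_left (pow_le_pow_left₀ hx hxy 2) (hp0 q))
          (mul_le_mul_of_nonneg_left (hg1abs _ _ (habsae x y hx hxy)) (hp0 q))) le_rfl

end Stmt3Aux

/-- Lemma: the cost-to-go functions are even, nondecreasing in `|e|`,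
quasi-convex, and minimized at `0`. For every `n ∈ {1,…,N+1}` and channel state `q`,
the function `e ↦ V_n(e,q)` (with `V_n = Vrec a σ Ms p (N + 1 - n)`) is even, nondecreasing
on `[0,∞)`, quasi-convex on `ℝ`, and attains its minimum value at `e = 0`. -/
theorem stmt3 {Q : Type*} [Fintype Q] [Nonempty Q]
    (a σ : ℝ) (hσ : 0 < σ) (N : ℕ) (hN : 1 ≤ N)
    (Ms : Q → Bool → Q) (p : Q → ℝ)
    (hp0 : ∀ q, 0 ≤ p q) (hp1 : ∀ q, p q ≤ 1) :
    ∀ n : ℕ, 1 ≤ n → n ≤ N + 1 → ∀ q : Q,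
      (∀ e : ℝ, Vrec a σ Ms p (N + 1 - n) (-e) q = Vrec a σ Ms p (N + 1 - n) e q) ∧
      (∀ x y : ℝ, 0 ≤ x → x ≤ y →
        Vrec a σ Ms p (N + 1 - n) x q ≤ Vrec a σ Ms p (N + 1 - n) y q) ∧
      (∀ x y lam : ℝ, 0 ≤ lam → lam ≤ 1 →
        Vrec a σ Ms p (N + 1 - n) (lam * x + (1 - lam) * y) q
          ≤ max (Vrec a σ Ms p (N + 1 - n) x q) (Vrec a σ Ms p (N + 1 - n) y q)) ∧
      (∀ e : ℝ, Vrec a σ Ms p (N + 1 - n) 0 q ≤ Vrec a σ Ms p (N + 1 - n) e q) := by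
  intro n _ _ q
  obtain ⟨_, _, _, hev, hm⟩ := Stmt3Aux.main a σ hσ Ms p hp0 hp1 (N + 1 - n) q
  have habs := Stmt3Aux.abs_mono_of_even_mono hev hm
  refine ⟨hev, hm, ?_, fun e => habs 0 e (by simp)⟩
  intro x y lam h0 h1
  have hz : |lam * x + (1 - lam) * y| ≤ lam * |x| + (1 - lam) * |y| := by
    calc |lam * x + (1 - lam) * y| ≤ |lam * x| + |(1 - lam) * y| := abs_add_le _ _
      _ = lam * |x| + (1 - lam) * |y| := by
          rw [abs_mul, abs_mul, abs_of_nonneg h0, abs_of_nonneg (by linarith : (0:ℝ) ≤ 1 - lam)]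
  rcases le_total |x| |y| with h | h
  · refine le_trans (habs _ y ?_) (le_max_right _ _)
    calc |lam * x + (1 - lam) * y| ≤ lam * |x| + (1 - lam) * |y| := hz
      _ ≤ lam * |y| + (1 - lam) * |y| := by nlinarith
      _ = |y| := by ring
  · refine le_trans (habs _ x ?_) (le_max_left _ _)
    calc |lam * x + (1 - lam) * y| ≤ lam * |x| + (1 - lam) * |y| := hz
      _ ≤ lam * |x| + (1 - lam) * |x| := by nlinarith
      _ = |x| := by ring
end
end

section
/- For every n ∈ {1,…,N+1} and every channel state q ∈ Q, the smoothed cost-to-go h_n^q(e) = ∫ V_n(a·e + w, q) dγ(w) is even in e and nondecreasing on [0,∞); in particular, for every e ≥ 0 and every δ > 0, h_n^q(e+δ) − h_n^q(e) ≥ 0, so the upper difference-quotient limit D_n(e,q) is nonnegative for e ≥ 0. -/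
open MeasureTheory ProbabilityTheory Filter

noncomputable section

namespace Stmt4Aux

open Real Set

/-- the variance as NNReal -/
def vσ (σ : ℝ) : NNReal := ⟨σ ^ 2, sq_nonneg σ⟩

/-- the gaussian density -/
def P (σ : ℝ) : ℝ → ℝ := gaussianPDFReal 0 (vσ σ)

variable {σ : ℝ}

lemma vσ_ne (hσ : 0 < σ) : vσ σ ≠ 0 := by
  intro h
  have h' : ((vσ σ : NNReal) : ℝ) = 0 := by rw [h]; rfl
  exact (pow_pos hσ 2).ne' h'

lemma P_nonneg (σ : ℝ) (x : ℝ) : 0 ≤ P σ x := gaussianPDFReal_nonneg _ _ x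

lemma P_meas (σ : ℝ) : Measurable (P σ) := measurable_gaussianPDFReal _ _

lemma P_even (σ : ℝ) (x : ℝ) : P σ (-x) = P σ x := by
  simp [P, gaussianPDFReal, neg_sq]

lemma P_anti (hσ : 0 < σ) {x y : ℝ} (h : x ^ 2 ≤ y ^ 2) : P σ y ≤ P σ x := by
  unfold P gaussianPDFReal
  have hcoe : ((vσ σ : ℝ)) = σ ^ 2 := rfl
  have h2v : (0:ℝ) < 2 * (vσ σ : ℝ) := by rw [hcoe]; positivity
  refine mul_le_mul_of_nonneg_left (Real.exp_le_exp.2 ?_) (by positivity)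
  simp only [sub_zero]
  exact div_le_div_of_nonneg_right (neg_le_neg h) h2v.le

lemma gmeas_eq (hσ : 0 < σ) :
    gmeas σ = volume.withDensity (fun x => ENNReal.ofReal (P σ x)) := by
  exact gaussianReal_of_var_ne_zero 0 (vσ_ne hσ)

/-- integral against gmeas as a Lebesgue integral with density -/
lemma integral_gmeas (hσ : 0 < σ) (g : ℝ → ℝ) :
    ∫ x, g x ∂(gmeas σ) = ∫ x, P σ x * g x := by
  rw [gmeas_eq hσ]
  have hm : Measurable (fun x => (P σ x).toNNReal) := (P_meas σ).real_toNNReal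
  have : (fun x => ENNReal.ofReal (P σ x)) = (fun x => ((P σ x).toNNReal : ENNReal)) := rfl
  rw [this, integral_withDensity_eq_integral_smul hm]
  congr 1
  ext x
  simp [NNReal.smul_def, Real.coe_toNNReal _ (P_nonneg σ x)]

lemma integrable_gmeas_iff (hσ : 0 < σ) (g : ℝ → ℝ) :
    Integrable g (gmeas σ) ↔ Integrable (fun x => g x * P σ x) := by
  rw [gmeas_eq hσ]
  rw [integrable_withDensity_iff ((P_meas σ).ennreal_ofReal)
    (Eventually.of_forall fun x => ENNReal.ofReal_lt_top)]
  simp_rw [ENNReal.toReal_ofReal (P_nonneg σ _)]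

lemma integrable_sq_gmeas (hσ : 0 < σ) : Integrable (fun x => x ^ 2) (gmeas σ) := by
  rw [integrable_gmeas_iff hσ]
  have hb : (0:ℝ) < (2 * σ ^ 2)⁻¹ := by positivity
  have : (fun x : ℝ => x ^ 2 * P σ x)
      = fun x => (√(2 * π * (vσ σ : ℝ)))⁻¹ * (x ^ 2 * rexp (-(2 * σ ^ 2)⁻¹ * x ^ 2)) := by
    funext x
    have : -(x - 0) ^ 2 / (2 * ((vσ σ : ℝ))) = -(2 * σ ^ 2)⁻¹ * x ^ 2 := by
      have : ((vσ σ : ℝ)) = σ ^ 2 := rfl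
      rw [this]; field_simp; ring
    unfold P gaussianPDFReal
    rw [this]; ring
  rw [this]
  have h2 : Integrable (fun x : ℝ => x ^ 2 * rexp (-(2 * σ ^ 2)⁻¹ * x ^ 2)) := by
    have := integrable_rpow_mul_exp_neg_mul_sq (b := (2 * σ ^ 2)⁻¹) (s := 2) hb (by norm_num)
    simpa [Real.rpow_natCast] using this
  exact h2.const_mul _


lemma meas_of_even_mono {f : ℝ → ℝ} (he : ∀ x, f (-x) = f x)
    (hm : ∀ x y, 0 ≤ x → x ≤ y → f x ≤ f y) : Measurable f := by
  have habs : ∀ x, f |x| = f x := by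
    intro x
    rcases abs_cases x with ⟨h, _⟩ | ⟨h, _⟩
    · rw [h]
    · rw [h, he]
  have h1 : Monotone fun t => f (max t 0) :=
    fun s t hst => hm _ _ (le_max_right _ _) (max_le_max hst le_rfl)
  have h2 : f = (fun t => f (max t 0)) ∘ (fun x : ℝ => |x|) := by
    funext x
    simp only [Function.comp_apply, max_eq_left (abs_nonneg x), habs]
  rw [h2]
  exact h1.measurable.comp measurable_abs

lemma integrable_shift (hσ : 0 < σ) {f : ℝ → ℝ} (hmeas : Measurable f)
    (hf0 : ∀ x, 0 ≤ f x) {B : ℝ} (hB : 0 ≤ B) (hfB : ∀ x, f x ≤ B * (1 + x ^ 2)) (c : ℝ) :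
    Integrable (fun w => f (c + w)) (gmeas σ) := by
  have hprob : IsProbabilityMeasure (gmeas σ) := by unfold gmeas; exact instIsProbabilityMeasureGaussianReal _ _
  have hint : Integrable (fun w : ℝ => B * (1 + 2 * c ^ 2) + 2 * B * w ^ 2) (gmeas σ) :=
    (integrable_const _).add ((integrable_sq_gmeas hσ).const_mul _)
  refine hint.mono' ((hmeas.comp (measurable_const_add c)).aestronglyMeasurable) ?_
  refine Eventually.of_forall fun w => ?_
  rw [Real.norm_eq_abs, abs_of_nonneg (hf0 _)]
  have h1 := hfB (c + w)
  nlinarith [sq_nonneg (c - w), mul_nonneg hB (sq_nonneg (c - w))]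

lemma gmeas_neg (σ : ℝ) : (gmeas σ).map (fun x : ℝ => -x) = gmeas σ := by
  have h := gaussianReal_map_const_mul (μ := 0) (v := vσ σ) (-1)
  have h2 : (⟨(-1:ℝ)^2, sq_nonneg (-1:ℝ)⟩ : NNReal) = 1 := by
    apply NNReal.coe_injective
    norm_num
    rfl
  rw [show (NNReal.mk ((-1:ℝ)^2) (sq_nonneg _)) = 1 from h2, one_mul, mul_zero] at h
  have h2 : ((-1 : ℝ) * ·) = fun x : ℝ => -x := by funext x; simp
  rw [h2] at h
  exact h

lemma key (hσ : 0 < σ) {f : ℝ → ℝ} (hmeas : Measurable f) (hf0 : ∀ x, 0 ≤ f x)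
    (hfe : ∀ x, f (-x) = f x)
    (hfm : ∀ x y, 0 ≤ x → x ≤ y → f x ≤ f y)
    {B : ℝ} (hB : 0 ≤ B) (hfB : ∀ x, f x ≤ B * (1 + x ^ 2)) :
    (∀ c, (∫ w, f (-c + w) ∂(gmeas σ)) = ∫ w, f (c + w) ∂(gmeas σ)) ∧
    (∀ c d, 0 ≤ c → c ≤ d →
      (∫ w, f (c + w) ∂(gmeas σ)) ≤ ∫ w, f (d + w) ∂(gmeas σ)) := by
  constructor
  · intro c
    have step : ∫ w, f (-c + w) ∂(gmeas σ) = ∫ w, f (-c + -w) ∂(gmeas σ) := by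
      conv_lhs => rw [← gmeas_neg σ]
      exact integral_map measurable_neg.aemeasurable
        ((hmeas.comp (measurable_const_add _)).aestronglyMeasurable)
    rw [step]
    congr 1
    funext w
    rw [show -c + -w = -(c + w) by ring, hfe]
  · intro c d hc hcd
    set m : ℝ := (c + d) / 2 with hmdef
    have hm0 : 0 ≤ m := by rw [hmdef]; linarith
    have hIg : ∀ e : ℝ, Integrable (fun w => f (e + w)) (gmeas σ) :=
      integrable_shift hσ hmeas hf0 hB hfB
    have hIL : ∀ e : ℝ, Integrable (fun u => f u * P σ (u - e)) := by
      intro e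
      have h1 : Integrable (fun w => f (e + w) * P σ w) :=
        (integrable_gmeas_iff hσ _).mp (hIg e)
      have h2 := h1.comp_sub_right e
      simpa using h2
    have hrepr : ∀ e : ℝ, (∫ w, f (e + w) ∂(gmeas σ)) = ∫ u, f u * P σ (u - e) := by
      intro e
      rw [integral_gmeas hσ]
      have h := integral_sub_right_eq_self (μ := (volume : Measure ℝ))
        (fun x => f (e + x) * P σ x) e
      rw [show (fun x : ℝ => P σ x * f (e + x)) = fun x => f (e + x) * P σ x from
        funext fun x => mul_comm _ _, ← h]
      congr 1
      funext u
      rw [add_sub_cancel]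
    rw [hrepr c, hrepr d]
    have hsub : Integrable (fun u => f u * P σ (u - d) - f u * P σ (u - c)) :=
      (hIL d).sub (hIL c)
    have hgoal : 0 ≤ ∫ u, (f u * P σ (u - d) - f u * P σ (u - c)) := by
      have hsplit : (∫ u, (f u * P σ (u - d) - f u * P σ (u - c)))
          = (∫ u in Set.Iio m, (f u * P σ (u - d) - f u * P σ (u - c)))
            + ∫ u in Set.Ici m, (f u * P σ (u - d) - f u * P σ (u - c)) :=
        (intervalIntegral.integral_Iio_add_Ici hsub.integrableOn hsub.integrableOn).symm
      have hmp : MeasurePreserving (fun u : ℝ => 2 * m - u) volume volume :=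
        Measure.measurePreserving_sub_left volume (2 * m)
      have hemb : MeasurableEmbedding (fun u : ℝ => 2 * m - u) :=
        (MeasurableEquiv.subLeft (2 * m)).measurableEmbedding
      have hrpre : (fun u : ℝ => 2 * m - u) ⁻¹' (Set.Iio m) = Set.Ioi m := by
        ext u
        simp only [Set.mem_preimage, Set.mem_Iio, Set.mem_Ioi]
        constructor <;> intro <;> linarith
      have hrefl : (∫ u in Set.Iio m, (f u * P σ (u - d) - f u * P σ (u - c)))
          = ∫ u in Set.Ioi m, (f (2 * m - u) * P σ ((2 * m - u) - d)
              - f (2 * m - u) * P σ ((2 * m - u) - c)) := by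
        have h := hmp.setIntegral_preimage_emb hemb
          (fun u => f u * P σ (u - d) - f u * P σ (u - c)) (Set.Iio m)
        rw [hrpre] at h
        exact h.symm
      have hIO1 : IntegrableOn (fun u => f u * P σ (u - d) - f u * P σ (u - c))
          (Set.Ioi m) := hsub.integrableOn
      have hIO2 : IntegrableOn (fun u => f (2 * m - u) * P σ ((2 * m - u) - d)
          - f (2 * m - u) * P σ ((2 * m - u) - c)) (Set.Ioi m) := by
        have h := (hmp.integrableOn_comp_preimage hemb
          (f := fun u => f u * P σ (u - d) - f u * P σ (u - c)) (s := Set.Iio m)).mpr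
          hsub.integrableOn
        rw [hrpre] at h
        exact h
      rw [hsplit, hrefl, integral_Ici_eq_integral_Ioi, ← integral_add hIO2 hIO1]
      apply setIntegral_nonneg measurableSet_Ioi
      intro u hu
      have hum : m < u := hu
      have habs : ∀ x : ℝ, f |x| = f x := by
        intro x
        rcases abs_cases x with ⟨h, _⟩ | ⟨h, _⟩
        · rw [h]
        · rw [h, hfe]
      have hf2 : f (2 * m - u) ≤ f u := by
        have h1 : |2 * m - u| ≤ u := by
          rw [abs_le]
          constructor <;> [linarith; linarith]
        calc f (2 * m - u) = f |2 * m - u| := (habs _).symm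
          _ ≤ f u := hfm _ _ (abs_nonneg _) h1
      have hP2 : P σ (u - c) ≤ P σ (u - d) := by
        apply P_anti hσ
        have hq : 0 ≤ (d - c) * (2 * u - c - d) := by
          apply mul_nonneg <;> [linarith; linarith]
        nlinarith
      have e1 : P σ (2 * m - u - d) = P σ (u - c) := by
        rw [show 2 * m - u - d = -(u - c) by rw [hmdef]; ring, P_even]
      have e2 : P σ (2 * m - u - c) = P σ (u - d) := by
        rw [show 2 * m - u - c = -(u - d) by rw [hmdef]; ring, P_even]
      rw [e1, e2]
      nlinarith [mul_nonneg (sub_nonneg.2 hf2) (sub_nonneg.2 hP2)]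
    rw [integral_sub (hIL d) (hIL c)] at hgoal
    linarith



lemma Vrec_succ {Q : Type*} (a σ : ℝ) (Ms : Q → Bool → Q) (p : Q → ℝ) (k : ℕ) (e : ℝ) (q : Q) :
    Vrec a σ Ms p (k + 1) e q =
      min (C0 a σ Ms (Vrec a σ Ms p k) e q) (C1 a σ Ms p (Vrec a σ Ms p k) e q) := rfl

lemma Vrec_props {Q : Type*} (a : ℝ) (hσ : 0 < σ) (Ms : Q → Bool → Q) (p : Q → ℝ)
    (hp0 : ∀ q, 0 ≤ p q) (hp1 : ∀ q, p q ≤ 1) (k : ℕ) :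
    (∀ q e, 0 ≤ Vrec a σ Ms p k e q) ∧
    (∀ q e, Vrec a σ Ms p k (-e) q = Vrec a σ Ms p k e q) ∧
    (∀ q x y, 0 ≤ x → x ≤ y → Vrec a σ Ms p k x q ≤ Vrec a σ Ms p k y q) ∧
    (∃ B : ℝ, 0 ≤ B ∧ ∀ q e, Vrec a σ Ms p k e q ≤ B * (1 + e ^ 2)) := by
  haveI hprob : IsProbabilityMeasure (gmeas σ) := by unfold gmeas; exact instIsProbabilityMeasureGaussianReal _ _
  induction k with
  | zero =>
    refine ⟨fun q e => sq_nonneg e, fun q e => by simp [Vrec],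
      fun q x y hx hxy => by simp only [Vrec]; exact pow_le_pow_left₀ hx hxy 2,
      ⟨1, zero_le_one, fun q e => by simp only [Vrec, one_mul]; nlinarith [sq_nonneg e]⟩⟩
  | succ k ih =>
    obtain ⟨h0, he, hm, B, hB, hBle⟩ := ih
    have hfmeas : ∀ q : Q, Measurable (fun x => Vrec a σ Ms p k x q) := fun q =>
      meas_of_even_mono (fun x => he q x) (fun x y hx hxy => hm q x y hx hxy)
    have hkey := fun q : Q => key hσ (hfmeas q) (fun x => h0 q x) (fun x => he q x)
      (fun x y hx hxy => hm q x y hx hxy) hB (fun x => hBle q x)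
    -- abs / monotone-in-|c| versions of the smoothed integral
    have gabs : ∀ (q : Q) (c : ℝ),
        (∫ w, Vrec a σ Ms p k (c + w) q ∂(gmeas σ))
          = ∫ w, Vrec a σ Ms p k (|c| + w) q ∂(gmeas σ) := by
      intro q c
      rcases abs_cases c with ⟨h, _⟩ | ⟨h, _⟩
      · rw [h]
      · rw [h, ← (hkey q).1 c]
    have gmono : ∀ (q : Q) (c d : ℝ), |c| ≤ |d| →
        (∫ w, Vrec a σ Ms p k (c + w) q ∂(gmeas σ))
          ≤ ∫ w, Vrec a σ Ms p k (d + w) q ∂(gmeas σ) := by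
      intro q c d hcd
      rw [gabs q c, gabs q d]
      exact (hkey q).2 _ _ (abs_nonneg _) hcd
    have habsmul : ∀ x y : ℝ, 0 ≤ x → x ≤ y → |a * x| ≤ |a * y| := by
      intro x y hx hxy
      rw [abs_mul, abs_mul, abs_of_nonneg hx, abs_of_nonneg (hx.trans hxy)]
      exact mul_le_mul_of_nonneg_left hxy (abs_nonneg a)
    -- nonnegativity
    have hC0nn : ∀ q e, 0 ≤ C0 a σ Ms (Vrec a σ Ms p k) e q := fun q e =>
      add_nonneg (sq_nonneg e) (integral_nonneg fun w => h0 _ _)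
    have hC1nn : ∀ q e, 0 ≤ C1 a σ Ms p (Vrec a σ Ms p k) e q := fun q e =>
      add_nonneg (add_nonneg (mul_nonneg (hp0 q) (sq_nonneg e))
        (mul_nonneg (hp0 q) (integral_nonneg fun w => h0 _ _)))
        (mul_nonneg (by linarith [hp1 q]) (integral_nonneg fun w => h0 _ _))
    refine ⟨fun q e => le_min (hC0nn q e) (hC1nn q e), ?_, ?_, ?_⟩
    · -- evenness
      intro q e
      rw [Vrec_succ, Vrec_succ]
      have hsq : (-e) ^ 2 = e ^ 2 := by ring
      have hmul : a * -e = -(a * e) := by ring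
      have hC0 : C0 a σ Ms (Vrec a σ Ms p k) (-e) q = C0 a σ Ms (Vrec a σ Ms p k) e q := by
        unfold C0
        rw [hsq, hmul, (hkey (Ms q false)).1 (a * e)]
      have hC1 : C1 a σ Ms p (Vrec a σ Ms p k) (-e) q
          = C1 a σ Ms p (Vrec a σ Ms p k) e q := by
        unfold C1
        rw [hsq, hmul, (hkey (Ms q true)).1 (a * e)]
      rw [hC0, hC1]
    · -- monotonicity
      intro q x y hx hxy
      rw [Vrec_succ, Vrec_succ]
      have hsq : x ^ 2 ≤ y ^ 2 := pow_le_pow_left₀ hx hxy 2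
      have hg0 := gmono (Ms q false) (a * x) (a * y) (habsmul x y hx hxy)
      have hg1 := gmono (Ms q true) (a * x) (a * y) (habsmul x y hx hxy)
      apply min_le_min
      · unfold C0
        exact add_le_add hsq hg0
      · unfold C1
        have h1 : p q * x ^ 2 ≤ p q * y ^ 2 := mul_le_mul_of_nonneg_left hsq (hp0 q)
        have h2 : p q * (∫ w, Vrec a σ Ms p k (a * x + w) (Ms q true) ∂(gmeas σ))
            ≤ p q * ∫ w, Vrec a σ Ms p k (a * y + w) (Ms q true) ∂(gmeas σ) :=
          mul_le_mul_of_nonneg_left hg1 (hp0 q)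
        linarith
    · -- quadratic growth bound
      set S : ℝ := ∫ x, x ^ 2 ∂(gmeas σ) with hSdef
      have hS : 0 ≤ S := integral_nonneg fun x => sq_nonneg x
      refine ⟨1 + B * (1 + 2 * a ^ 2 + 2 * S), by nlinarith, ?_⟩
      intro q e
      have hle1 : Vrec a σ Ms p (k + 1) e q ≤ C0 a σ Ms (Vrec a σ Ms p k) e q := by
        rw [Vrec_succ]; exact min_le_left _ _
      have hIf : Integrable (fun w => Vrec a σ Ms p k (a * e + w) (Ms q false)) (gmeas σ) :=
        integrable_shift hσ (hfmeas _) (fun x => h0 _ x) hB (fun x => hBle _ x) (a * e)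
      have hIg : Integrable (fun w : ℝ => B * (1 + 2 * (a * e) ^ 2) + 2 * B * w ^ 2)
          (gmeas σ) := (integrable_const _).add ((integrable_sq_gmeas hσ).const_mul _)
      have hmono2 : (∫ w, Vrec a σ Ms p k (a * e + w) (Ms q false) ∂(gmeas σ))
          ≤ ∫ w, (B * (1 + 2 * (a * e) ^ 2) + 2 * B * w ^ 2) ∂(gmeas σ) := by
        apply integral_mono hIf hIg
        intro w
        dsimp only
        have h1 := hBle (Ms q false) (a * e + w)
        nlinarith [mul_nonneg hB (sq_nonneg (a * e - w)), mul_nonneg hB (sq_nonneg (a * e + w))]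
      have hval : (∫ w, (B * (1 + 2 * (a * e) ^ 2) + 2 * B * w ^ 2) ∂(gmeas σ))
          = B * (1 + 2 * (a * e) ^ 2) + 2 * B * S := by
        rw [integral_add (integrable_const _) ((integrable_sq_gmeas hσ).const_mul _),
          integral_const, integral_const_mul, probReal_univ, one_smul, hSdef]
      have hC0le : C0 a σ Ms (Vrec a σ Ms p k) e q
          ≤ e ^ 2 + (B * (1 + 2 * (a * e) ^ 2) + 2 * B * S) := by
        unfold C0
        rw [← hval]
        exact add_le_add_right hmono2 _
      have hfin : e ^ 2 + (B * (1 + 2 * (a * e) ^ 2) + 2 * B * S)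
          ≤ (1 + B * (1 + 2 * a ^ 2 + 2 * S)) * (1 + e ^ 2) := by
        have h1 : (a * e) ^ 2 = a ^ 2 * e ^ 2 := by ring
        rw [h1]
        nlinarith [sq_nonneg e, sq_nonneg a, mul_nonneg hB hS,
          mul_nonneg (mul_nonneg hB (sq_nonneg a)) (sq_nonneg e),
          mul_nonneg (mul_nonneg hB hS) (sq_nonneg e), mul_nonneg hB (sq_nonneg e)]
      linarith

end Stmt4Aux

/-- Lemma: the smoothed cost-to-go is even and nondecreasing in `|e|`;
hence the difference-quotient limit is nonnegative.
For every `n ∈ {1,…,N+1}` and channel state `q` (with `V_n = Vrec a σ Ms p (N + 1 - n)`):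
`h_n^q` is even, nondecreasing on `[0,∞)`; in particular `h_n^q(e+δ) - h_n^q(e) ≥ 0` for
all `e ≥ 0`, `δ > 0`, and `D_n(e,q) ≥ 0` for all `e ≥ 0`. -/
theorem stmt4 {Q : Type*} [Fintype Q] [Nonempty Q]
    (a σ : ℝ) (hσ : 0 < σ) (N : ℕ) (hN : 1 ≤ N)
    (Ms : Q → Bool → Q) (p : Q → ℝ)
    (hp0 : ∀ q, 0 ≤ p q) (hp1 : ∀ q, p q ≤ 1) :
    ∀ n : ℕ, 1 ≤ n → n ≤ N + 1 → ∀ q : Q,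
      (∀ e : ℝ, hfun a σ (Vrec a σ Ms p (N + 1 - n)) q (-e)
        = hfun a σ (Vrec a σ Ms p (N + 1 - n)) q e) ∧
      (∀ x y : ℝ, 0 ≤ x → x ≤ y →
        hfun a σ (Vrec a σ Ms p (N + 1 - n)) q x
          ≤ hfun a σ (Vrec a σ Ms p (N + 1 - n)) q y) ∧
      (∀ e δ : ℝ, 0 ≤ e → 0 < δ →
        0 ≤ hfun a σ (Vrec a σ Ms p (N + 1 - n)) q (e + δ)
              - hfun a σ (Vrec a σ Ms p (N + 1 - n)) q e) ∧
      (∀ e : ℝ, 0 ≤ e → 0 ≤ Dfun a σ (Vrec a σ Ms p (N + 1 - n)) e q) := by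
  intro n _ _ q
  set k := N + 1 - n with hk
  obtain ⟨h0, he, hm, B, hB, hBle⟩ := Stmt4Aux.Vrec_props a hσ Ms p hp0 hp1 k
  have hfmeas : Measurable (fun x => Vrec a σ Ms p k x q) :=
    Stmt4Aux.meas_of_even_mono (fun x => he q x) (fun x y hx hxy => hm q x y hx hxy)
  have hkey := Stmt4Aux.key hσ hfmeas (fun x => h0 q x) (fun x => he q x)
    (fun x y hx hxy => hm q x y hx hxy) hB (fun x => hBle q x)
  have hfe : ∀ e : ℝ, hfun a σ (Vrec a σ Ms p k) q e
      = ∫ w, Vrec a σ Ms p k (a * e + w) q ∂(gmeas σ) := fun e => rfl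
  have gabs : ∀ c : ℝ, (∫ w, Vrec a σ Ms p k (c + w) q ∂(gmeas σ))
      = ∫ w, Vrec a σ Ms p k (|c| + w) q ∂(gmeas σ) := by
    intro c
    rcases abs_cases c with ⟨h, _⟩ | ⟨h, _⟩
    · rw [h]
    · rw [h, ← hkey.1 c]
  have H1 : ∀ e : ℝ, hfun a σ (Vrec a σ Ms p k) q (-e) = hfun a σ (Vrec a σ Ms p k) q e := by
    intro e
    rw [hfe, hfe, show a * -e = -(a * e) by ring, hkey.1 (a * e)]
  have H2 : ∀ x y : ℝ, 0 ≤ x → x ≤ y →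
      hfun a σ (Vrec a σ Ms p k) q x ≤ hfun a σ (Vrec a σ Ms p k) q y := by
    intro x y hx hxy
    rw [hfe, hfe, gabs (a * x), gabs (a * y)]
    apply hkey.2 _ _ (abs_nonneg _)
    rw [abs_mul, abs_mul, abs_of_nonneg hx, abs_of_nonneg (hx.trans hxy)]
    exact mul_le_mul_of_nonneg_left hxy (abs_nonneg a)
  have H3 : ∀ e δ : ℝ, 0 ≤ e → 0 < δ →
      0 ≤ hfun a σ (Vrec a σ Ms p k) q (e + δ) - hfun a σ (Vrec a σ Ms p k) q e :=
    fun e δ he0 hδ => sub_nonneg.2 (H2 e (e + δ) he0 (by linarith))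
  refine ⟨H1, H2, H3, ?_⟩
  intro e he0
  have hD : Dfun a σ (Vrec a σ Ms p k) e q = limsup (fun δ : ℝ =>
      (hfun a σ (Vrec a σ Ms p k) q (e + δ) - hfun a σ (Vrec a σ Ms p k) q e)
        / ((e + δ) ^ 2 - e ^ 2)) (nhdsWithin 0 (Set.Ioi 0)) := rfl
  rw [hD, Filter.limsup_eq]
  apply Real.sInf_nonneg
  intro b hb
  simp only [Set.mem_setOf_eq] at hb
  obtain ⟨δ, hbδ, hδ⟩ := (hb.and eventually_mem_nhdsWithin).exists
  have hδ0 : (0:ℝ) < δ := hδ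
  refine le_trans (div_nonneg (H3 e δ he0 hδ0) ?_) hbδ
  nlinarith
end
end

section
/- For any continuation values K₀, K₁ ∈ ℝ with K₀, K₁ ≥ 0, define G(T) = J(T) + π(T)·K₁ + (1 − π(T))·K₀. Then the infimum of G(T) over all Borel measurable T : ℝ → [0,1] with 0 < π(T) < 1 is equal to the infimum of G(T*) over all policies T* of the form T* = indicator of ℝ ∖ [τ̲, τ̄] with τ̲ ≤ τ̄ (transmit exactly when the observed value lies outside [τ̲, τ̄]). In particular, the optimal transmission policy at each stage of the dynamic program for the white-process case is of the threshold type. -/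
open MeasureTheory ProbabilityTheory
open Real Filter

noncomputable section

lemma tendsto_mul_exp_neg_mul_sq_atTop {b : ℝ} (hb : 0 < b) :
    Tendsto (fun x : ℝ => x * rexp (-b * x ^ 2)) atTop (nhds 0) := by
  have h := rpow_mul_exp_neg_mul_sq_isLittleO_exp_neg hb 1
  have h2 : (fun x : ℝ => x * rexp (-b * x ^ 2)) =ᶠ[atTop] fun x => x ^ (1:ℝ) * rexp (-b * x ^ 2) := by
    filter_upwards [eventually_gt_atTop (0:ℝ)] with x hx
    rw [Real.rpow_one]
  have h4 : Tendsto (fun x : ℝ => -(1/2) * x) atTop atBot := by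
    have : Tendsto (fun x : ℝ => x * (1/2)) atTop atTop :=
      Tendsto.atTop_mul_const (by norm_num) tendsto_id
    have h5 := tendsto_neg_atTop_atBot.comp this
    exact Tendsto.congr (by intro x; simp [Function.comp]; ring) h5
  have h3 : Tendsto (fun x : ℝ => rexp (-(1/2) * x)) atTop (nhds 0) :=
    Real.tendsto_exp_atBot.comp h4
  exact Tendsto.congr' h2.symm (h.trans_tendsto h3)

lemma integrable_sq_mul_exp_neg_mul_sq {b : ℝ} (hb : 0 < b) :
    Integrable (fun x : ℝ => x ^ 2 * rexp (-b * x ^ 2)) := by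
  have h := integrable_rpow_mul_exp_neg_mul_sq hb (by norm_num : (-1:ℝ) < 2)
  refine h.congr (Eventually.of_forall fun x => ?_)
  norm_cast

lemma integral_sq_mul_exp_neg_mul_sq {b : ℝ} (hb : 0 < b) :
    ∫ x : ℝ, x ^ 2 * rexp (-b * x ^ 2) = (2*b)⁻¹ * Real.sqrt (π / b) := by
  set F : ℝ → ℝ := fun x => -(2*b)⁻¹ * (x * rexp (-b * x ^ 2)) with hF
  have hderiv : ∀ x : ℝ, HasDerivAt F
      (x ^ 2 * rexp (-b * x ^ 2) - (2*b)⁻¹ * rexp (-b * x ^ 2)) x := by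
    intro x
    have h1 : HasDerivAt (fun x : ℝ => -b * x ^ 2) (-b * (2 * x)) x := by
      simpa using ((hasDerivAt_pow 2 x).const_mul (-b))
    have h2 : HasDerivAt (fun x : ℝ => rexp (-b * x ^ 2)) (rexp (-b * x ^ 2) * (-b * (2*x))) x :=
      (Real.hasDerivAt_exp _).comp x h1
    have h3 : HasDerivAt (fun x : ℝ => x * rexp (-b * x ^ 2))
        (1 * rexp (-b * x ^ 2) + x * (rexp (-b * x ^ 2) * (-b * (2*x)))) x :=
      (hasDerivAt_id x).mul h2
    have h4 := h3.const_mul (-(2*b)⁻¹)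
    have hb' : (2*b)⁻¹ * (2*b) = 1 := inv_mul_cancel₀ (by positivity)
    have e : x ^ 2 * rexp (-b * x ^ 2) - (2*b)⁻¹ * rexp (-b * x ^ 2)
        = -(2*b)⁻¹ * (1 * rexp (-b * x ^ 2) + x * (rexp (-b * x ^ 2) * (-b * (2*x)))) := by
      linear_combination (-(x ^ 2 * rexp (-b * x ^ 2))) * hb'
    rw [e]
    exact h4
  have hint : Integrable (fun x : ℝ => x ^ 2 * rexp (-b * x ^ 2) - (2*b)⁻¹ * rexp (-b * x ^ 2)) :=
    (integrable_sq_mul_exp_neg_mul_sq hb).sub ((integrable_exp_neg_mul_sq hb).const_mul _)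
  have htop : Tendsto F atTop (nhds 0) := by
    have h6 := (tendsto_mul_exp_neg_mul_sq_atTop hb).const_mul (-(2*b)⁻¹)
    rw [mul_zero] at h6
    exact h6
  have hbot : Tendsto F atBot (nhds 0) := by
    have hodd : ∀ x : ℝ, F (-x) = -F x := by intro x; simp only [hF]; ring
    have := htop.comp tendsto_neg_atBot_atTop
    have heq : (F ∘ fun x : ℝ => -x) = fun x => -F x := funext fun x => hodd x
    rw [heq] at this
    simpa using this.neg
  have key := integral_of_hasDerivAt_of_tendsto hderiv hint hbot htop
  have hsplit : ∫ x : ℝ, (x ^ 2 * rexp (-b * x ^ 2) - (2*b)⁻¹ * rexp (-b * x ^ 2)) =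
      (∫ x : ℝ, x ^ 2 * rexp (-b * x ^ 2)) - (2*b)⁻¹ * ∫ x : ℝ, rexp (-b * x ^ 2) := by
    rw [integral_sub (integrable_sq_mul_exp_neg_mul_sq hb)
      ((integrable_exp_neg_mul_sq hb).const_mul _)]
    rw [MeasureTheory.integral_const_mul]
  rw [hsplit, integral_gaussian] at key
  linarith [key]


def vv (σ : ℝ) : NNReal := ⟨σ ^ 2, sq_nonneg σ⟩

lemma gmeas_eq (σ : ℝ) : gmeas σ = gaussianReal 0 (vv σ) := rfl

instance (σ : ℝ) : IsProbabilityMeasure (gmeas σ) :=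
  inferInstanceAs (IsProbabilityMeasure (gaussianReal 0 (vv σ)))

variable {σ : ℝ}

lemma gvar_ne (hσ : 0 < σ) : (vv σ : NNReal) ≠ 0 := by
  intro h
  have := congrArg (fun x : NNReal => (x:ℝ)) h
  have h2 : σ ^ 2 = 0 := this
  nlinarith

lemma gpdf_pos (hσ : 0 < σ) (x : ℝ) : 0 < gaussianPDFReal 0 (vv σ) x :=
  gaussianPDFReal_pos _ _ _ (gvar_ne hσ)

lemma gmeas_integral (hσ : 0 < σ) (g : ℝ → ℝ) :
    ∫ x, g x ∂(gmeas σ) = ∫ x, gaussianPDFReal 0 (vv σ) x * g x := by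
  rw [gmeas_eq, gaussianReal_of_var_ne_zero _ (gvar_ne hσ)]
  have h : (gaussianPDF 0 (vv σ)) =
      fun x => ((gaussianPDFReal 0 (vv σ) x).toNNReal : ENNReal) := by
    funext x; rw [gaussianPDF]; rw [ENNReal.ofReal]
  rw [h, integral_withDensity_eq_integral_smul
      ((measurable_gaussianPDFReal 0 (vv σ)).real_toNNReal)]
  congr 1
  funext x
  rw [NNReal.smul_def, smul_eq_mul, Real.coe_toNNReal _ (gaussianPDFReal_nonneg _ _ x)]

lemma gmeas_integrable_iff (hσ : 0 < σ) (g : ℝ → ℝ) :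
    Integrable g (gmeas σ) ↔
      Integrable (fun x => g x * gaussianPDFReal 0 (vv σ) x) volume := by
  rw [gmeas_eq, gaussianReal_of_var_ne_zero _ (gvar_ne hσ)]
  rw [integrable_withDensity_iff (measurable_gaussianPDF _ _)
    (Eventually.of_forall fun x => ENNReal.ofReal_lt_top)]
  have heq : ∀ x : ℝ, (gaussianPDF 0 (vv σ) x).toReal
      = gaussianPDFReal 0 (vv σ) x := fun x => by
    rw [gaussianPDF, ENNReal.toReal_ofReal (gaussianPDFReal_nonneg _ _ x)]
  constructor <;> intro h <;> refine h.congr (Eventually.of_forall fun x => ?_)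
  · simp only [heq]
  · simp only [heq]

lemma gpdf_eq (hσ : 0 < σ) : gaussianPDFReal 0 (vv σ)
    = fun x => (Real.sqrt (2 * π * σ ^ 2))⁻¹ * rexp (-(2 * σ ^ 2)⁻¹ * x ^ 2) := by
  rw [gaussianPDFReal_def]
  funext x
  show (Real.sqrt (2 * π * σ ^ 2))⁻¹ * rexp (-(x - 0) ^ 2 / (2 * σ ^ 2)) = _
  congr 2
  ring

lemma gmeas_integrable_sq (hσ : 0 < σ) : Integrable (fun x => x ^ 2) (gmeas σ) := by
  rw [gmeas_integrable_iff hσ, gpdf_eq hσ]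
  have h := (integrable_sq_mul_exp_neg_mul_sq
    (by positivity : (0:ℝ) < (2 * σ ^ 2)⁻¹)).const_mul (Real.sqrt (2 * π * σ ^ 2))⁻¹
  exact h.congr (Eventually.of_forall fun x => by ring)

lemma gmeas_integrable_id (hσ : 0 < σ) : Integrable (fun x => x) (gmeas σ) := by
  rw [gmeas_integrable_iff hσ, gpdf_eq hσ]
  have h := (integrable_mul_exp_neg_mul_sq
    (by positivity : (0:ℝ) < (2 * σ ^ 2)⁻¹)).const_mul (Real.sqrt (2 * π * σ ^ 2))⁻¹
  exact h.congr (Eventually.of_forall fun x => by ring)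

lemma gmeas_moment1 (hσ : 0 < σ) : ∫ x, x ∂(gmeas σ) = 0 := by
  rw [gmeas_integral hσ]
  set f : ℝ → ℝ := fun x => gaussianPDFReal 0 (vv σ) x * x with hf
  have hodd : ∀ x, f (-x) = -f x := by
    intro x; simp only [hf, gpdf_eq hσ]; ring_nf
  have h1 : ∫ x, f (-x) = ∫ x, f x := integral_neg_eq_self f volume
  have h2 : ∫ x, f (-x) = -∫ x, f x := by
    rw [show (fun x => f (-x)) = fun x => -f x from funext hodd, integral_neg]
  have := h1.symm.trans h2
  linarith

lemma gmeas_moment2 (hσ : 0 < σ) : ∫ x, x ^ 2 ∂(gmeas σ) = σ ^ 2 := by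
  rw [gmeas_integral hσ, gpdf_eq hσ]
  have hB : (0:ℝ) < (2 * σ ^ 2)⁻¹ := by positivity
  have h1 : ∫ x : ℝ, (Real.sqrt (2 * π * σ ^ 2))⁻¹ * rexp (-(2 * σ ^ 2)⁻¹ * x ^ 2) * x ^ 2
      = (Real.sqrt (2 * π * σ ^ 2))⁻¹ * ∫ x : ℝ, x ^ 2 * rexp (-(2 * σ ^ 2)⁻¹ * x ^ 2) := by
    rw [← MeasureTheory.integral_const_mul]
    congr 1; funext x; ring
  rw [h1, integral_sq_mul_exp_neg_mul_sq hB]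
  have h2 : (2 * (2 * σ ^ 2)⁻¹)⁻¹ = σ ^ 2 / 2 * 2 := by field_simp
  have h3 : π / (2 * σ ^ 2)⁻¹ = 2 * π * σ ^ 2 := by field_simp
  rw [h2, h3]
  have h4 : (0:ℝ) < Real.sqrt (2 * π * σ ^ 2) := Real.sqrt_pos.mpr (by positivity)
  field_simp

lemma gmeas_null_singleton (hσ : 0 < σ) (a : ℝ) : gmeas σ {a} = 0 := by
  rw [gmeas_eq, gaussianReal_of_var_ne_zero _ (gvar_ne hσ),
    withDensity_apply _ (measurableSet_singleton a)]
  exact setLIntegral_measure_zero _ _ (measure_singleton a)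

lemma gmeas_pos_of_lt (hσ : 0 < σ) {a b : ℝ} (h : a < b) : 0 < gmeas σ (Set.Ioo a b) := by
  rw [gmeas_eq, gaussianReal_of_var_ne_zero _ (gvar_ne hσ)]
  rw [pos_iff_ne_zero]
  intro hz
  rw [withDensity_apply_eq_zero (measurable_gaussianPDF _ _)] at hz
  have : {x | gaussianPDF 0 (vv σ) x ≠ 0} ∩ Set.Ioo a b = Set.Ioo a b := by
    apply Set.inter_eq_self_of_subset_right
    intro x _
    exact (gaussianPDF_pos _ (gvar_ne hσ) x).ne'
  rw [this] at hz
  rw [Real.volume_Ioo] at hz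
  exact (ENNReal.ofReal_pos.mpr (by linarith)).ne' hz

lemma gmeas_Icc_lt_one (hσ : 0 < σ) (a b : ℝ) : gmeas σ (Set.Icc a b) < 1 := by
  have h2 : gmeas σ (Set.Icc a b) + gmeas σ (Set.Ioo b (b+1)) ≤ 1 := by
    rw [← measure_union (by
      intro s hs1 hs2 x hx
      have h1 := hs1 hx; have h2 := hs2 hx
      exact absurd h2.1 (not_lt.mpr h1.2)) measurableSet_Ioo]
    simpa using prob_le_one (μ := gmeas σ) 
  have h3 := gmeas_pos_of_lt hσ (show b < b + 1 by linarith)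
  have h4 : gmeas σ (Set.Ioo b (b+1)) ≠ 0 := h3.ne'
  have hfin : gmeas σ (Set.Icc a b) ≠ ⊤ := measure_ne_top _ _
  by_contra hc
  push_neg at hc
  have := le_antisymm (prob_le_one) hc
  rw [this] at h2
  have : gmeas σ (Set.Ioo b (b+1)) = 0 := by
    by_contra h5
    have h6 : 0 < gmeas σ (Set.Ioo b (b+1)) := pos_iff_ne_zero.mpr h5
    have := ENNReal.add_lt_add_left (by simp : (1:ENNReal) ≠ ⊤) h6
    simp at this
    exact absurd h2 (not_le.mpr (by simpa using this))
  exact h4 this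

lemma gmeas_Icc_pos (hσ : 0 < σ) {a b : ℝ} (h : a < b) : 0 < gmeas σ (Set.Icc a b) :=
  lt_of_lt_of_le (gmeas_pos_of_lt hσ h) (measure_mono Set.Ioo_subset_Icc_self)

-- integrability toolkit
lemma int_bdd_mul (hσ : 0 < σ) {T g : ℝ → ℝ} (hg : Integrable g (gmeas σ))
    (hT : Measurable T) (C : ℝ) (hC : ∀ x, |T x| ≤ C) :
    Integrable (fun x => g x * T x) (gmeas σ) := by
  have := hg.bdd_mul hT.aestronglyMeasurable (Eventually.of_forall fun x => by simpa using hC x)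
  exact this.congr (Eventually.of_forall fun x => mul_comm _ _)

lemma int_quad (hσ : 0 < σ) (a0 a1 a2 : ℝ) :
    Integrable (fun x => a0 + a1 * x + a2 * x ^ 2) (gmeas σ) :=
  ((integrable_const a0).add ((gmeas_integrable_id hσ).const_mul a1)).add
    ((gmeas_integrable_sq hσ).const_mul a2)

lemma int_sq_sub (hσ : 0 < σ) (c : ℝ) : Integrable (fun x => (x - c) ^ 2) (gmeas σ) :=
  (int_quad hσ (c^2) (-2*c) 1).congr (Eventually.of_forall fun x => by ring)

lemma int_T (hσ : 0 < σ) {w : ℝ → ℝ} (hw : Measurable w) (hb : ∀ x, |w x| ≤ 1) :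
    Integrable w (gmeas σ) := by
  have := int_bdd_mul hσ (integrable_const (1:ℝ)) hw 1 hb
  exact this.congr (Eventually.of_forall fun x => by simp)

lemma int_xT (hσ : 0 < σ) {w : ℝ → ℝ} (hw : Measurable w) (hb : ∀ x, |w x| ≤ 1) :
    Integrable (fun x => x * w x) (gmeas σ) :=
  int_bdd_mul hσ (gmeas_integrable_id hσ) hw 1 hb

lemma int_x2T (hσ : 0 < σ) {w : ℝ → ℝ} (hw : Measurable w) (hb : ∀ x, |w x| ≤ 1) :
    Integrable (fun x => x ^ 2 * w x) (gmeas σ) :=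
  int_bdd_mul hσ (gmeas_integrable_sq hσ) hw 1 hb

lemma int_sqsubT (hσ : 0 < σ) {w : ℝ → ℝ} (hw : Measurable w) (hb : ∀ x, |w x| ≤ 1) (c : ℝ) :
    Integrable (fun x => (x - c) ^ 2 * w x) (gmeas σ) :=
  int_bdd_mul hσ (int_sq_sub hσ c) hw 1 hb

lemma expand_integral (hσ : 0 < σ) {w : ℝ → ℝ} (hw : Measurable w) (hb : ∀ x, |w x| ≤ 1)
    (c : ℝ) :
    ∫ x, (x - c) ^ 2 * w x ∂(gmeas σ)
      = (∫ x, x ^ 2 * w x ∂(gmeas σ)) - 2 * c * (∫ x, x * w x ∂(gmeas σ))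
        + c ^ 2 * (∫ x, w x ∂(gmeas σ)) := by
  have heq : (fun x => (x - c) ^ 2 * w x)
      = fun x => (x ^ 2 * w x - 2 * c * (x * w x)) + c ^ 2 * w x := funext fun x => by ring
  have hA : Integrable (fun x => x ^ 2 * w x - 2 * c * (x * w x)) (gmeas σ) :=
    (int_x2T hσ hw hb).sub ((int_xT hσ hw hb).const_mul (2*c))
  have hB : Integrable (fun x => c ^ 2 * w x) (gmeas σ) := (int_T hσ hw hb).const_mul (c^2)
  rw [heq, integral_add hA hB,
    integral_sub (int_x2T hσ hw hb) ((int_xT hσ hw hb).const_mul (2*c)),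
    MeasureTheory.integral_const_mul, MeasureTheory.integral_const_mul]

lemma mean_min (hσ : 0 < σ) {w : ℝ → ℝ} (hw : Measurable w) (h0 : ∀ x, 0 ≤ w x)
    (h1 : ∀ x, w x ≤ 1) (c : ℝ) :
    ∫ x, (x - (∫ y, y * w y ∂(gmeas σ)) / (∫ y, w y ∂(gmeas σ))) ^ 2 * w x ∂(gmeas σ)
      ≤ ∫ x, (x - c) ^ 2 * w x ∂(gmeas σ) := by
  have hb : ∀ x, |w x| ≤ 1 := fun x => abs_le.mpr ⟨by linarith [h0 x], h1 x⟩
  set s := ∫ y, w y ∂(gmeas σ) with hs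
  set a := ∫ y, y * w y ∂(gmeas σ) with ha
  by_cases hz : s = 0
  · have hwz : w =ᶠ[ae (gmeas σ)] 0 :=
      (integral_eq_zero_iff_of_nonneg h0 (int_T hσ hw hb)).mp hz
    have hzero : ∀ d : ℝ, ∫ x, (x - d) ^ 2 * w x ∂(gmeas σ) = 0 := by
      intro d
      rw [show (0:ℝ) = ∫ x, (0:ℝ) ∂(gmeas σ) by simp]
      apply integral_congr_ae
      filter_upwards [hwz] with x hx
      simp [hx]
    rw [hzero, hzero]
  · have hspos : 0 < s := lt_of_le_of_ne (integral_nonneg h0) (Ne.symm hz)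
    rw [expand_integral hσ hw hb, expand_integral hσ hw hb]
    rw [← hs, ← ha]
    have key : a * (a / s) = (a / s) ^ 2 * s := by field_simp
    have h5 : s * (a/s - c) ^ 2 = a * (a/s) - 2 * c * a + c ^ 2 * s := by field_simp; ring
    have h6 : 0 ≤ s * (a/s - c) ^ 2 := mul_nonneg hspos.le (sq_nonneg _)
    linarith


/-- Transmission probability `π(T) = ∫ T dμ` of a randomized policy `T`. -/
def piT (σ : ℝ) (T : ℝ → ℝ) : ℝ := ∫ x, T x ∂(gmeas σ)

/-- Conditional mean of the state given a transmission is attempted: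
`m₁(T) = (∫ x T(x) dμ) / π(T)`. -/
def m1 (σ : ℝ) (T : ℝ → ℝ) : ℝ := (∫ x, x * T x ∂(gmeas σ)) / piT σ T

/-- Conditional mean of the state given no transmission is attempted:
`m₀(T) = (∫ x (1 - T(x)) dμ) / (1 - π(T))`. -/
def m0 (σ : ℝ) (T : ℝ → ℝ) : ℝ :=
  (∫ x, x * (1 - T x) ∂(gmeas σ)) / (1 - piT σ T)

/-- Expected stage cost of the optimal remote estimate under policy `T`:
`J(T) = ∫ (x - m₀(T))² (1 - T(x)) dμ + p ∫ (x - m₁(T))² T(x) dμ`. -/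
def J (σ p : ℝ) (T : ℝ → ℝ) : ℝ :=
  (∫ x, (x - m0 σ T) ^ 2 * (1 - T x) ∂(gmeas σ))
    + p * ∫ x, (x - m1 σ T) ^ 2 * T x ∂(gmeas σ)

/-- The deterministic threshold policy that transmits exactly when the observation lies
outside the interval `[τl, τu]`. -/
def thr (τl τu : ℝ) : ℝ → ℝ := fun x => if x ∈ Set.Icc τl τu then 0 else 1

/-- One-stage cost plus expected continuation cost:
`G(T) = J(T) + π(T)·K₁ + (1 - π(T))·K₀`. -/
def G (σ p K0 K1 : ℝ) (T : ℝ → ℝ) : ℝ :=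
  J σ p T + piT σ T * K1 + (1 - piT σ T) * K0

section core
variable {T : ℝ → ℝ}

lemma Tbd (h0 : ∀ x, 0 ≤ T x) (h1 : ∀ x, T x ≤ 1) : ∀ x, |T x| ≤ 1 := fun x => abs_le.mpr ⟨by linarith [h0 x], h1 x⟩

lemma oneSubT_meas (hm : Measurable T) : Measurable (fun x => 1 - T x) := measurable_const.sub hm

lemma oneSubT_bd (h0 : ∀ x, 0 ≤ T x) (h1 : ∀ x, T x ≤ 1) : ∀ x, |1 - T x| ≤ 1 := fun x => abs_le.mpr ⟨by linarith [h1 x], by linarith [h0 x]⟩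

lemma int_oneSubT (hσ : 0 < σ) (hm : Measurable T) (h0 : ∀ x, 0 ≤ T x) (h1 : ∀ x, T x ≤ 1) : ∫ x, (1 - T x) ∂(gmeas σ) = 1 - piT σ T := by
  rw [integral_sub (integrable_const 1) (int_T hσ hm (Tbd h0 h1))]
  simp [piT]

/-- the Lagrangian identity -/
lemma key_identity (hσ : 0 < σ) (hm : Measurable T) (h0 : ∀ x, 0 ≤ T x) (h1 : ∀ x, T x ≤ 1) (p K0 K1 c0 c1 : ℝ) :
    (∫ x, (x - c0) ^ 2 * (1 - T x) ∂(gmeas σ)) + p * (∫ x, (x - c1) ^ 2 * T x ∂(gmeas σ))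
      + piT σ T * K1 + (1 - piT σ T) * K0
    = (∫ x, (x - c0) ^ 2 ∂(gmeas σ)) + K0
      + ∫ x, T x * (p * (x - c1) ^ 2 + K1 - (x - c0) ^ 2 - K0) ∂(gmeas σ) := by
  have hTb := Tbd h0 h1
  have e1 : ∫ x, (x - c0) ^ 2 * (1 - T x) ∂(gmeas σ)
      = (∫ x, (x - c0) ^ 2 ∂(gmeas σ)) - ∫ x, (x - c0) ^ 2 * T x ∂(gmeas σ) := by
    rw [← integral_sub (int_sq_sub hσ c0) (int_sqsubT hσ hm hTb c0)]
    congr 1; funext x; ring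
  have e2 : ∫ x, T x * (p * (x - c1) ^ 2 + K1 - (x - c0) ^ 2 - K0) ∂(gmeas σ)
      = p * (∫ x, (x - c1) ^ 2 * T x ∂(gmeas σ)) + (K1 - K0) * (∫ x, T x ∂(gmeas σ))
        - ∫ x, (x - c0) ^ 2 * T x ∂(gmeas σ) := by
    have hA : Integrable (fun x => p * ((x - c1) ^ 2 * T x) + (K1 - K0) * T x) (gmeas σ) :=
      ((int_sqsubT hσ hm hTb c1).const_mul p).add ((int_T hσ hm hTb).const_mul (K1 - K0))
    have heq : (fun x => T x * (p * (x - c1) ^ 2 + K1 - (x - c0) ^ 2 - K0))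
        = fun x => (p * ((x - c1) ^ 2 * T x) + (K1 - K0) * T x) - (x - c0) ^ 2 * T x :=
      funext fun x => by ring
    rw [heq, integral_sub hA (int_sqsubT hσ hm hTb c0),
      integral_add (((int_sqsubT hσ hm hTb c1)).const_mul p) ((int_T hσ hm hTb).const_mul (K1 - K0)),
      MeasureTheory.integral_const_mul, MeasureTheory.integral_const_mul]
  rw [e1, e2, piT]
  ring

/-- `m₀/m₁` are optimal constants -/
lemma G_le_F (hσ : 0 < σ) (hm : Measurable T) (h0 : ∀ x, 0 ≤ T x) (h1 : ∀ x, T x ≤ 1) (p K0 K1 c0 c1 : ℝ) (hp0 : 0 ≤ p) :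
    G σ p K0 K1 T ≤ (∫ x, (x - c0) ^ 2 * (1 - T x) ∂(gmeas σ))
      + p * (∫ x, (x - c1) ^ 2 * T x ∂(gmeas σ))
      + piT σ T * K1 + (1 - piT σ T) * K0 := by
  have hw0 : ∀ x, 0 ≤ 1 - T x := fun x => by linarith [h1 x]
  have hw1 : ∀ x, 1 - T x ≤ 1 := fun x => by linarith [h0 x]
  have hA : ∫ x, (x - m0 σ T) ^ 2 * (1 - T x) ∂(gmeas σ)
      ≤ ∫ x, (x - c0) ^ 2 * (1 - T x) ∂(gmeas σ) := by
    have h := mean_min hσ (oneSubT_meas hm) hw0 hw1 c0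
    have hden : (∫ y, (1 - T y) ∂(gmeas σ)) = 1 - piT σ T := int_oneSubT hσ hm h0 h1
    rw [hden] at h
    simpa [m0] using h
  have hB : ∫ x, (x - m1 σ T) ^ 2 * T x ∂(gmeas σ) ≤ ∫ x, (x - c1) ^ 2 * T x ∂(gmeas σ) := by
    have h := mean_min hσ hm h0 h1 c1
    simpa [m1, piT] using h
  have := mul_le_mul_of_nonneg_left hB hp0
  simp only [G, J]
  linarith

end core

lemma thr_meas (τl τu : ℝ) : Measurable (thr τl τu) :=
  Measurable.ite measurableSet_Icc measurable_const measurable_const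

lemma thr_nonneg (τl τu : ℝ) : ∀ x, 0 ≤ thr τl τu x := by
  intro x; rw [thr]; split <;> norm_num

lemma thr_le_one (τl τu : ℝ) : ∀ x, thr τl τu x ≤ 1 := by
  intro x; rw [thr]; split <;> norm_num

lemma quad_between {A B C x y z : ℝ} (hA : A ≤ 0) (hxz : x ≤ z) (hzy : z ≤ y)
    (hx : 0 ≤ A*x^2 + B*x + C) (hy : 0 ≤ A*y^2 + B*y + C) : 0 ≤ A*z^2 + B*z + C := by
  rcases eq_or_lt_of_le (hxz.trans hzy) with h | h
  · have hzx : z = x := le_antisymm (h ▸ hzy) hxz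
    subst hzx; exact hx
  · nlinarith [mul_nonneg hx (sub_nonneg.mpr hzy), mul_nonneg hy (sub_nonneg.mpr hxz),
      mul_nonneg (mul_nonneg (mul_nonneg (neg_nonneg.mpr hA) (sub_nonneg.mpr hxz))
        (sub_nonneg.mpr hzy)) (sub_nonneg.mpr (hxz.trans hzy))]

lemma hard_step {σ p K0 K1 : ℝ} (hσ : 0 < σ) (hp0 : 0 ≤ p) (hp1 : p ≤ 1)
    {T : ℝ → ℝ} (hm : Measurable T) (h0 : ∀ x, 0 ≤ T x) (h1 : ∀ x, T x ≤ 1)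
    {ε : ℝ} (hε : 0 < ε) :
    ∃ τl τu : ℝ, τl ≤ τu ∧ G σ p K0 K1 (thr τl τu) ≤ G σ p K0 K1 T + ε := by
  set c0 := m0 σ T with hc0
  set c1 := m1 σ T with hc1
  set φ : ℝ → ℝ := fun x => p * (x - c1) ^ 2 + K1 - (x - c0) ^ 2 - K0 with hφ
  have hφcont : Continuous φ := by rw [hφ]; continuity
  have hφmeas : Measurable φ := hφcont.measurable
  have hφint : Integrable φ (gmeas σ) := by
    refine (int_quad hσ (p*c1^2 + K1 - c0^2 - K0) (-2*p*c1 + 2*c0) (p - 1)).congr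
      (Eventually.of_forall fun x => ?_)
    rw [hφ]; ring
  have hGT : G σ p K0 K1 T
      = (∫ x, (x - c0) ^ 2 ∂(gmeas σ)) + K0 + ∫ x, T x * φ x ∂(gmeas σ) := by
    have h := key_identity hσ hm h0 h1 p K0 K1 c0 c1
    simp only [G, J, ← hc0, ← hc1, ← hφ] at h ⊢
    linarith [h]
  have hTφint : Integrable (fun x => T x * φ x) (gmeas σ) :=
    (int_bdd_mul hσ hφint hm 1 (Tbd h0 h1)).congr
      (Eventually.of_forall fun x => mul_comm _ _)
  -- final assembly given a good threshold
  have assemble : ∀ τl τu : ℝ, τl ≤ τu →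
      (∫ x, thr τl τu x * φ x ∂(gmeas σ)) ≤ (∫ x, T x * φ x ∂(gmeas σ)) + ε →
      G σ p K0 K1 (thr τl τu) ≤ G σ p K0 K1 T + ε := by
    intro τl τu hle hint
    have step1 := G_le_F hσ (thr_meas τl τu) (thr_nonneg τl τu) (thr_le_one τl τu)
      p K0 K1 c0 c1 hp0
    have step2 := key_identity hσ (thr_meas τl τu) (thr_nonneg τl τu) (thr_le_one τl τu)
      p K0 K1 c0 c1
    have eφ : ∀ x, p * (x - c1) ^ 2 + K1 - (x - c0) ^ 2 - K0 = φ x := fun x => rfl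
    simp only [eφ] at step2
    rw [hGT]
    linarith [step1, step2, hint]
  set D : Set ℝ := {x | 0 ≤ φ x} with hD
  by_cases hDne : D.Nonempty
  · obtain ⟨c, hc⟩ := hDne
    have hDclosed : IsClosed D := isClosed_le continuous_const hφcont
    -- the approximating intervals
    have hkey : ∀ n : ℕ, ∃ τl τu : ℝ, τl ≤ τu ∧
        (∫ x, thr τl τu x * φ x ∂(gmeas σ)) ≤ (∫ x, T x * φ x ∂(gmeas σ))
          + ∫ x, |φ x| * thr (c - n) (c + n) x ∂(gmeas σ) := by
      intro n
      set E : Set ℝ := D ∩ Set.Icc (c - n) (c + n) with hE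
      have hEc : IsCompact E := isCompact_Icc.inter_left hDclosed
      have hcE : c ∈ E := ⟨hc, by constructor <;> simp [Nat.cast_nonneg] <;> linarith [Nat.cast_nonneg (α := ℝ) n]⟩
      have hEne : E.Nonempty := ⟨c, hcE⟩
      have hthrbd : ∀ (a b : ℝ), ∀ x, |thr a b x| ≤ 1 :=
        fun a b x => abs_le.mpr ⟨by linarith [thr_nonneg a b x], thr_le_one a b x⟩
      refine ⟨sInf E, sSup E, csInf_le_csSup hEne hEc.bddBelow hEc.bddAbove, ?_⟩
      have hsub : Set.Icc (sInf E) (sSup E) ⊆ D := by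
        intro z hz
        have hxm := (hEc.sInf_mem hEne).1
        have hym := (hEc.sSup_mem hEne).1
        have hrepr : ∀ t : ℝ, φ t
            = (p-1)*t^2 + (2*c0 - 2*p*c1)*t + (p*c1^2 - c0^2 + K1 - K0) := fun t => by
          rw [hφ]; ring
        have h1' : (0:ℝ) ≤ φ (sInf E) := hxm
        have h2' : (0:ℝ) ≤ φ (sSup E) := hym
        show (0:ℝ) ≤ φ z
        rw [hrepr] at h1' h2' ⊢
        exact quad_between (by linarith) hz.1 hz.2 h1' h2'
      have hcover : ∀ x, x ∈ D → x ∈ Set.Icc (c - n) (c + n) →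
          x ∈ Set.Icc (sInf E) (sSup E) := fun x hxD hxI =>
        ⟨csInf_le hEc.bddBelow ⟨hxD, hxI⟩, le_csSup hEc.bddAbove ⟨hxD, hxI⟩⟩
      have hpt : ∀ x, thr (sInf E) (sSup E) x * φ x
          ≤ T x * φ x + |φ x| * thr (c - n) (c + n) x := by
        intro x
        have hFn : 0 ≤ |φ x| * thr (c - n) (c + n) x :=
          mul_nonneg (abs_nonneg _) (thr_nonneg _ _ x)
        by_cases hx : x ∈ Set.Icc (sInf E) (sSup E)
        · have hz : thr (sInf E) (sSup E) x = 0 := by rw [thr]; simp [hx]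
          rw [hz, zero_mul]
          have hφx : 0 ≤ φ x := hsub hx
          have := mul_nonneg (h0 x) hφx
          linarith
        · have hthr1 : thr (sInf E) (sSup E) x = 1 := by rw [thr]; simp [hx]
          rw [hthr1, one_mul]
          by_cases hφx : 0 ≤ φ x
          · have hnx : x ∉ Set.Icc (c - (n:ℝ)) (c + n) := fun hmem => hx (hcover x hφx hmem)
            have hz : thr (c - (n:ℝ)) (c + n) x = 1 := by rw [thr]; simp [hnx]
            rw [hz, mul_one, abs_of_nonneg hφx]
            have := mul_nonneg (h0 x) hφx
            linarith
          · push_neg at hφx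
            have hkey2 : 0 ≤ (T x - 1) * φ x := by nlinarith [h1 x]
            nlinarith
      have hthrφint : Integrable (fun x => thr (sInf E) (sSup E) x * φ x) (gmeas σ) :=
        (int_bdd_mul hσ hφint (thr_meas _ _) 1 (hthrbd _ _)).congr
          (Eventually.of_forall fun x => mul_comm _ _)
      have hFnint : Integrable (fun x => |φ x| * thr (c - n) (c + n) x) (gmeas σ) :=
        int_bdd_mul hσ hφint.abs (thr_meas _ _) 1 (hthrbd _ _)
      calc ∫ x, thr (sInf E) (sSup E) x * φ x ∂(gmeas σ)
          ≤ ∫ x, (T x * φ x + |φ x| * thr (c - n) (c + n) x) ∂(gmeas σ) :=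
            integral_mono hthrφint (hTφint.add hFnint) hpt
        _ = _ := integral_add hTφint hFnint
    -- dominated convergence
    have hdct : Tendsto (fun n : ℕ => ∫ x, |φ x| * thr (c - n) (c + n) x ∂(gmeas σ))
        atTop (nhds 0) := by
      have h := tendsto_integral_of_dominated_convergence (μ := gmeas σ)
        (F := fun n x => |φ x| * thr (c - n) (c + n) x) (f := fun _ => (0:ℝ))
        (fun x => |φ x|)
        (fun n => ((hφmeas.abs).mul (thr_meas _ _)).aestronglyMeasurable)
        hφint.abs
        (fun n => Eventually.of_forall fun x => by
          rw [Real.norm_eq_abs, abs_mul, abs_abs, abs_of_nonneg (thr_nonneg _ _ x)]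
          calc |φ x| * thr (c - n) (c + n) x ≤ |φ x| * 1 :=
                mul_le_mul_of_nonneg_left (thr_le_one _ _ x) (abs_nonneg _)
            _ = |φ x| := mul_one _)
        (Eventually.of_forall fun a => by
          have hev : ∀ᶠ n : ℕ in atTop, |φ a| * thr (c - n) (c + n) a = 0 := by
            obtain ⟨N, hN⟩ := exists_nat_ge (|a - c|)
            filter_upwards [eventually_ge_atTop N] with n hn
            have habs : |a - c| ≤ (n : ℝ) := hN.trans (by exact_mod_cast hn)
            have hmem : a ∈ Set.Icc (c - (n:ℝ)) (c + n) := by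
              rw [abs_le] at habs
              constructor <;> linarith [habs.1, habs.2]
            have : thr (c - (n:ℝ)) (c + n) a = 0 := by rw [thr]; simp [hmem]
            rw [this, mul_zero]
          exact Tendsto.congr' (hev.mono fun n hn => hn.symm) tendsto_const_nhds)
      simpa using h
    obtain ⟨n, hn⟩ := (hdct.eventually (gt_mem_nhds hε)).exists
    obtain ⟨τl, τu, hle, hint⟩ := hkey n
    exact ⟨τl, τu, hle, assemble τl τu hle (hint.trans (by linarith))⟩
  · -- φ is everywhere negative: transmit (a.e.) always
    have hneg : ∀ x, φ x < 0 := by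
      intro x
      by_contra hcon
      exact hDne ⟨x, not_lt.mp hcon⟩
    refine ⟨0, 0, le_refl 0, assemble 0 0 (le_refl 0) ?_⟩
    have hthrbd : ∀ x, |thr 0 0 x| ≤ 1 :=
      fun x => abs_le.mpr ⟨by linarith [thr_nonneg 0 0 x], thr_le_one 0 0 x⟩
    have hthrφint : Integrable (fun x => thr 0 0 x * φ x) (gmeas σ) :=
      (int_bdd_mul hσ hφint (thr_meas _ _) 1 hthrbd).congr
        (Eventually.of_forall fun x => mul_comm _ _)
    have hae : ∀ᵐ x ∂(gmeas σ), x ≠ (0:ℝ) := by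
      rw [ae_iff]
      convert gmeas_null_singleton hσ 0 using 2
      ext x
      simp
    have hmono : ∫ x, thr 0 0 x * φ x ∂(gmeas σ) ≤ ∫ x, T x * φ x ∂(gmeas σ) := by
      refine integral_mono_ae hthrφint hTφint ?_
      filter_upwards [hae] with x hx
      have hnx : x ∉ Set.Icc (0:ℝ) 0 := by simp [hx]
      have hz : thr 0 0 x = 1 := by rw [thr]; simp only [if_neg hnx]
      rw [hz, one_mul]
      nlinarith [h1 x, hneg x]
    linarith

lemma piT_const (σ c : ℝ) : piT σ (fun _ => c) = c := by
  simp [piT]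

lemma gmeas_ae_ne (hσ : 0 < σ) (τ : ℝ) : ∀ᵐ x ∂(gmeas σ), x ≠ τ := by
  rw [ae_iff]
  convert gmeas_null_singleton hσ τ using 2
  ext x
  simp

lemma G_const (hσ : 0 < σ) (p K0 K1 c : ℝ) :
    G σ p K0 K1 (fun _ => c) = (1 - c) * σ ^ 2 + p * (c * σ ^ 2) + c * K1 + (1 - c) * K0 := by
  have hpi : piT σ (fun _ : ℝ => c) = c := piT_const σ c
  have hm1 : m1 σ (fun _ => c) = 0 := by
    rw [m1]
    have : ∫ x, x * c ∂(gmeas σ) = 0 := by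
      rw [MeasureTheory.integral_mul_const, gmeas_moment1 hσ, zero_mul]
    rw [this, zero_div]
  have hm0 : m0 σ (fun _ => c) = 0 := by
    rw [m0]
    have : ∫ x, x * (1 - c) ∂(gmeas σ) = 0 := by
      rw [MeasureTheory.integral_mul_const, gmeas_moment1 hσ, zero_mul]
    rw [this, zero_div]
  have hJ : J σ p (fun _ => c) = σ ^ 2 * (1 - c) + p * (σ ^ 2 * c) := by
    rw [J, hm0, hm1]
    have e1 : ∫ x, (x - 0) ^ 2 * (1 - c) ∂(gmeas σ) = σ ^ 2 * (1 - c) := by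
      simp only [sub_zero]
      rw [MeasureTheory.integral_mul_const, gmeas_moment2 hσ]
    have e2 : ∫ x, (x - 0) ^ 2 * c ∂(gmeas σ) = σ ^ 2 * c := by
      simp only [sub_zero]
      rw [MeasureTheory.integral_mul_const, gmeas_moment2 hσ]
    rw [e1, e2]
  rw [G, hJ, hpi]
  ring

lemma G_thr_deg (hσ : 0 < σ) (p K0 K1 τ : ℝ) :
    G σ p K0 K1 (thr τ τ) = p * σ ^ 2 + K1 := by
  have hae : ∀ᵐ x ∂(gmeas σ), thr τ τ x = 1 := by
    filter_upwards [gmeas_ae_ne hσ τ] with x hx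
    rw [thr]
    have : x ∉ Set.Icc τ τ := by simp [hx]
    simp only [if_neg this]
  have hpi : piT σ (thr τ τ) = 1 := by
    rw [piT]
    rw [integral_congr_ae (g := fun _ => (1:ℝ)) (hae.mono fun x hx => hx)]
    simp
  have hm1 : m1 σ (thr τ τ) = 0 := by
    rw [m1, hpi]
    have : ∫ x, x * thr τ τ x ∂(gmeas σ) = 0 := by
      rw [integral_congr_ae (g := fun x => x) (hae.mono fun x hx => by rw [hx, mul_one])]
      exact gmeas_moment1 hσ
    rw [this, zero_div]
  have hm0 : m0 σ (thr τ τ) = 0 := by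
    rw [m0, hpi]
    simp
  have hJ : J σ p (thr τ τ) = p * σ ^ 2 := by
    rw [J, hm0, hm1]
    have e1 : ∫ x, (x - 0) ^ 2 * (1 - thr τ τ x) ∂(gmeas σ) = 0 := by
      rw [integral_congr_ae (g := fun _ => (0:ℝ))
        (hae.mono fun x hx => by rw [hx]; ring)]
      simp
    have e2 : ∫ x, (x - 0) ^ 2 * thr τ τ x ∂(gmeas σ) = σ ^ 2 := by
      rw [integral_congr_ae (g := fun x => x ^ 2)
        (hae.mono fun x hx => by rw [hx]; ring)]
      exact gmeas_moment2 hσ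
    rw [e1, e2]
    ring
  rw [G, hJ, hpi]
  ring

lemma piT_thr (hσ : 0 < σ) (τl τu : ℝ) :
    piT σ (thr τl τu) = 1 - ((gmeas σ) (Set.Icc τl τu)).toReal := by
  have heq : thr τl τu = fun x => 1 - Set.indicator (Set.Icc τl τu) (fun _ => (1:ℝ)) x := by
    funext x
    rw [thr]
    by_cases hx : x ∈ Set.Icc τl τu <;> simp [hx]
  rw [piT, heq]
  rw [integral_sub (integrable_const 1)
    ((integrable_const (1:ℝ)).indicator measurableSet_Icc)]
  rw [integral_indicator_const _ measurableSet_Icc]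
  simp
  rfl

lemma piT_thr_pos (hσ : 0 < σ) {τl τu : ℝ} (h : τl < τu) :
    0 < piT σ (thr τl τu) ∧ piT σ (thr τl τu) < 1 := by
  rw [piT_thr hσ]
  have h1 : ((gmeas σ) (Set.Icc τl τu)).toReal < 1 := by
    have := gmeas_Icc_lt_one hσ τl τu
    have hfin : (gmeas σ) (Set.Icc τl τu) ≠ ⊤ := measure_ne_top _ _
    rw [show (1:ℝ) = (1 : ENNReal).toReal by simp]
    exact ENNReal.toReal_lt_toReal hfin (by simp) |>.mpr this
  have h2 : 0 < ((gmeas σ) (Set.Icc τl τu)).toReal :=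
    ENNReal.toReal_pos (gmeas_Icc_pos hσ h).ne' (measure_ne_top _ _)
  constructor <;> linarith

lemma G_nonneg (hσ : 0 < σ) {T : ℝ → ℝ} (hm : Measurable T) (h0 : ∀ x, 0 ≤ T x)
    (h1 : ∀ x, T x ≤ 1) {p K0 K1 : ℝ} (hp0 : 0 ≤ p) (hK0 : 0 ≤ K0) (hK1 : 0 ≤ K1) :
    0 ≤ G σ p K0 K1 T := by
  have hpi0 : 0 ≤ piT σ T := integral_nonneg h0
  have hpi1 : piT σ T ≤ 1 := by
    rw [piT]
    calc ∫ x, T x ∂(gmeas σ) ≤ ∫ _, (1:ℝ) ∂(gmeas σ) :=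
          integral_mono (int_T hσ hm (Tbd h0 h1)) (integrable_const 1) h1
      _ = 1 := by simp
  have hJ : 0 ≤ J σ p T := by
    rw [J]
    have e1 : 0 ≤ ∫ x, (x - m0 σ T) ^ 2 * (1 - T x) ∂(gmeas σ) :=
      integral_nonneg fun x => mul_nonneg (sq_nonneg _) (by linarith [h1 x])
    have e2 : 0 ≤ ∫ x, (x - m1 σ T) ^ 2 * T x ∂(gmeas σ) :=
      integral_nonneg fun x => mul_nonneg (sq_nonneg _) (h0 x)
    positivity
  rw [G]
  have : 0 ≤ piT σ T * K1 := mul_nonneg hpi0 hK1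
  have : 0 ≤ (1 - piT σ T) * K0 := mul_nonneg (by linarith) hK0
  positivity

/-- the infimum of `G` over all randomized policies with nondegenerate
transmission probability equals the infimum of `G` over threshold policies; i.e. the optimal
transmission policy at each stage of the dynamic program is of the threshold type. -/
theorem stmt6 (σ p : ℝ) (hσ : 0 < σ) (hp0 : 0 ≤ p) (hp1 : p ≤ 1)
    (K0 K1 : ℝ) (hK0 : 0 ≤ K0) (hK1 : 0 ≤ K1) :
    sInf {z : ℝ | ∃ T : ℝ → ℝ, Measurable T ∧ (∀ x, 0 ≤ T x ∧ T x ≤ 1) ∧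
        0 < piT σ T ∧ piT σ T < 1 ∧ z = G σ p K0 K1 T}
      = sInf {z : ℝ | ∃ τl τu : ℝ, τl ≤ τu ∧ z = G σ p K0 K1 (thr τl τu)} := by
  have hbl : BddBelow {z : ℝ | ∃ T : ℝ → ℝ, Measurable T ∧ (∀ x, 0 ≤ T x ∧ T x ≤ 1) ∧
      0 < piT σ T ∧ piT σ T < 1 ∧ z = G σ p K0 K1 T} := by
    refine ⟨0, ?_⟩
    rintro z ⟨T, hm, hb, _, _, rfl⟩
    exact G_nonneg hσ hm (fun x => (hb x).1) (fun x => (hb x).2) hp0 hK0 hK1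
  have hbr : BddBelow {z : ℝ | ∃ τl τu : ℝ, τl ≤ τu ∧ z = G σ p K0 K1 (thr τl τu)} := by
    refine ⟨0, ?_⟩
    rintro z ⟨a, b, _, rfl⟩
    exact G_nonneg hσ (thr_meas a b) (thr_nonneg a b) (thr_le_one a b) hp0 hK0 hK1
  have hln : {z : ℝ | ∃ T : ℝ → ℝ, Measurable T ∧ (∀ x, 0 ≤ T x ∧ T x ≤ 1) ∧
      0 < piT σ T ∧ piT σ T < 1 ∧ z = G σ p K0 K1 T}.Nonempty := by
    refine ⟨G σ p K0 K1 (fun _ => (1/2 : ℝ)), fun _ => (1/2 : ℝ), measurable_const,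
      fun x => ⟨by norm_num, by norm_num⟩, ?_, ?_, rfl⟩
    · rw [piT_const]; norm_num
    · rw [piT_const]; norm_num
  have hrn : {z : ℝ | ∃ τl τu : ℝ, τl ≤ τu ∧ z = G σ p K0 K1 (thr τl τu)}.Nonempty :=
    ⟨G σ p K0 K1 (thr 0 1), 0, 1, by norm_num, rfl⟩
  apply le_antisymm
  · refine le_csInf hrn ?_
    rintro z ⟨τl, τu, hle, rfl⟩
    rcases eq_or_lt_of_le hle with heq | hlt
    · rw [← heq, G_thr_deg hσ p K0 K1 τl]
      refine le_of_forall_pos_le_add fun ε hε => ?_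
      set B := (1 - p) * σ ^ 2 + K0 with hB
      have hBnn : 0 ≤ B := by nlinarith [sq_nonneg σ]
      set c := max (1/2 : ℝ) (1 - ε / (B + 1)) with hc
      have hc0 : 0 < c := lt_of_lt_of_le (by norm_num) (le_max_left _ _)
      have hc1 : c < 1 := by
        apply max_lt (by norm_num)
        have : 0 < ε / (B + 1) := div_pos hε (by linarith)
        linarith
      have hmem : G σ p K0 K1 (fun _ => c) ∈ {z : ℝ | ∃ T : ℝ → ℝ, Measurable T ∧
          (∀ x, 0 ≤ T x ∧ T x ≤ 1) ∧ 0 < piT σ T ∧ piT σ T < 1 ∧ z = G σ p K0 K1 T} := by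
        refine ⟨fun _ => c, measurable_const, fun x => ⟨hc0.le, hc1.le⟩, ?_, ?_, rfl⟩
        · rw [piT_const]; exact hc0
        · rw [piT_const]; exact hc1
      have hval : G σ p K0 K1 (fun _ => c) ≤ p * σ ^ 2 + K1 + ε := by
        rw [G_const hσ]
        have h1c : 1 - c ≤ ε / (B + 1) := by
          have := le_max_right (1/2 : ℝ) (1 - ε / (B + 1))
          linarith
        have h1cn : 0 ≤ 1 - c := by linarith
        have key : (1 - c) * B ≤ ε := by
          calc (1 - c) * B ≤ (ε / (B + 1)) * B := mul_le_mul_of_nonneg_right h1c hBnn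
            _ ≤ ε := by
              rw [div_mul_eq_mul_div, div_le_iff₀ (by linarith : (0:ℝ) < B + 1)]
              nlinarith
        have hK1c : 0 ≤ (1 - c) * K1 := mul_nonneg h1cn hK1
        have hid : (1 - c) * σ ^ 2 + p * (c * σ ^ 2) + c * K1 + (1 - c) * K0
            = p * σ ^ 2 + K1 + (1 - c) * B - (1 - c) * K1 := by rw [hB]; ring
        linarith
      exact (csInf_le hbl hmem).trans hval
    · exact csInf_le hbl ⟨thr τl τu, thr_meas _ _,
        fun x => ⟨thr_nonneg _ _ x, thr_le_one _ _ x⟩,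
        (piT_thr_pos hσ hlt).1, (piT_thr_pos hσ hlt).2, rfl⟩
  · refine le_csInf hln ?_
    rintro z ⟨T, hm, hb, _, _, rfl⟩
    refine le_of_forall_pos_le_add fun ε hε => ?_
    obtain ⟨τl, τu, hle, hG⟩ :=
      hard_step hσ hp0 hp1 hm (fun x => (hb x).1) (fun x => (hb x).2) hε
    exact (csInf_le hbr ⟨τl, τu, hle, rfl⟩).trans hG
end
end

section
/- Let (Ω, ℱ, ℙ) be a probability space, X : Ω → ℝ square-integrable, R : Ω → {0,1} measurable with 0 < ℙ(R = 1) < 1, and C : Ω → {0,1} measurable, independent of the pair (X, R), with ℙ(C = 0) = p. For r ∈ {0,1} let m_r = E[X·1_{R=r}] / ℙ(R = r), and define the remote estimate X̂ = X on the event {R·C = 1} and X̂ = m_R on its complement. Then E[(X − X̂)²] = E[(X − m₀)²·1_{R=0}] + p·E[(X − m₁)²·1_{R=1}]. In particular, the expected stage cost depends on the channel only through the drop probability p of the current channel state. -/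
open MeasureTheory ProbabilityTheory

/-- Remark: the expected stage cost depends on the channel only through the
drop probability `p`. `X` is the state, `R` the decision to attempt a transmission, `C`
indicates an attempted transmission is not dropped; `C` is independent of `(X,R)` with
`P(C = 0) = p`. The remote estimate is `X̂ = X` on `{R C = 1}` and `X̂ = m_R` otherwise, where
`m_r = E[X·1_{R=r}] / P(R=r)`. Then
`E[(X - X̂)²] = E[(X - m₀)² 1_{R=0}] + p·E[(X - m₁)² 1_{R=1}]`. -/
theorem stmt7 {Ω : Type*} [MeasurableSpace Ω] (P : Measure Ω) [IsProbabilityMeasure P]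
    (X : Ω → ℝ) (R C : Ω → Bool) (p : ℝ)
    (hX : MemLp X 2 P) (hR : Measurable R) (hC : Measurable C)
    (hR0 : 0 < P {ω | R ω = true}) (hR1 : P {ω | R ω = true} < 1)
    (hindep : IndepFun (fun ω => (X ω, R ω)) C P)
    (hp : (P {ω | C ω = false}).toReal = p)
    (m : Bool → ℝ)
    (hm : ∀ r, m r = (∫ ω, X ω * (if R ω = r then 1 else 0) ∂P)
                        / (P {ω | R ω = r}).toReal)
    (Xhat : Ω → ℝ)
    (hXhat : ∀ ω, Xhat ω = if R ω = true ∧ C ω = true then X ω else m (R ω)) :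
    ∫ ω, (X ω - Xhat ω) ^ 2 ∂P
      = (∫ ω, (X ω - m false) ^ 2 * (if R ω = false then 1 else 0) ∂P)
        + p * ∫ ω, (X ω - m true) ^ 2 * (if R ω = true then 1 else 0) ∂P := by
  set a : Ω → ℝ := fun ω => (X ω - m false) ^ 2 * (if R ω = false then 1 else 0) with ha_def
  set f : Ω → ℝ := fun ω => (X ω - m true) ^ 2 * (if R ω = true then 1 else 0) with hf_def
  set g : Ω → ℝ := fun ω => (if C ω = false then 1 else 0) with hg_def
  -- indicator representations
  have haind : a = Set.indicator {ω | R ω = false} (fun ω => (X ω - m false) ^ 2) := by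
    funext ω
    by_cases h : R ω = false <;> simp [ha_def, Set.indicator_apply, h]
  have hfind : f = Set.indicator {ω | R ω = true} (fun ω => (X ω - m true) ^ 2) := by
    funext ω
    by_cases h : R ω = true <;> simp [hf_def, Set.indicator_apply, h]
  have hsq : ∀ c : ℝ, Integrable (fun ω => (X ω - c) ^ 2) P := fun c =>
    (hX.sub (memLp_const c)).integrable_sq
  have hRfalse : MeasurableSet {ω | R ω = false} := hR (measurableSet_singleton false)
  have hRtrue : MeasurableSet {ω | R ω = true} := hR (measurableSet_singleton true)
  have ha : Integrable a P := by
    rw [haind]; exact (hsq (m false)).indicator hRfalse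
  have hf : Integrable f P := by
    rw [hfind]; exact (hsq (m true)).indicator hRtrue
  have hg : Integrable g P := by
    have : g = Set.indicator {ω | C ω = false} (fun _ => (1:ℝ)) := by
      funext ω; by_cases h : C ω = false <;> simp [hg_def, Set.indicator_apply, h]
    rw [this]
    exact (integrable_const 1).indicator (hC (measurableSet_singleton false))
  -- pointwise decomposition
  have hpt : ∀ ω, (X ω - Xhat ω) ^ 2 = a ω + f ω * g ω := by
    intro ω
    cases hr : R ω <;> cases hc : C ω <;>
      simp [hXhat ω, ha_def, hf_def, hg_def, hr, hc]
  -- independence of f and g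
  have hfg : IndepFun f g P := by
    have hψ' : Measurable fun b : Bool => (if b = true then (1:ℝ) else 0) := measurable_from_top
    have hφ : Measurable fun q : ℝ × Bool => (q.1 - m true) ^ 2 * (if q.2 = true then (1:ℝ) else 0) :=
      ((measurable_fst.sub measurable_const).pow measurable_const).mul (hψ'.comp measurable_snd)
    have hψ : Measurable fun b : Bool => (if b = false then (1:ℝ) else 0) := measurable_from_top
    exact hindep.comp hφ hψ
  have hfmul : Integrable (fun ω => f ω * g ω) P := by
    have : (fun ω => f ω * g ω) = Set.indicator {ω | C ω = false} f := by
      funext ω; by_cases h : C ω = false <;> simp [hg_def, Set.indicator_apply, h]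
    rw [this]
    exact hf.indicator (hC (measurableSet_singleton false))
  have hgint : ∫ ω, g ω ∂P = p := by
    have : g = Set.indicator {ω | C ω = false} (fun _ => (1:ℝ)) := by
      funext ω; by_cases h : C ω = false <;> simp [hg_def, Set.indicator_apply, h]
    have hCset : MeasurableSet {ω | C ω = false} := hC (measurableSet_singleton false)
    rw [this, integral_indicator hCset]
    simp [hp]
    exact hp
  calc ∫ ω, (X ω - Xhat ω) ^ 2 ∂P
      = ∫ ω, (a ω + f ω * g ω) ∂P := by
        exact integral_congr_ae (Filter.Eventually.of_forall hpt)
    _ = (∫ ω, a ω ∂P) + ∫ ω, f ω * g ω ∂P := integral_add ha hfmul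
    _ = (∫ ω, a ω ∂P) + (∫ ω, f ω ∂P) * ∫ ω, g ω ∂P := by
        have h := hfg.integral_mul_eq_mul_integral hf.aestronglyMeasurable hg.aestronglyMeasurable
        rw [show f * g = fun ω => f ω * g ω from rfl] at h
        rw [h]
    _ = (∫ ω, a ω ∂P) + p * ∫ ω, f ω ∂P := by rw [hgint]; ring
end

section
/- Let m ∈ ℝ and let μ be a finite Borel measure on ℝ that is invariant under the reflection x ↦ 2m − x, with ∫ |x| dμ(x) < ∞. Let T : ℝ → [0,1] be Borel measurable and symmetric about m, i.e., T(2m − x) = T(x) for all x. If ∫ T dμ > 0, then (∫ x·T(x) dμ(x)) / (∫ T dμ) = m; likewise, if ∫ (1 − T) dμ > 0, then (∫ x·(1 − T(x)) dμ(x)) / (∫ (1 − T) dμ) = m. Consequently, under a symmetric transmission policy the optimal remote estimate after an unsuccessful reception is the same whether or not a transmission was attempted, so the estimation error evolves as E_{n+1} = a·E_n + W_n when no packet is received and E_{n+1} = 0 when a packet is received. -/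
open MeasureTheory

lemma aux_key (m : ℝ) (μ : Measure ℝ) [IsFiniteMeasure μ]
    (hrefl : Measure.map (fun x : ℝ => 2 * m - x) μ = μ)
    (hint : Integrable (fun x : ℝ => |x|) μ)
    (f : ℝ → ℝ) (hf : Measurable f) (hf1 : ∀ x, |f x| ≤ 1)
    (hfsym : ∀ x, f (2 * m - x) = f x) :
    ∫ x, x * f x ∂μ = m * ∫ x, f x ∂μ := by
  have hφ : Measurable (fun x : ℝ => 2 * m - x) := by fun_prop
  have hfint : Integrable f μ := by
    apply (integrable_const (1 : ℝ)).mono hf.aestronglyMeasurable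
    filter_upwards with x
    simpa using hf1 x
  have hxf : Integrable (fun x => x * f x) μ := by
    apply hint.mono (measurable_id.mul hf).aestronglyMeasurable
    filter_upwards with x
    simp only [Pi.mul_apply, id_eq, norm_mul, Real.norm_eq_abs, abs_mul, abs_abs]
    calc |x| * |f x| ≤ |x| * 1 := by
          exact mul_le_mul_of_nonneg_left (hf1 x) (abs_nonneg x)
      _ = |x| := mul_one _
  have hmap : ∫ x, x * f x ∂μ = ∫ x, (2 * m - x) * f x ∂μ := by
    conv_lhs => rw [← hrefl]
    rw [integral_map (f := fun x : ℝ => x * f x) hφ.aemeasurable (measurable_id.mul hf).aestronglyMeasurable]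
    simp only [hfsym]
  have hsplit : ∫ x, (2 * m - x) * f x ∂μ
      = 2 * m * ∫ x, f x ∂μ - ∫ x, x * f x ∂μ := by
    have : (fun x => (2 * m - x) * f x) = fun x => 2 * m * f x - x * f x := by
      funext x; ring
    rw [this, integral_sub (hfint.const_mul (2 * m)) hxf, integral_const_mul]
  rw [hsplit] at hmap
  linarith

/-- Lemma: under a symmetric policy, both conditional means equal the center
of symmetry. Let `μ` be a finite Borel measure on `ℝ`, invariant under the reflection
`x ↦ 2m - x` and with `∫ |x| dμ < ∞`, and let `T : ℝ → [0,1]` be Borel measurable and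
symmetric about `m`. If `∫ T dμ > 0` then `(∫ x T(x) dμ) / (∫ T dμ) = m`, and if
`∫ (1 - T) dμ > 0` then `(∫ x (1 - T(x)) dμ) / (∫ (1 - T) dμ) = m`. -/
theorem stmt8 (m : ℝ) (μ : Measure ℝ) [IsFiniteMeasure μ]
    (hrefl : Measure.map (fun x : ℝ => 2 * m - x) μ = μ)
    (hint : Integrable (fun x : ℝ => |x|) μ)
    (T : ℝ → ℝ) (hT : Measurable T) (hT01 : ∀ x, 0 ≤ T x ∧ T x ≤ 1)
    (hTsym : ∀ x, T (2 * m - x) = T x) :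
    (0 < ∫ x, T x ∂μ → (∫ x, x * T x ∂μ) / (∫ x, T x ∂μ) = m) ∧
    (0 < ∫ x, (1 - T x) ∂μ →
      (∫ x, x * (1 - T x) ∂μ) / (∫ x, (1 - T x) ∂μ) = m) := by
  have h1 := aux_key m μ hrefl hint T hT
    (fun x => abs_le.2 ⟨by linarith [(hT01 x).1], (hT01 x).2⟩) hTsym
  have h2 := aux_key m μ hrefl hint (fun x => 1 - T x) (by fun_prop)
    (fun x => by rw [abs_le]
                 exact ⟨by linarith [(hT01 x).2], by linarith [(hT01 x).1]⟩)
    (fun x => by simp [hTsym x])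
  constructor
  · intro h; rw [h1]; field_simp
  · intro h; rw [h2]; field_simp
end

section
/- Let f : ℝ → ℝ be Borel measurable, nonnegative, even, and nondecreasing on [0,∞); let a ∈ ℝ and σ > 0, and let γ be the Gaussian measure on ℝ with mean 0 and variance σ² (Mathlib's gaussianReal). Define h(x) = ∫ f(a·x + w) dγ(w) (as a Lebesgue integral, possibly infinite). Then h is even and nondecreasing on [0,∞): h(−x) = h(x) for all x, and h(x) ≤ h(y) whenever 0 ≤ x ≤ y. -/
open MeasureTheory ProbabilityTheory Set
open scoped ENNReal NNReal

lemma enn_rearrange {a b c d : ℝ≥0∞} (hab : a ≤ b) (hcd : c ≤ d) :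
    a * d + b * c ≤ a * c + b * d := by
  obtain ⟨e, rfl⟩ := exists_add_of_le hab
  obtain ⟨g, rfl⟩ := exists_add_of_le hcd
  have : a * c + (a + e) * (c + g) = (a * (c + g) + (a + e) * c) + e * g := by ring
  rw [this]
  exact le_self_add

lemma gpdf_mono {v : ℝ≥0} (hv : v ≠ 0) {x y : ℝ} (h : |x| ≤ |y|) :
    gaussianPDF 0 v y ≤ gaussianPDF 0 v x := by
  have hv' : (0:ℝ) < v := lt_of_le_of_ne v.coe_nonneg (by exact_mod_cast hv.symm)
  apply ENNReal.ofReal_le_ofReal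
  unfold ProbabilityTheory.gaussianPDFReal
  simp only [sub_zero]
  apply mul_le_mul_of_nonneg_left _ (by positivity)
  apply Real.exp_le_exp.2
  rw [neg_div, neg_div, neg_le_neg_iff]
  apply div_le_div_of_nonneg_right ?_ (by positivity)
  rw [← sq_abs x, ← sq_abs y]
  exact pow_le_pow_left₀ (abs_nonneg _) h 2

lemma gpdf_even {v : ℝ≥0} (x : ℝ) : gaussianPDF 0 v (-x) = gaussianPDF 0 v x := by
  unfold ProbabilityTheory.gaussianPDF ProbabilityTheory.gaussianPDFReal
  simp [neg_sq]

/-- Lemma: Gaussian smoothing preserves "symmetric and non-decreasing in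
`|x|`". Let `f : ℝ → ℝ` be Borel measurable, nonnegative, even and nondecreasing on `[0,∞)`,
let `a ∈ ℝ`, `σ > 0`, and let `γ` be the Gaussian measure with mean `0` and variance `σ²`.
Then `h(x) = ∫ f(a x + w) dγ(w)` (a Lebesgue integral, possibly infinite) is even and
nondecreasing on `[0,∞)`. -/
theorem stmt11 (f : ℝ → ℝ) (hf : Measurable f) (hf0 : ∀ x, 0 ≤ f x)
    (heven : ∀ x : ℝ, f (-x) = f x)
    (hmono : ∀ x y : ℝ, 0 ≤ x → x < y → f x ≤ f y)
    (a σ : ℝ) (hσ : 0 < σ) :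
    (∀ x : ℝ,
        ∫⁻ w, ENNReal.ofReal (f (a * (-x) + w)) ∂(gaussianReal 0 ⟨σ ^ 2, sq_nonneg σ⟩)
          = ∫⁻ w, ENNReal.ofReal (f (a * x + w)) ∂(gaussianReal 0 ⟨σ ^ 2, sq_nonneg σ⟩)) ∧
    (∀ x y : ℝ, 0 ≤ x → x ≤ y →
        ∫⁻ w, ENNReal.ofReal (f (a * x + w)) ∂(gaussianReal 0 ⟨σ ^ 2, sq_nonneg σ⟩)
          ≤ ∫⁻ w, ENNReal.ofReal (f (a * y + w)) ∂(gaussianReal 0 ⟨σ ^ 2, sq_nonneg σ⟩)) := by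
  set v : ℝ≥0 := ⟨σ ^ 2, sq_nonneg σ⟩ with hvdef
  have hv : v ≠ 0 := fun h => (pow_ne_zero 2 hσ.ne') (congrArg Subtype.val h)
  have hPmeas : Measurable (gaussianPDF 0 v) := measurable_gaussianPDF 0 v
  set F : ℝ → ℝ≥0∞ := fun u => ENNReal.ofReal (f u) with hFdef
  have hFmeas : Measurable F := hf.ennreal_ofReal
  -- f is monotone in |x|
  have hfabs : ∀ x : ℝ, f x = f |x| := by
    intro x
    rcases abs_choice x with h | h
    · rw [h]
    · rw [h, heven]
  have hFmono : ∀ x y : ℝ, |x| ≤ |y| → F x ≤ F y := by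
    intro x y h
    apply ENNReal.ofReal_le_ofReal
    rw [hfabs x, hfabs y]
    rcases h.lt_or_eq with h | h
    · exact hmono _ _ (abs_nonneg _) h
    · rw [h]
  have hGmeas : ∀ c : ℝ, Measurable (fun u => F u * gaussianPDF 0 v (u - c)) := fun c =>
    hFmeas.mul (hPmeas.comp (measurable_id.sub measurable_const))
  -- key rewriting of the smoothed integral
  have key : ∀ c : ℝ,
      ∫⁻ w, F (c + w) ∂(gaussianReal 0 v) = ∫⁻ u, F u * gaussianPDF 0 v (u - c) := by
    intro c
    have hFc : Measurable (fun w : ℝ => F (c + w)) :=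
      hFmeas.comp (measurable_const.add measurable_id)
    rw [gaussianReal_of_var_ne_zero 0 hv,
      lintegral_withDensity_eq_lintegral_mul volume hPmeas hFc]
    have heq : ∀ w : ℝ, ((gaussianPDF 0 v) * fun w => F (c + w)) w
        = (fun u => F u * gaussianPDF 0 v (u - c)) (w + c) := by
      intro w
      simp only [Pi.mul_apply, add_sub_cancel_right, add_comm c w, mul_comm]
    simp only [heq]
    exact lintegral_add_right_eq_self (fun u => F u * gaussianPDF 0 v (u - c)) c
  -- evenness in c
  have hsym : ∀ c : ℝ,
      ∫⁻ w, F (-c + w) ∂(gaussianReal 0 v) = ∫⁻ w, F (c + w) ∂(gaussianReal 0 v) := by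
    intro c
    rw [key, key]
    have hmp : MeasurePreserving (fun u : ℝ => -u) volume volume :=
      Measure.measurePreserving_neg volume
    have hcomp := hmp.lintegral_comp (f := fun u => F u * gaussianPDF 0 v (u - c)) (hGmeas c)
    rw [← hcomp]
    congr 1
    funext u
    show F u * gaussianPDF 0 v (u - -c) = F (-u) * gaussianPDF 0 v (-u - c)
    have h1 : F (-u) = F u := by
      simp only [hFdef]; rw [heven]
    have h2 : -u - c = -(u - -c) := by ring
    rw [h1, h2, gpdf_even]
  -- monotonicity in c ≥ 0
  have hmonoI : ∀ s t : ℝ, 0 ≤ s → s ≤ t →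
      (∫⁻ u, F u * gaussianPDF 0 v (u - s)) ≤ ∫⁻ u, F u * gaussianPDF 0 v (u - t) := by
    intro s t hs hst
    set m : ℝ := (s + t) / 2 with hm
    have hsm : s ≤ m := by simp only [hm]; linarith
    have hmt : m ≤ t := by simp only [hm]; linarith
    have hm0 : 0 ≤ m := hs.trans hsm
    have hrefl : MeasurePreserving (fun u : ℝ => 2 * m - u) volume volume :=
      Measure.measurePreserving_sub_left volume (2 * m)
    -- split the integral
    have split : ∀ c : ℝ, (∫⁻ u, F u * gaussianPDF 0 v (u - c))
        = ∫⁻ u, ((Ici m).indicator (fun u => F u * gaussianPDF 0 v (u - c)) u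
            + (Ioi m).indicator
                (fun u => F (2 * m - u) * gaussianPDF 0 v (2 * m - u - c)) u) := by
      intro c
      rw [lintegral_add_left (((hGmeas c).indicator measurableSet_Ici))]
      rw [lintegral_indicator measurableSet_Ici _]
      have h2 : (∫⁻ u, (Ioi m).indicator
            (fun u => F (2 * m - u) * gaussianPDF 0 v (2 * m - u - c)) u)
          = ∫⁻ u in Iio m, F u * gaussianPDF 0 v (u - c) := by
        have hcomp := hrefl.lintegral_comp
          (f := (Iio m).indicator (fun u => F u * gaussianPDF 0 v (u - c)))
          ((hGmeas c).indicator measurableSet_Iio)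
        rw [← lintegral_indicator measurableSet_Iio _, ← hcomp]
        congr 1
        funext u
        show (Ioi m).indicator (fun u => F (2 * m - u) * gaussianPDF 0 v (2 * m - u - c)) u
          = (Iio m).indicator (fun u => F u * gaussianPDF 0 v (u - c)) (2 * m - u)
        simp only [indicator_apply, mem_Ioi, mem_Iio]
        by_cases hu : m < u
        · rw [if_pos hu, if_pos (by linarith : 2 * m - u < m)]
        · rw [if_neg hu, if_neg (by push_neg at hu ⊢; linarith : ¬(2 * m - u < m))]
      rw [h2, ← lintegral_add_compl (fun u => F u * gaussianPDF 0 v (u - c))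
        measurableSet_Ici, compl_Ici]
    rw [split s, split t]
    refine lintegral_mono fun u => ?_
    simp only [indicator_apply, mem_Ici, mem_Ioi]
    rcases lt_trichotomy u m with hu | hu | hu
    · rw [if_neg (not_le.2 hu), if_neg (not_lt.2 hu.le),
        if_neg (not_le.2 hu), if_neg (not_lt.2 hu.le)]
    · rw [if_pos hu.ge, if_pos hu.ge, if_neg (not_lt.2 hu.le), if_neg (not_lt.2 hu.le),
        add_zero, add_zero]
      have hPe : gaussianPDF 0 v (u - s) = gaussianPDF 0 v (u - t) := by
        have h1 : u - t = -(u - s) := by rw [hu, hm]; ring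
        rw [h1, gpdf_even]
      rw [hPe]
    · rw [if_pos hu, if_pos hu, if_pos hu.le, if_pos hu.le]
      have e1 : 2 * m - u - s = -(u - t) := by ring
      have e2 : 2 * m - u - t = -(u - s) := by ring
      rw [e1, e2, gpdf_even, gpdf_even]
      have hmu : m ≤ u := hu.le
      have hF : F (2 * m - u) ≤ F u := by
        apply hFmono
        rw [abs_of_nonneg (by linarith : (0:ℝ) ≤ u), abs_le]
        constructor <;> linarith
      have hPle : gaussianPDF 0 v (u - s) ≤ gaussianPDF 0 v (u - t) := by
        apply gpdf_mono hv
        rw [abs_of_nonneg (by linarith : (0:ℝ) ≤ u - s), abs_le]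
        constructor <;> [linarith; linarith]
      calc F u * gaussianPDF 0 v (u - s) + F (2 * m - u) * gaussianPDF 0 v (u - t)
          = F (2 * m - u) * gaussianPDF 0 v (u - t)
              + F u * gaussianPDF 0 v (u - s) := by rw [add_comm]
        _ ≤ F (2 * m - u) * gaussianPDF 0 v (u - s)
              + F u * gaussianPDF 0 v (u - t) := enn_rearrange hF hPle
        _ = F u * gaussianPDF 0 v (u - t)
              + F (2 * m - u) * gaussianPDF 0 v (u - s) := by rw [add_comm]
  constructor
  · intro x
    have hax : a * (-x) = -(a * x) := by ring
    rw [hax]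
    exact hsym (a * x)
  · intro x y hx hxy
    have habs : ∀ z : ℝ, (∫⁻ w, F (a * z + w) ∂(gaussianReal 0 v))
        = ∫⁻ w, F (|a| * z + w) ∂(gaussianReal 0 v) := by
      intro z
      rcases abs_choice a with h | h
      · rw [h]
      · rw [h]
        have : -a * z = -(a * z) := by ring
        rw [this, hsym]
    calc (∫⁻ w, F (a * x + w) ∂(gaussianReal 0 v))
        = ∫⁻ w, F (|a| * x + w) ∂(gaussianReal 0 v) := habs x
      _ = ∫⁻ u, F u * gaussianPDF 0 v (u - |a| * x) := key _
      _ ≤ ∫⁻ u, F u * gaussianPDF 0 v (u - |a| * y) :=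
          hmonoI _ _ (mul_nonneg (abs_nonneg a) hx)
            (mul_le_mul_of_nonneg_left hxy (abs_nonneg a))
      _ = ∫⁻ w, F (|a| * y + w) ∂(gaussianReal 0 v) := (key _).symm
      _ = ∫⁻ w, F (a * y + w) ∂(gaussianReal 0 v) := (habs y).symm
end

section
/- Let σ > 0 and 0 ≤ b < c be real numbers, and define g : ℝ → ℝ by g(w) = exp(−(w−c)²/(2σ²)) + exp(−(w+c)²/(2σ²)) − exp(−(w−b)²/(2σ²)) − exp(−(w+b)²/(2σ²)). Then there exists w̄ > 0 such that g(w) < 0 for all w ∈ (0, w̄) and g(w) ≥ 0 for all w ≥ w̄; that is, on (0,∞) the difference of symmetrized Gaussian kernels changes sign exactly once, from negative to nonnegative. -/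
/-- single-crossing property of symmetrized Gaussian kernel differences.
Let `σ > 0` and `0 ≤ b < c`, and define
`g(w) = e^{-(w-c)²/(2σ²)} + e^{-(w+c)²/(2σ²)} - e^{-(w-b)²/(2σ²)} - e^{-(w+b)²/(2σ²)}`.
Then there exists `w̄ > 0` such that `g(w) < 0` on `(0, w̄)` and `g(w) ≥ 0` for `w ≥ w̄`. -/
theorem stmt12 (σ b c : ℝ) (hσ : 0 < σ) (hb : 0 ≤ b) (hbc : b < c)
    (g : ℝ → ℝ)
    (hg : ∀ w : ℝ, g w =
      Real.exp (-(w - c) ^ 2 / (2 * σ ^ 2)) + Real.exp (-(w + c) ^ 2 / (2 * σ ^ 2))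
        - Real.exp (-(w - b) ^ 2 / (2 * σ ^ 2)) - Real.exp (-(w + b) ^ 2 / (2 * σ ^ 2))) :
    ∃ wbar : ℝ, 0 < wbar ∧
      (∀ w : ℝ, 0 < w → w < wbar → g w < 0) ∧
      (∀ w : ℝ, wbar ≤ w → 0 ≤ g w) := by
  have hs2 : (0:ℝ) < σ ^ 2 := by positivity
  set α : ℝ := c / σ ^ 2 with hα
  set β : ℝ := b / σ ^ 2 with hβ
  have hβ0 : 0 ≤ β := by positivity
  have hαβ : β < α := by apply div_lt_div_of_pos_right hbc hs2
  have hα0 : 0 < α := lt_of_le_of_lt hβ0 hαβ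
  set F : ℝ → ℝ := fun w =>
    Real.log (Real.cosh (α * w)) - Real.log (Real.cosh (β * w)) + (b ^ 2 - c ^ 2) / (2 * σ ^ 2)
    with hF
  -- pairing identity
  have key : ∀ a w : ℝ, Real.exp (-(w - a) ^ 2 / (2 * σ ^ 2)) + Real.exp (-(w + a) ^ 2 / (2 * σ ^ 2))
      = 2 * Real.exp (-(w ^ 2 + a ^ 2) / (2 * σ ^ 2)) * Real.cosh (a / σ ^ 2 * w) := by
    intro a w
    rw [Real.cosh_eq]
    have h1 : -(w - a) ^ 2 / (2 * σ ^ 2) = -(w ^ 2 + a ^ 2) / (2 * σ ^ 2) + a / σ ^ 2 * w := by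
      field_simp; ring
    have h2 : -(w + a) ^ 2 / (2 * σ ^ 2) = -(w ^ 2 + a ^ 2) / (2 * σ ^ 2) + -(a / σ ^ 2 * w) := by
      field_simp; ring
    rw [h1, h2, Real.exp_add, Real.exp_add]; ring
  -- factorization
  have hfac : ∀ w : ℝ, g w
      = (2 * Real.exp (-(w ^ 2 + b ^ 2) / (2 * σ ^ 2)) * Real.cosh (β * w)) * (Real.exp (F w) - 1) := by
    intro w
    have hexpF : Real.exp (F w)
        = Real.cosh (α * w) / Real.cosh (β * w) * Real.exp ((b ^ 2 - c ^ 2) / (2 * σ ^ 2)) := by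
      rw [hF]
      rw [Real.exp_add, Real.exp_sub, Real.exp_log (Real.cosh_pos _),
        Real.exp_log (Real.cosh_pos _)]
    have hEE : Real.exp (-(w ^ 2 + b ^ 2) / (2 * σ ^ 2)) * Real.exp ((b ^ 2 - c ^ 2) / (2 * σ ^ 2))
        = Real.exp (-(w ^ 2 + c ^ 2) / (2 * σ ^ 2)) := by
      rw [← Real.exp_add]; congr 1; field_simp; ring
    have hcb := (Real.cosh_pos (β * w)).ne'
    have e1 := key c w
    have e2 := key b w
    rw [hg w, hexpF]
    have : Real.exp (-(w - c) ^ 2 / (2 * σ ^ 2)) + Real.exp (-(w + c) ^ 2 / (2 * σ ^ 2))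
        - Real.exp (-(w - b) ^ 2 / (2 * σ ^ 2)) - Real.exp (-(w + b) ^ 2 / (2 * σ ^ 2))
        = 2 * Real.exp (-(w ^ 2 + c ^ 2) / (2 * σ ^ 2)) * Real.cosh (α * w)
          - 2 * Real.exp (-(w ^ 2 + b ^ 2) / (2 * σ ^ 2)) * Real.cosh (β * w) := by
      rw [hα, hβ]; linarith [e1, e2]
    rw [this]
    have hq : Real.cosh (β * w) * (Real.cosh (α * w) / Real.cosh (β * w)) = Real.cosh (α * w) := by
      field_simp
    linear_combination (-2 * Real.exp ((b ^ 2 - c ^ 2) / (2 * σ ^ 2)) *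
        Real.exp (-(w ^ 2 + b ^ 2) / (2 * σ ^ 2))) * hq + (-2 * Real.cosh (α * w)) * hEE
  -- derivative of F
  have hF' : ∀ w : ℝ, HasDerivAt F
      (α * (Real.sinh (α * w) / Real.cosh (α * w)) - β * (Real.sinh (β * w) / Real.cosh (β * w))) w := by
    intro w
    have d1 : HasDerivAt (fun w : ℝ => α * w) α w := by
      simpa using (hasDerivAt_id w).const_mul α
    have d2 : HasDerivAt (fun w : ℝ => β * w) β w := by
      simpa using (hasDerivAt_id w).const_mul β
    have c1 : HasDerivAt (fun w : ℝ => Real.cosh (α * w)) (Real.sinh (α * w) * α) w :=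
      (Real.hasDerivAt_cosh (α * w)).comp w d1
    have c2 : HasDerivAt (fun w : ℝ => Real.cosh (β * w)) (Real.sinh (β * w) * β) w :=
      (Real.hasDerivAt_cosh (β * w)).comp w d2
    have l1 := c1.log (Real.cosh_pos (α * w)).ne'
    have l2 := c2.log (Real.cosh_pos (β * w)).ne'
    have := (l1.sub l2).add_const ((b ^ 2 - c ^ 2) / (2 * σ ^ 2))
    refine this.congr_deriv ?_
    ring
  have hFcont : Continuous F := by
    fun_prop (disch := intro x; exact (Real.cosh_pos _).ne')
  -- strict monotone
  have tanh_lt : ∀ x y : ℝ, x < y →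
      Real.sinh x / Real.cosh x < Real.sinh y / Real.cosh y := by
    intro x y hxy
    rw [div_lt_div_iff₀ (Real.cosh_pos x) (Real.cosh_pos y)]
    have : 0 < Real.sinh (y - x) := Real.sinh_pos_iff.mpr (by linarith)
    rw [Real.sinh_sub] at this
    linarith
  have hmono : StrictMonoOn F (Set.Ici (0:ℝ)) := by
    apply strictMonoOn_of_deriv_pos (convex_Ici 0) hFcont.continuousOn
    intro w hw
    rw [interior_Ici, Set.mem_Ioi] at hw
    rw [(hF' w).deriv]
    have h1 : β * w < α * w := by exact mul_lt_mul_of_pos_right hαβ hw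
    have h2 : 0 ≤ β * w := by positivity
    have ht : Real.sinh (β * w) / Real.cosh (β * w) < Real.sinh (α * w) / Real.cosh (α * w) :=
      tanh_lt _ _ h1
    have htn : 0 ≤ Real.sinh (β * w) / Real.cosh (β * w) :=
      div_nonneg (Real.sinh_nonneg_iff.mpr h2) (Real.cosh_pos _).le
    nlinarith
  -- F 0 < 0
  have hF0 : F 0 < 0 := by
    simp only [hF, mul_zero, Real.cosh_zero, Real.log_one, sub_zero, zero_add, sub_self]
    have : b ^ 2 < c ^ 2 := by nlinarith
    apply div_neg_of_neg_of_pos <;> nlinarith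
  -- choose W big
  set W : ℝ := (Real.log 2 + (c ^ 2 - b ^ 2) / (2 * σ ^ 2)) / (α - β) + 1 with hW
  have hlog2 : (0:ℝ) ≤ Real.log 2 := Real.log_nonneg (by norm_num)
  have hcb2 : (0:ℝ) ≤ (c ^ 2 - b ^ 2) / (2 * σ ^ 2) := by
    apply div_nonneg (by nlinarith) (by positivity)
  have hWpos : 0 < W := by
    rw [hW]
    have : 0 ≤ (Real.log 2 + (c ^ 2 - b ^ 2) / (2 * σ ^ 2)) / (α - β) :=
      div_nonneg (by linarith) (by linarith)
    linarith
  have hFW : 0 ≤ F W := by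
    have hαW : 0 ≤ α * W := by positivity
    have hβW : 0 ≤ β * W := mul_nonneg hβ0 hWpos.le
    have b1 : α * W - Real.log 2 ≤ Real.log (Real.cosh (α * W)) := by
      have : Real.exp (α * W) / 2 ≤ Real.cosh (α * W) := by
        rw [Real.cosh_eq]
        have := (Real.exp_pos (-(α * W))).le
        linarith
      calc α * W - Real.log 2 = Real.log (Real.exp (α * W) / 2) := by
            rw [Real.log_div (Real.exp_pos _).ne' (by norm_num), Real.log_exp]
        _ ≤ _ := Real.log_le_log (by positivity) this
    have b2 : Real.log (Real.cosh (β * W)) ≤ β * W := by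
      rw [Real.log_le_iff_le_exp (Real.cosh_pos _)]
      rw [Real.cosh_eq]
      have : Real.exp (-(β * W)) ≤ Real.exp (β * W) := Real.exp_le_exp.mpr (by linarith)
      linarith
    have hWval : Real.log 2 + (c ^ 2 - b ^ 2) / (2 * σ ^ 2) ≤ (α - β) * W := by
      rw [hW]
      have h := div_nonneg (add_nonneg hlog2 hcb2) (by linarith : (0:ℝ) ≤ α - β)
      rw [mul_add, mul_one, mul_div_cancel₀ _ (by linarith : α - β ≠ 0)]
      linarith
    have : (b ^ 2 - c ^ 2) / (2 * σ ^ 2) = -((c ^ 2 - b ^ 2) / (2 * σ ^ 2)) := by ring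
    simp only [hF]
    rw [this]
    have hexpand : α * W - β * W = (α - β) * W := by ring
    clear_value α β W F
    linarith [b1, b2, hWval, hexpand]
  -- IVT
  obtain ⟨wbar, hwmem, hwzero⟩ : ∃ x ∈ Set.Icc (0:ℝ) W, F x = 0 := by
    have := intermediate_value_Icc hWpos.le hFcont.continuousOn
    exact this ⟨hF0.le, hFW⟩
  have hwpos : 0 < wbar := by
    rcases hwmem.1.lt_or_eq with h | h
    · exact h
    · exfalso; rw [← h] at hwzero; linarith
  refine ⟨wbar, hwpos, ?_, ?_⟩
  · intro w hw hlt
    have hFw : F w < F wbar := hmono (Set.mem_Ici.mpr hw.le) (Set.mem_Ici.mpr hwpos.le) hlt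
    rw [hwzero] at hFw
    rw [hfac w]
    have hC : 0 < 2 * Real.exp (-(w ^ 2 + b ^ 2) / (2 * σ ^ 2)) * Real.cosh (β * w) := by
      positivity
    have : Real.exp (F w) < 1 := Real.exp_lt_one_iff.mpr hFw
    nlinarith
  · intro w hw
    have hFw : F wbar ≤ F w :=
      hmono.monotoneOn (Set.mem_Ici.mpr hwpos.le) (Set.mem_Ici.mpr (by linarith)) hw
    rw [hwzero] at hFw
    rw [hfac w]
    have hC : 0 ≤ 2 * Real.exp (-(w ^ 2 + b ^ 2) / (2 * σ ^ 2)) * Real.cosh (β * w) := by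
      positivity
    have : 1 ≤ Real.exp (F w) := Real.one_le_exp hFw
    nlinarith
end
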